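/- arXiv:2106.05477 — 15 statements merged into one kernel-verified Lean document; each statement's English description precedes it below -/
import Mathlib

section
/- Let H be an n×n matrix with all entries in {+1, -1}. Then det(H) is divisible by 2^(n-1). -/
theorem stmt0 (n : ℕ) (hn : 1 ≤ n) (H : Matrix (Fin n) (Fin n) ℤ)
    (hH : ∀ i j, H i j = 1 ∨ H i j = -1) :
    (2 : ℤ) ^ (n - 1) ∣ H.det := by
  haveI : NeZero n := ⟨by omega⟩
  set N : Matrix (Fin n) (Fin n) ℤ :=
    fun i j => if i = 0 then H 0 j else (H i j - H 0 j) / 2 with hN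
  set D : Matrix (Fin n) (Fin n) ℤ :=
    Matrix.diagonal (fun i => if i = 0 then 1 else 2) with hD
  have hdvd : ∀ i j, (2 : ℤ) ∣ (H i j - H 0 j) := by
    intro i j
    rcases hH i j with h1 | h1 <;> rcases hH 0 j with h2 | h2 <;>
      simp [h1, h2]
  have hdet : H.det = (D * N).det := by
    apply Matrix.det_eq_of_forall_row_eq_smul_add_const
      (fun i => if i = 0 then 0 else 1) 0 (by simp)
    intro i j
    by_cases hi : i = 0
    · subst hi
      simp only [Matrix.mul_apply]; simp only [hN, hD, Matrix.diagonal_apply]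
      rw [Finset.sum_eq_single 0]
      · simp
      · intro b _ hb
        simp only [if_neg hb]
        rw [if_neg (fun h => hb h.symm)]
        exact zero_mul _
      · simp
    · have := Int.ediv_mul_cancel (hdvd i j)
      simp only [Matrix.mul_apply]; simp only [hD, hN]
      rw [Finset.sum_eq_single i]
      · simp [Matrix.diagonal_apply, hi]
        rw [Finset.sum_eq_single 0]
        · simp
          have := Int.mul_ediv_cancel' (hdvd i j)
          ring_nf
          ring_nf at this
          omega
        · intro b _ hb; simp [Matrix.diagonal_apply, hb]
          intro h; exact absurd h.symm hb
        · simp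
      · intro b _ hb; simp [Matrix.diagonal_apply, Ne.symm hb]
      · simp
  rw [hdet, Matrix.det_mul, Matrix.det_diagonal]
  apply Dvd.dvd.mul_right
  have hp : ∏ i : Fin n, (if i = 0 then (1:ℤ) else 2)
      = ∏ i ∈ Finset.univ.erase (0 : Fin n), (if i = 0 then (1:ℤ) else 2) := by
    rw [← Finset.prod_erase_mul _ _ (Finset.mem_univ (0 : Fin n))]
    simp
  rw [hp, Finset.prod_ite_of_false]
  · rw [Finset.prod_const, Finset.card_erase_of_mem (Finset.mem_univ _)]
    simp
  · intro i hi; exact (Finset.mem_erase.mp hi).1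
end

section
/- Let H be an n×n symmetric matrix with all entries in {+1, -1}. Then the sum over i of det(H[i]), where H[i] denotes the principal submatrix obtained by deleting row and column i, is divisible by 2^(n-1). -/
open Matrix Finset

/-- Any ±1 matrix of order m+1 has determinant divisible by 2^m. -/
lemma pm_det_dvd (m : ℕ) (A : Matrix (Fin (m + 1)) (Fin (m + 1)) ℤ)
    (hA : ∀ i j, A i j = 1 ∨ A i j = -1) : (2 : ℤ) ^ m ∣ A.det := by
  classical
  set E : Matrix (Fin (m + 1)) (Fin (m + 1)) ℤ :=
    Matrix.of (fun i j => if j = i then 1 else if j = 0 ∧ i ≠ 0 then -1 else 0) with hE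
  have hEdet : E.det = 1 := by
    rw [Matrix.det_of_lowerTriangular E]
    · simp [hE]
    · intro i j hij
      simp only [hE, Matrix.of_apply]
      have h1 : ¬ j = i := by
        intro h; subst h; exact lt_irrefl _ hij
      have h2 : ¬ (j = 0 ∧ i ≠ 0) := by
        rintro ⟨rfl, hi⟩
        exact Fin.not_lt_zero i (OrderDual.toDual_lt_toDual.mp hij)
      simp [h1, h2]
  set v : Fin (m + 1) → ℤ := fun i => if i = 0 then 1 else 2 with hv
  set D : Matrix (Fin (m + 1)) (Fin (m + 1)) ℤ :=
    Matrix.of (fun i j => if i = 0 then A 0 j else (A i j - A 0 j) / 2) with hD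
  have hEA : E * A = Matrix.of (fun i j => v i * D i j) := by
    ext i j
    simp only [Matrix.mul_apply, hE, Matrix.of_apply]
    rcases eq_or_ne i 0 with rfl | hi
    · rw [Finset.sum_eq_single 0]
      · simp [hv, hD]
      · intro b _ hb
        simp [hb.symm, hb]
      · simp
    · rw [Finset.sum_eq_add_of_mem i 0 (Finset.mem_univ _) (Finset.mem_univ _) hi ?_]
      · have : (A i j - A 0 j) = 2 * ((A i j - A 0 j) / 2) := by
          rcases hA i j with h1 | h1 <;> rcases hA 0 j with h2 | h2 <;>
            rw [h1, h2] <;> norm_num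
        have h0i : ¬ (0 : Fin (m+1)) = i := Ne.symm hi
        simp only [hv, hD, Matrix.of_apply, if_pos trivial, if_neg h0i, if_true,
          if_neg hi, true_and]
        rw [if_pos hi]
        linarith [this]
      · intro c _ hc
        simp [hc.1, hc.2]
  have : A.det = (∏ i, v i) * D.det := by
    have := congrArg Matrix.det hEA
    rwa [Matrix.det_mul, hEdet, one_mul, Matrix.det_mul_column] at this
  rw [this]
  have hprod : (∏ i, v i) = 2 ^ m := by
    rw [hv, Finset.prod_ite, Finset.prod_const, Finset.prod_const, one_pow, one_mul,
      Finset.filter_not, Finset.filter_eq', if_pos (Finset.mem_univ _)]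
    congr 1
    rw [Finset.card_sdiff_of_subset (by simp)]
    simp
  rw [hprod]
  exact Dvd.intro _ rfl

lemma sum_diag' {α M : Type*} [DecidableEq α] [AddCommMonoid M] (s : Finset α)
    (f : α × α → M) : ∑ p ∈ s.diag, f p = ∑ a ∈ s, f (a, a) := by
  have h : s.diag = s.image (fun a => (a, a)) := by
    ext ⟨a, b⟩
    simp only [Finset.mem_diag, Finset.mem_image, Prod.mk.injEq]
    constructor
    · rintro ⟨ha, rfl⟩; exact ⟨a, ha, rfl, rfl⟩
    · rintro ⟨c, hc, rfl, rfl⟩; exact ⟨hc, rfl⟩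
  rw [h, Finset.sum_image (fun a _ b _ hab => (Prod.mk.inj hab).1)]

lemma adj_minor (N : ℕ) (A : Matrix (Fin (N + 1)) (Fin (N + 1)) ℤ) (i j : Fin (N + 1)) :
    A.adjugate i j = (-1) ^ ((i : ℕ) + (j : ℕ)) *
      (A.submatrix j.succAbove i.succAbove).det := by
  rw [Matrix.adjugate_apply, Matrix.det_succ_row _ j]
  rw [Finset.sum_eq_single i]
  · have h1 : (A.updateRow j (Pi.single i 1)) j i = 1 := by
      rw [Matrix.updateRow_self]; simp
    have h2 : (A.updateRow j (Pi.single i 1)).submatrix j.succAbove i.succAbove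
        = A.submatrix j.succAbove i.succAbove := by
      ext a b
      simp [Matrix.submatrix_apply, Matrix.updateRow_ne (Fin.succAbove_ne j a)]
    rw [h1, h2, mul_one, add_comm (j : ℕ) (i : ℕ)]
  · intro b _ hb
    simp [Matrix.updateRow_self, Pi.single_apply, hb]
  · intro h; exact absurd (Finset.mem_univ i) h

theorem stmt1 (n : ℕ) (H : Matrix (Fin (n + 1)) (Fin (n + 1)) ℤ)
    (hsymm : H.IsSymm)
    (hH : ∀ i j, H i j = 1 ∨ H i j = -1) :
    (2 : ℤ) ^ n ∣ ∑ i : Fin (n + 1), (H.submatrix i.succAbove i.succAbove).det := by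
  classical
  cases n with
  | zero => simpa using one_dvd _
  | succ m =>
  set adj := H.adjugate with hadj
  have hadj_diag : ∀ i, adj i i = (H.submatrix i.succAbove i.succAbove).det := by
    intro i
    rw [hadj, adj_minor,
      show ((-1 : ℤ)) ^ ((i : ℕ) + (i : ℕ)) = 1 by
        rw [← two_mul, pow_mul]; norm_num,
      one_mul]
  have hdvd_entry : ∀ i j, (2 : ℤ) ^ m ∣ adj i j := by
    intro i j
    rw [hadj, adj_minor]
    exact Dvd.dvd.mul_left
      (pm_det_dvd m _ (fun a b => hH _ _)) _
  have hsym : ∀ i j, adj i j = adj j i := by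
    intro i j
    have h := Matrix.adjugate_transpose H
    rw [hsymm.eq] at h
    simpa [Matrix.transpose_apply, hadj] using congrFun (congrFun h j) i
  have hrow : ∀ i, (2 : ℤ) ^ (m + 1) ∣ ∑ j, adj i j := by
    intro i
    set k : Fin (m + 2) := if i = 0 then 1 else 0 with hk
    have hik : i ≠ k := by
      rcases eq_or_ne i 0 with rfl | hi
      · simp [hk]
      · simp [hk, hi]
    have h1 : ∑ j, adj i j * H j k = 0 := by
      have h := Matrix.adjugate_mul H
      have h2 := congrFun (congrFun h i) k
      simpa [Matrix.mul_apply, Matrix.one_apply, hik, hadj] using h2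
    have h2 : ∀ j ∈ Finset.univ, (2 : ℤ) ^ (m + 1) ∣ adj i j * (H j k - 1) := by
      intro j _
      rw [pow_succ]
      exact mul_dvd_mul (hdvd_entry i j) (by rcases hH j k with h | h <;> simp [h])
    have h3 : ∑ j, adj i j = ∑ j, adj i j * H j k - ∑ j, adj i j * (H j k - 1) := by
      rw [← Finset.sum_sub_distrib]
      exact Finset.sum_congr rfl fun j _ => by ring
    rw [h3, h1, zero_sub]
    exact (Finset.dvd_sum h2).neg_right
  -- switch to ZMod (2 ^ (m + 1))
  rw [Finset.sum_congr rfl fun i _ => (hadj_diag i).symm]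
  have hcast : ((2 : ℤ) ^ (m + 1)) = ((2 ^ (m + 1) : ℕ) : ℤ) := by push_cast; ring
  rw [hcast, ← ZMod.intCast_zmod_eq_zero_iff_dvd]
  push_cast
  set R := ZMod (2 ^ (m + 1))
  set g : Fin (m + 2) → Fin (m + 2) → R := fun i j => ((adj i j : ℤ) : R) with hg
  have hrowR : ∀ i, ∑ j, g i j = 0 := by
    intro i
    have := hrow i
    rw [hcast, ← ZMod.intCast_zmod_eq_zero_iff_dvd] at this
    rw [hg]
    push_cast at this ⊢
    exact this
  have hoff : ∑ p ∈ Finset.univ.offDiag, g p.1 p.2 = 0 := by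
    apply Finset.sum_involution (fun p _ => p.swap)
    · intro p hp
      have h2 : (2 : ℤ) ^ (m + 1) ∣ adj p.1 p.2 + adj p.2 p.1 := by
        rw [← hsym p.1 p.2, ← two_mul, pow_succ, mul_comm ((2:ℤ)^m) 2]
        exact mul_dvd_mul_left 2 (hdvd_entry p.1 p.2)
      rw [hcast, ← ZMod.intCast_zmod_eq_zero_iff_dvd] at h2
      rw [hg]
      push_cast at h2 ⊢
      simpa using h2
    · intro p hp _
      have hne := (Finset.mem_offDiag.mp hp).2.2
      intro h
      exact hne (congrArg Prod.snd h)
    · intro p hp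
      exact Prod.swap_swap p
    · intro p hp
      rcases Finset.mem_offDiag.mp hp with ⟨_, _, hne⟩
      exact Finset.mem_offDiag.mpr ⟨Finset.mem_univ _, Finset.mem_univ _,
        fun h => hne h.symm⟩
  have hall : ∑ p ∈ (Finset.univ ×ˢ Finset.univ : Finset (Fin (m+2) × Fin (m+2))),
      g p.1 p.2 = 0 := by
    rw [Finset.sum_product]
    exact Finset.sum_eq_zero fun i _ => hrowR i
  have hsplit : ∑ p ∈ (Finset.univ : Finset (Fin (m+2))).diag, g p.1 p.2
      + ∑ p ∈ Finset.univ.offDiag, g p.1 p.2 = 0 := by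
    rw [← Finset.sum_union (Finset.disjoint_diag_offDiag _), Finset.diag_union_offDiag]
    exact hall
  rw [hoff, add_zero, sum_diag'] at hsplit
  simpa [hg] using hsplit
end

section
/- Let H be an n×n symmetric {±1}-matrix and write its characteristic polynomial as χ_H(x) = Σ_{i=0}^n a_i x^{n-i}. Then for each k ∈ {1,…,n}, the coefficient a_k is divisible by 2^(k-1). -/
open Polynomial Matrix Finset

/-- Characteristic polynomial is invariant under conjugation `P * M * Q` with `P * Q = 1`. -/
lemma charpoly_conj_aux {n : ℕ} (M P Q : Matrix (Fin n) (Fin n) ℤ) (hPQ : P * Q = 1) :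
    (P * M * Q).charpoly = M.charpoly := by
  have hdet : P.det * Q.det = 1 := by
    rw [← Matrix.det_mul, hPQ, Matrix.det_one]
  have hmapPQ : P.map (Polynomial.C : ℤ →+* ℤ[X]) * Q.map Polynomial.C = 1 := by
    rw [← Matrix.map_mul, hPQ]
    simp
  have hchar : charmatrix (P * M * Q) =
      (P.map Polynomial.C) * charmatrix M * (Q.map Polynomial.C) := by
    unfold charmatrix
    rw [Matrix.mul_sub, Matrix.sub_mul]
    congr 1
    · rw [Matrix.scalar_apply, ← Matrix.smul_one_eq_diagonal, Matrix.mul_smul, Matrix.smul_mul,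
        Matrix.mul_one, hmapPQ]
    · simp [Matrix.map_mul, Matrix.mul_assoc]
  unfold Matrix.charpoly
  rw [hchar, Matrix.det_mul, Matrix.det_mul, ← RingHom.mapMatrix_apply, ← RingHom.mapMatrix_apply,
    ← RingHom.map_det, ← RingHom.map_det]
  rw [mul_comm, ← mul_assoc, ← Polynomial.C_mul, mul_comm Q.det, hdet]
  simp

/-- If all rows except one row of `M` lie in an ideal `I`, then the `k`-th coefficient of the
characteristic polynomial lies in `I ^ (n - 1 - k)`. -/
lemma coeff_charpoly_mem_ideal_pow_of_rows {n : ℕ} (M : Matrix (Fin n) (Fin n) ℤ)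
    (I : Ideal ℤ) (i₀ : Fin n) (h : ∀ i j : Fin n, i ≠ i₀ → M i j ∈ I) (k : ℕ) :
    M.charpoly.coeff k ∈ I ^ (n - 1 - k) := by
  delta Matrix.charpoly
  rw [Matrix.det_apply, Polynomial.finset_sum_coeff]
  apply Submodule.sum_mem
  rintro c -
  rw [Polynomial.coeff_smul, Submodule.smul_mem_iff']
  have hsum : (∑ i : Fin n, if c i = i₀ then 0 else 1) = n - 1 := by
    rw [← Equiv.sum_comp c.symm (fun i => if c i = i₀ then 0 else 1)]
    simp only [Equiv.apply_symm_apply]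
    rw [← Finset.sum_erase_add _ _ (Finset.mem_univ i₀), if_pos rfl, add_zero]
    rw [Finset.sum_congr rfl (fun i hi => if_neg (Finset.ne_of_mem_erase hi))]
    rw [Finset.sum_const, Finset.card_erase_of_mem (Finset.mem_univ i₀)]
    simp
  have hle : n - 1 - k ≤ (∑ i : Fin n, if c i = i₀ then 0 else 1) - k := by
    rw [hsum]
  refine SetLike.le_def.mp (Ideal.pow_le_pow_right hle) ?_
  apply Polynomial.coeff_prod_mem_ideal_pow_tsub
  rintro i - (_ | m)
  · by_cases hci : c i = i₀
    · simp [hci, Ideal.one_eq_top]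
    · rw [if_neg hci, charmatrix_apply, Polynomial.coeff_sub, Matrix.diagonal_apply]
      have hx : (if c i = i then (X : ℤ[X]) else 0).coeff 0 = 0 := by
        split <;> simp
      rw [hx, Polynomial.coeff_C_zero, zero_sub, pow_one]
      exact neg_mem (h (c i) i hci)
  · have : (if c i = i₀ then 0 else 1) - (m + 1) = 0 := by split <;> omega
    rw [this]
    simp [Ideal.one_eq_top]

theorem stmt2 (n : ℕ) (H : Matrix (Fin n) (Fin n) ℤ) (hsymm : H.IsSymm)
    (hH : ∀ i j, H i j = 1 ∨ H i j = -1)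
    (k : ℕ) (hk1 : 1 ≤ k) (hkn : k ≤ n) :
    (2 : ℤ) ^ (k - 1) ∣ (Matrix.charpoly H).coeff (n - k) := by
  have hn : 0 < n := lt_of_lt_of_le hk1 hkn
  set i₀ : Fin n := ⟨0, hn⟩ with hi₀
  set E : Matrix (Fin n) (Fin n) ℤ :=
    Matrix.of fun i j => if j = i₀ ∧ i ≠ i₀ then 1 else 0 with hE
  have hE2 : E * E = 0 := by
    ext i j
    rw [Matrix.mul_apply, Matrix.zero_apply]
    apply Finset.sum_eq_zero
    intro b _
    by_cases hb : b = i₀ <;> simp [hE, hb]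
  set P : Matrix (Fin n) (Fin n) ℤ := 1 - E with hP
  set Q : Matrix (Fin n) (Fin n) ℤ := 1 + E with hQ
  have hPQ : P * Q = 1 := by
    have : P * Q = 1 - E * E := by rw [hP, hQ]; noncomm_ring
    rw [this, hE2, sub_zero]
  have key : ∀ i j : Fin n, i ≠ i₀ → (P * H * Q) i j ∈ Ideal.span {(2 : ℤ)} := by
    intro i j hi
    have hPH : ∀ b, (P * H) i b = H i b - H i₀ b := by
      intro b
      rw [hP, Matrix.sub_mul, Matrix.one_mul, Matrix.sub_apply]
      congr 1
      rw [Matrix.mul_apply, Finset.sum_eq_single i₀]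
      · simp [hE, hi]
      · intro c _ hc
        simp [hE, hc]
      · simp
    have hdvd : ∀ b, (2 : ℤ) ∣ (P * H) i b := by
      intro b
      rw [hPH b]
      rcases hH i b with h1 | h1 <;> rcases hH i₀ b with h2 | h2 <;> rw [h1, h2] <;> decide
    rw [Ideal.mem_span_singleton, Matrix.mul_apply]
    apply Finset.dvd_sum
    intro b _
    exact Dvd.dvd.mul_right (hdvd b) _
  have := coeff_charpoly_mem_ideal_pow_of_rows (P * H * Q) (Ideal.span {(2:ℤ)}) i₀ key (n - k)
  rw [charpoly_conj_aux H P Q hPQ] at this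
  have he : n - 1 - (n - k) = k - 1 := by omega
  rw [he, Ideal.span_singleton_pow, Ideal.mem_span_singleton] at this
  exact this
end

section
/- Let H be an n×n symmetric {±1}-matrix, χ_H(x) = Σ_{i=0}^n a_i x^{n-i} its characteristic polynomial, and let k ∈ {1,…,n} with n + k odd. Then a_k is divisible by 2^k. -/
open Matrix Finset

variable {ι : Type*} [Fintype ι] [DecidableEq ι] {R : Type*} [CommRing R]

/-- "principal minor" matrix: identity on rows/columns in `S`, `M` elsewhere. -/
def ovr (M : Matrix ι ι R) (S : Finset ι) : Matrix ι ι R :=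
  Matrix.of fun i j => if i ∈ S ∨ j ∈ S then (if i = j then (1:R) else 0) else M i j

@[simp] lemma ovr_empty (M : Matrix ι ι R) : ovr M (∅ : Finset ι) = M := by
  ext i j; simp [ovr]

lemma ovr_apply (M : Matrix ι ι R) (S : Finset ι) (i j : ι) :
    ovr M S i j = if i ∈ S ∨ j ∈ S then (if i = j then (1:R) else 0) else M i j := rfl

lemma det_updateRow_finset_sum (M : Matrix ι ι R) (a : ι) {κ : Type*} [DecidableEq κ] (s : Finset κ)
    (f : κ → ι → R) :
    (M.updateRow a (∑ x ∈ s, f x)).det = ∑ x ∈ s, (M.updateRow a (f x)).det := by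
  induction s using Finset.induction_on with
  | empty =>
      simp only [Finset.sum_empty]
      exact Matrix.det_eq_zero_of_row_eq_zero a (fun j => by simp)
  | insert _ _ ha ih =>
      rw [Finset.sum_insert ha, Matrix.det_updateRow_add, ih, Finset.sum_insert ha]

lemma det_updateColumn_finset_sum (M : Matrix ι ι R) (a : ι) {κ : Type*} [DecidableEq κ] (s : Finset κ)
    (f : κ → ι → R) :
    (M.updateCol a (∑ x ∈ s, f x)).det = ∑ x ∈ s, (M.updateCol a (f x)).det := by
  induction s using Finset.induction_on with
  | empty =>
      simp only [Finset.sum_empty]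
      rw [← Matrix.det_transpose, ← Matrix.updateRow_transpose]
      exact Matrix.det_eq_zero_of_row_eq_zero a (fun j => by simp)
  | insert _ _ ha ih =>
      rw [Finset.sum_insert ha, Matrix.det_updateCol_add, ih, Finset.sum_insert ha]

/-- If column `a` of `M` is the `a`-th unit vector, the row `a` may be replaced by the
`a`-th unit row without changing the determinant. -/
lemma det_clear_row (M : Matrix ι ι R) (a : ι)
    (hcol : ∀ r, M r a = if r = a then (1:R) else 0) :
    M.det = (M.updateRow a (fun j => if j = a then (1:R) else 0)).det := by
  classical
  set v : ι → R := fun j => if j = a then 0 else M a j with hv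
  set E : Matrix ι ι R :=
    (1 : Matrix ι ι R) - Matrix.of (fun i j => (if i = a then (1:R) else 0) * v j) with hE
  have hME : M * E = M.updateRow a (fun j => if j = a then (1:R) else 0) := by
    have hstep : M * E = M - M * Matrix.of (fun i j => (if i = a then (1:R) else 0) * v j) := by
      rw [hE, Matrix.mul_sub, Matrix.mul_one]
    rw [hstep]
    ext i j
    simp only [Matrix.sub_apply, Matrix.mul_apply, Matrix.of_apply]
    have : ∑ x, M i x * ((if x = a then (1:R) else 0) * v j) = M i a * v j := by
      rw [Finset.sum_eq_single a]
      · simp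
      · intro b _ hb; simp [hb]
      · intro h; exact absurd (Finset.mem_univ a) h
    rw [this, hcol i]
    by_cases hia : i = a
    · rw [hia, Matrix.updateRow_self]
      simp only [if_pos rfl, one_mul]
      by_cases hja : j = a
      · simp [hja, hv, hcol a]
      · simp [hja, hv]
    · rw [Matrix.updateRow_ne hia]
      simp [hia]
  have hdetE : E.det = 1 := by
    have hEeq : E = Matrix.updateRow (1 : Matrix ι ι R) a
        (fun j => (if a = j then (1:R) else 0) - v j) := by
      ext i j
      by_cases hia : i = a
      · rw [hia, Matrix.updateRow_self]
        simp [hE, Matrix.one_apply]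
      · rw [Matrix.updateRow_ne hia]
        simp [hE, hia, Matrix.one_apply]
    have hsplit : (fun j => (if a = j then (1:R) else 0) - v j)
        = (fun j => (if a = j then (1:R) else 0)) + (-v) := by
      funext j; simp [sub_eq_add_neg]
    rw [hEeq, hsplit, Matrix.det_updateRow_add]
    have h1 : Matrix.updateRow (1 : Matrix ι ι R) a (fun j => if a = j then (1:R) else 0)
        = (1 : Matrix ι ι R) := by
      ext i j
      by_cases hia : i = a
      · rw [hia, Matrix.updateRow_self]; simp [Matrix.one_apply]
      · rw [Matrix.updateRow_ne hia]
    have hvdecomp : (-v : ι → R) = ∑ x : ι, (fun j => (-(v x)) * (if j = x then (1:R) else 0)) := by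
      funext j
      simp only [Finset.sum_apply, Pi.neg_apply]
      rw [Finset.sum_eq_single j] <;> simp +contextual [eq_comm]
    have h2 : (Matrix.updateRow (1 : Matrix ι ι R) a (-v)).det = 0 := by
      rw [hvdecomp]
      have := det_updateRow_finset_sum (1 : Matrix ι ι R) a Finset.univ
        (fun x => (fun j => (-(v x)) * (if j = x then (1:R) else 0)))
      rw [this]
      refine Finset.sum_eq_zero (fun x _ => ?_)
      have hsmul : (fun j => (-(v x)) * (if j = x then (1:R) else 0))
          = (-(v x)) • (fun j => (if j = x then (1:R) else 0)) := by
        funext j; simp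
      rw [hsmul, Matrix.det_updateRow_smul]
      by_cases hxa : x = a
      · subst hxa; simp [hv]
      · have : (Matrix.updateRow (1 : Matrix ι ι R) a fun j => if j = x then (1:R) else 0).det
            = 0 := by
          refine Matrix.det_zero_of_row_eq (i := a) (j := x) (fun h => hxa h.symm) ?_
          funext j
          simp [Matrix.updateRow_self, Matrix.updateRow_ne (fun h : x = a => hxa h),
            Matrix.one_apply, eq_comm]
        rw [this, mul_zero]
    rw [h1, h2, Matrix.det_one, add_zero]
  calc M.det = M.det * E.det := by rw [hdetE, mul_one]
    _ = (M * E).det := (Matrix.det_mul M E).symm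
    _ = _ := by rw [hME]
/-- First-order expansion of a determinant whose columns in `T` have a common summand `c`. -/
lemma det_expand_linear (c : ι → R) (A : Matrix ι ι R) (T : Finset ι) :
    ∀ B : Matrix ι ι R,
    (Matrix.of fun i j => if j ∈ T then c i + A i j else B i j).det
      = (Matrix.of fun i j => if j ∈ T then A i j else B i j).det
        + ∑ w ∈ T,
          (Matrix.of fun i j => if j = w then c i else if j ∈ T then A i j else B i j).det := by
  induction T using Finset.induction_on with
  | empty => intro B; simp
  | @insert a T' ha ih =>
      intro B
      set M₀ : Matrix ι ι R := Matrix.of fun i j => if j ∈ T' then c i + A i j else B i j with hM₀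
      have hL : (Matrix.of fun i j => if j ∈ insert a T' then c i + A i j else B i j)
          = M₀.updateCol a ((fun i => c i) + (fun i => A i a)) := by
        ext i j
        by_cases hja : j = a
        · simp [hja, Matrix.updateCol_apply, hM₀]
        · simp [hja, Matrix.updateCol_apply, hM₀, Finset.mem_insert]
      rw [hL, Matrix.det_updateCol_add]
      set B' : Matrix ι ι R := Matrix.of fun i j => if j = a then A i j else B i j with hB'
      set B'' : Matrix ι ι R := Matrix.of fun i j => if j = a then c i else B i j with hB''
      have h1 : M₀.updateCol a (fun i => A i a)
          = Matrix.of fun i j => if j ∈ T' then c i + A i j else B' i j := by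
        ext i j
        by_cases hja : j = a
        · simp [hja, Matrix.updateCol_apply, ha, hB']
        · simp [hja, Matrix.updateCol_apply, hM₀, hB']
      have h2 : M₀.updateCol a (fun i => c i)
          = Matrix.of fun i j => if j ∈ T' then c i + A i j else B'' i j := by
        ext i j
        by_cases hja : j = a
        · simp [hja, Matrix.updateCol_apply, ha, hB'']
        · simp [hja, Matrix.updateCol_apply, hM₀, hB'']
      rw [h1, h2, ih B', ih B'']
      have e1 : (Matrix.of fun i j => if j ∈ T' then A i j else B' i j)
          = Matrix.of fun i j => if j ∈ insert a T' then A i j else B i j := by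
        ext i j
        by_cases hja : j = a
        · simp [hja, ha, hB']
        · simp [hja, hB', Finset.mem_insert]
      have e2 : ∀ w ∈ T',
          (Matrix.of fun i j => if j = w then c i else if j ∈ T' then A i j else B' i j)
          = Matrix.of fun i j => if j = w then c i else if j ∈ insert a T' then A i j else B i j := by
        intro w hw
        ext i j
        by_cases hjw : j = w
        · simp [hjw]
        · by_cases hja : j = a
          · simp [hjw, hja, ha, hB']
          · simp [hjw, hja, hB', Finset.mem_insert]
      have e3 : (Matrix.of fun i j => if j ∈ T' then A i j else B'' i j)
          = Matrix.of fun i j => if j = a then c i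
              else if j ∈ insert a T' then A i j else B i j := by
        ext i j
        by_cases hja : j = a
        · simp [hja, ha, hB'']
        · simp [hja, hB'', Finset.mem_insert]
      have e4 : ∀ w ∈ T',
          (Matrix.of fun i j => if j = w then c i else if j ∈ T' then A i j else B'' i j).det
            = 0 := by
        intro w hw
        have haw : a ≠ w := fun h => ha (h ▸ hw)
        refine Matrix.det_zero_of_column_eq haw (fun r => ?_)
        have h3 : a ∉ T' := ha
        simp [Matrix.of_apply, Ne.symm haw, h3, hB'']
      have hs1 : ∑ w ∈ T',
            (Matrix.of fun i j => if j = w then c i else if j ∈ T' then A i j else B' i j).det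
          = ∑ w ∈ T', (Matrix.of fun i j => if j = w then c i
              else if j ∈ insert a T' then A i j else B i j).det :=
        Finset.sum_congr rfl (fun w hw => congrArg Matrix.det (e2 w hw))
      have hs2 : ∑ w ∈ T',
            (Matrix.of fun i j => if j = w then c i else if j ∈ T' then A i j else B'' i j).det
          = 0 := Finset.sum_eq_zero e4
      rw [e1, hs1, e3, hs2, Finset.sum_insert ha]
      ring
lemma det_add_diagonal_aux (u : Finset ι) :
    ∀ (d : ι → R), (∀ i ∉ u, d i = 0) → ∀ A : Matrix ι ι R,
    (A + Matrix.diagonal d).det = ∑ S ∈ u.powerset, (∏ i ∈ S, d i) * (ovr A S).det := by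
  induction u using Finset.induction_on with
  | empty =>
      intro d hd A
      have hd0 : d = fun _ => 0 := funext fun i => hd i (Finset.notMem_empty i)
      subst hd0
      simp [Matrix.diagonal_zero]
  | @insert a u' ha ih =>
      intro d hd A
      set d' : ι → R := fun i => if i = a then 0 else d i with hd'def
      have hd' : ∀ i ∉ u', d' i = 0 := by
        intro i hi
        by_cases hia : i = a
        · simp [hd'def, hia]
        · simp only [hd'def, if_neg hia]
          exact hd i (by simp [Finset.mem_insert, hia, hi])
      have hsplit : A + Matrix.diagonal d
          = (A + Matrix.diagonal d').updateCol a
              ((fun i => (A + Matrix.diagonal d') i a) + (fun i => d a * (if i = a then 1 else 0))) := by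
        ext i j
        by_cases hja : j = a
        · rw [hja]
          by_cases hia : i = a <;>
            simp [Matrix.updateCol_apply, Matrix.diagonal_apply, hd'def, hia]
        · by_cases hij : i = j
          · have hia : i ≠ a := fun h => hja (hij.symm.trans h)
            simp [Matrix.updateCol_apply, hja, Matrix.diagonal_apply, hij, hd'def, hia]
          · simp [Matrix.updateCol_apply, hja, Matrix.diagonal_apply, hij]
      rw [hsplit, Matrix.det_updateCol_add]
      have hfirst : (A + Matrix.diagonal d').updateCol a (fun i => (A + Matrix.diagonal d') i a)
          = A + Matrix.diagonal d' := Matrix.updateCol_eq_self _ a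
      have hsmulcol : (fun i => d a * (if i = a then (1:R) else 0))
          = d a • (fun i => if i = a then (1:R) else 0) := by
        funext i; simp
      rw [hfirst, hsmulcol, Matrix.det_updateCol_smul]
      set A₂ : Matrix ι ι R := A.updateCol a (fun i => if i = a then 1 else 0) with hA₂
      have hsecond : (A + Matrix.diagonal d').updateCol a (fun i => if i = a then (1:R) else 0)
          = A₂ + Matrix.diagonal d' := by
        ext i j
        by_cases hja : j = a
        · rw [hja]
          by_cases hia : i = a <;>
            simp [Matrix.updateCol_apply, Matrix.diagonal_apply, hA₂, hd'def, hia]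
        · simp [Matrix.updateCol_apply, hja, hA₂, Matrix.diagonal_apply]
      rw [hsecond, ih d' hd' A, ih d' hd' A₂]
      have hminor : ∀ S ∈ u'.powerset, (ovr A₂ S).det = (ovr A (insert a S)).det := by
        intro S hS
        have hSu' : S ⊆ u' := Finset.mem_powerset.1 hS
        have haS : a ∉ S := fun h => ha (hSu' h)
        have hcol : ∀ r, (ovr A₂ S) r a = if r = a then (1:R) else 0 := by
          intro r
          by_cases hrS : r ∈ S
          · have hra : r ≠ a := fun h => haS (h ▸ hrS)
            simp [ovr_apply, hrS, haS, hra]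
          · simp [ovr_apply, hrS, haS, hA₂, Matrix.updateCol_apply]
        rw [det_clear_row (ovr A₂ S) a hcol]
        congr 1
        ext r c
        by_cases hra : r = a
        · rw [hra]
          simp only [Matrix.updateRow_self, ovr_apply]
          have : a ∈ insert a S := Finset.mem_insert_self a S
          simp [this, eq_comm]
        · rw [Matrix.updateRow_ne hra]
          by_cases hca : c = a
          · rw [hca]
            simp only [ovr_apply, haS, or_false, Finset.mem_insert, or_true]
            by_cases hrS : r ∈ S
            · simp [hrS, hra]
            · simp [hrS, hA₂, Matrix.updateCol_apply, hra]
          · simp only [ovr_apply, Finset.mem_insert, hra, hca, false_or]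
            by_cases hcond : r ∈ S ∨ c ∈ S
            · simp [hcond]
            · push_neg at hcond
              simp [hcond.1, hcond.2, hA₂, Matrix.updateCol_apply, hca]
      have hprod : ∀ S ∈ u'.powerset, (∏ i ∈ S, d' i) = ∏ i ∈ S, d i := by
        intro S hS
        refine Finset.prod_congr rfl (fun i hi => ?_)
        have : i ≠ a := fun h => ha (h ▸ Finset.mem_powerset.1 hS hi)
        simp [hd'def, this]
      rw [Finset.sum_powerset_insert ha]
      have lhs1 : ∑ S ∈ u'.powerset, (∏ i ∈ S, d' i) * (ovr A S).det
          = ∑ S ∈ u'.powerset, (∏ i ∈ S, d i) * (ovr A S).det :=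
        Finset.sum_congr rfl (fun S hS => by rw [hprod S hS])
      have lhs2 : d a * ∑ S ∈ u'.powerset, (∏ i ∈ S, d' i) * (ovr A₂ S).det
          = ∑ S ∈ u'.powerset, (∏ i ∈ insert a S, d i) * (ovr A (insert a S)).det := by
        rw [Finset.mul_sum]
        refine Finset.sum_congr rfl (fun S hS => ?_)
        have haS : a ∉ S := fun h => ha (Finset.mem_powerset.1 hS h)
        rw [hprod S hS, hminor S hS, Finset.prod_insert haS]
        ring
      rw [lhs1, lhs2]
open Polynomial in
lemma charpoly_coeff_eq (M : Matrix ι ι R) (m : ℕ) :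
    M.charpoly.coeff m = ∑ S ∈ Finset.powersetCard m Finset.univ, (ovr (-M) S).det := by
  have hchar : Matrix.charmatrix M
      = ((-M).map Polynomial.C) + Matrix.diagonal (fun _ => (Polynomial.X : R[X])) := by
    refine Matrix.ext (fun i j => ?_)
    by_cases hij : i = j
    · rw [hij, Matrix.charmatrix_apply_eq]
      simp [Matrix.diagonal_apply, Matrix.map_apply, sub_eq_neg_add]
    · rw [Matrix.charmatrix_apply_ne _ _ _ hij]
      simp [Matrix.diagonal_apply, hij, Matrix.map_apply]
  have hmapovr : ∀ S : Finset ι, (ovr ((-M).map Polynomial.C) S) = (ovr (-M) S).map Polynomial.C := by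
    intro S
    refine Matrix.ext (fun i j => ?_)
    simp only [ovr_apply, Matrix.map_apply, apply_ite Polynomial.C, Polynomial.C_1, map_zero]
  have h1 : M.charpoly = ∑ S ∈ (Finset.univ : Finset ι).powerset,
      (Polynomial.X : R[X])^S.card * Polynomial.C ((ovr (-M) S).det) := by
    rw [Matrix.charpoly, hchar,
      det_add_diagonal_aux Finset.univ (fun _ => (Polynomial.X : R[X])) (by simp) _]
    refine Finset.sum_congr rfl (fun S hS => ?_)
    rw [Finset.prod_const, hmapovr S]
    congr 1
    exact ((Polynomial.C : R →+* R[X]).map_det (ovr (-M) S)).symm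
  rw [h1, Polynomial.finset_sum_coeff, Finset.powersetCard_eq_filter, Finset.sum_filter]
  refine Finset.sum_congr rfl (fun S _ => ?_)
  rw [mul_comm, Polynomial.coeff_C_mul, Polynomial.coeff_X_pow]
  by_cases h : S.card = m
  · simp [h]
  · simp [h, Ne.symm h]
lemma sym_pair_sum (s : Finset ι) (f : ι → ι → ℤ) (hf : ∀ w i, f w i = f i w) :
    ∃ c : ℤ, ∑ w ∈ s, ∑ i ∈ s, f w i = (∑ i ∈ s, f i i) + 2 * c := by
  induction s using Finset.induction_on with
  | empty => exact ⟨0, by simp⟩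
  | @insert a s' ha ih =>
      obtain ⟨c', hc'⟩ := ih
      refine ⟨(∑ i ∈ s', f a i) + c', ?_⟩
      have hrow : ∀ w, ∑ i ∈ insert a s', f w i = f w a + ∑ i ∈ s', f w i :=
        fun w => Finset.sum_insert ha
      calc ∑ w ∈ insert a s', ∑ i ∈ insert a s', f w i
          = (f a a + ∑ i ∈ s', f a i) + ∑ w ∈ s', (f w a + ∑ i ∈ s', f w i) := by
            rw [Finset.sum_insert ha, hrow a]
            congr 1
            exact Finset.sum_congr rfl (fun w _ => hrow w)
        _ = f a a + (∑ i ∈ s', f a i) + (∑ w ∈ s', f w a)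
            + (∑ w ∈ s', ∑ i ∈ s', f w i) := by
            rw [Finset.sum_add_distrib]; ring
        _ = f a a + (∑ i ∈ s', f a i) + (∑ w ∈ s', f a w)
            + ((∑ i ∈ s', f i i) + 2 * c') := by
            rw [hc']
            congr 2
            exact Finset.sum_congr rfl (fun w _ => hf w a)
        _ = (∑ i ∈ insert a s', f i i) + 2 * ((∑ i ∈ s', f a i) + c') := by
            rw [Finset.sum_insert ha]; ring

lemma double_count {n : ℕ} (m : ℕ) (f : Finset (Fin n) → ℤ) :
    ∑ S ∈ Finset.powersetCard m (Finset.univ : Finset (Fin n)), ∑ i ∈ Sᶜ, f (insert i S)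
      = ((m : ℤ) + 1) * ∑ S ∈ Finset.powersetCard (m+1) (Finset.univ : Finset (Fin n)), f S := by
  have hrhs : ((m:ℤ)+1) * ∑ S ∈ Finset.powersetCard (m+1) (Finset.univ : Finset (Fin n)), f S
      = ∑ S ∈ Finset.powersetCard (m+1) (Finset.univ : Finset (Fin n)), ∑ _i ∈ S, f S := by
    rw [Finset.mul_sum]
    refine Finset.sum_congr rfl (fun S hS => ?_)
    rw [Finset.sum_const, Finset.mem_powersetCard_univ.1 hS, nsmul_eq_mul]
    push_cast; ring
  rw [hrhs, Finset.sum_sigma', Finset.sum_sigma']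
  refine Finset.sum_bij' (fun p _hp => (⟨insert p.2 p.1, p.2⟩ : Σ _ : Finset (Fin n), Fin n))
    (fun q _hq => (⟨q.1.erase q.2, q.2⟩ : Σ _ : Finset (Fin n), Fin n)) ?_ ?_ ?_ ?_ ?_
  · rintro ⟨S, i⟩ hp
    rw [Finset.mem_sigma] at hp ⊢
    obtain ⟨hS, hi⟩ := hp
    have hiS : i ∉ S := Finset.mem_compl.1 hi
    refine ⟨?_, Finset.mem_insert_self i S⟩
    rw [Finset.mem_powersetCard_univ, Finset.card_insert_of_notMem hiS,
      Finset.mem_powersetCard_univ.1 hS]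
  · rintro ⟨S, i⟩ hq
    rw [Finset.mem_sigma] at hq ⊢
    obtain ⟨hS, hi⟩ := hq
    refine ⟨?_, Finset.mem_compl.2 (Finset.notMem_erase i S)⟩
    rw [Finset.mem_powersetCard_univ, Finset.card_erase_of_mem hi,
      Finset.mem_powersetCard_univ.1 hS]
    omega
  · rintro ⟨S, i⟩ hp
    rw [Finset.mem_sigma] at hp
    have hiS : i ∉ S := Finset.mem_compl.1 hp.2
    simp [Finset.erase_insert hiS]
  · rintro ⟨S, i⟩ hq
    rw [Finset.mem_sigma] at hq
    simp [Finset.insert_erase hq.2]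
  · rintro ⟨S, i⟩ _hp
    rfl
theorem main_aux (n k' : ℕ) (A : Matrix (Fin n) (Fin n) ℤ) (hsymm : Aᵀ = A)
    (hA : ∀ i j, A i j = 1 ∨ A i j = -1) (hkn : k' + 1 ≤ n) (hodd : Odd (n + (k' + 1))) :
    (2:ℤ)^(k'+1) ∣ ∑ S ∈ Finset.powersetCard (n - (k'+1)) (Finset.univ : Finset (Fin n)),
      (ovr A S).det := by
  classical
  set k := k' + 1 with hk
  set G : Matrix (Fin n) (Fin n) ℤ :=
    Matrix.of (fun i j => if A i j = 1 then (0:ℤ) else 1) with hGdef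
  have hAG : ∀ i j, A i j = 1 - 2 * G i j := by
    intro i j
    rcases hA i j with h | h <;> simp [hGdef, h] <;> norm_num [h]
  have hGsymm : Gᵀ = G := by
    refine Matrix.ext (fun i j => ?_)
    have hA' : A j i = A i j := congrFun (congrFun hsymm i) j
    simp [hGdef, Matrix.transpose_apply, hA']
  -- the per-subset congruence
  have key : ∀ S ∈ Finset.powersetCard (n-k) (Finset.univ : Finset (Fin n)),
      ∃ c : ℤ, (ovr A S).det = (-2)^k * (ovr G S).det
        + (-2)^k' * ((∑ i ∈ Sᶜ, (ovr G (insert i S)).det) + 2*c) := by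
    intro S hS
    have hScard : S.card = n - k := Finset.mem_powersetCard_univ.1 hS
    have hcompl : Sᶜ.card = k := by
      rw [Finset.card_compl, hScard, Fintype.card_fin]
      omega
    set u : Fin n → ℤ := fun i => if i ∈ S then 0 else 1 with hu
    set Q : Matrix (Fin n) (Fin n) ℤ := ovr G S with hQ
    -- step 1 : first-order expansion
    have hmatch : (Matrix.of fun i j => if j ∈ Sᶜ then
          u i + (Matrix.of fun i j => (-2) * (if i ∈ S then 0 else G i j)) i j
          else (1 : Matrix (Fin n) (Fin n) ℤ) i j) = ovr A S := by
      refine Matrix.ext (fun i j => ?_)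
      by_cases hjS : j ∈ S
      · simp [ovr_apply, hjS, Finset.mem_compl, Matrix.one_apply]
      · have hij : i ∈ S → ¬ i = j := fun hi he => hjS (he ▸ hi)
        by_cases hiS : i ∈ S
        · simp [ovr_apply, hjS, hiS, Finset.mem_compl, hu, hij hiS]
        · simp [ovr_apply, hjS, hiS, Finset.mem_compl, hu, hAG i j]
          ring
    have hexp := det_expand_linear u
      (Matrix.of fun i j => (-2) * (if i ∈ S then 0 else G i j)) Sᶜ
      (1 : Matrix (Fin n) (Fin n) ℤ)
    rw [hmatch] at hexp
    -- step 2 : the zeroth-order term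
    have hzero : (Matrix.of fun i j => if j ∈ Sᶜ then
          (Matrix.of fun i j => (-2) * (if i ∈ S then 0 else G i j)) i j
          else (1 : Matrix (Fin n) (Fin n) ℤ) i j).det = (-2)^k * Q.det := by
      have hmm : (Matrix.of fun i j => if j ∈ Sᶜ then
            (Matrix.of fun i j => (-2) * (if i ∈ S then 0 else G i j)) i j
            else (1 : Matrix (Fin n) (Fin n) ℤ) i j)
          = Matrix.of (fun i j => (if j ∈ S then 1 else (-2)) * Q i j) := by
        refine Matrix.ext (fun i j => ?_)
        by_cases hjS : j ∈ S
        · simp [hjS, Finset.mem_compl, hQ, ovr_apply, Matrix.one_apply]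
        · by_cases hiS : i ∈ S
          · have hij : ¬ i = j := fun he => hjS (he ▸ hiS)
            simp [hjS, hiS, Finset.mem_compl, hQ, ovr_apply, hij]
          · simp [hjS, hiS, Finset.mem_compl, hQ, ovr_apply]
      rw [hmm, Matrix.det_mul_row]
      congr 1
      rw [← Finset.prod_mul_prod_compl S]
      have h1 : ∏ j ∈ S, (if j ∈ S then (1:ℤ) else (-2)) = 1 :=
        Finset.prod_eq_one (fun j hj => if_pos hj)
      have h2 : ∏ j ∈ Sᶜ, (if j ∈ S then (1:ℤ) else (-2)) = (-2)^k := by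
        rw [Finset.prod_congr rfl (fun j hj => if_neg (Finset.mem_compl.1 hj)),
          Finset.prod_const, hcompl]
      rw [h1, h2, one_mul]
    -- step 3 : the first-order terms
    have hfirst : ∀ w ∈ Sᶜ, (Matrix.of fun i j => if j = w then u i else if j ∈ Sᶜ then
          (Matrix.of fun i j => (-2) * (if i ∈ S then 0 else G i j)) i j
          else (1 : Matrix (Fin n) (Fin n) ℤ) i j).det
        = (-2)^k' * (Q.updateCol w u).det := by
      intro w hw
      have hwS : w ∉ S := Finset.mem_compl.1 hw
      have hmm : (Matrix.of fun i j => if j = w then u i else if j ∈ Sᶜ then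
            (Matrix.of fun i j => (-2) * (if i ∈ S then 0 else G i j)) i j
            else (1 : Matrix (Fin n) (Fin n) ℤ) i j)
          = Matrix.of (fun i j => (if j ∈ S ∨ j = w then 1 else (-2))
              * (Q.updateCol w u) i j) := by
        refine Matrix.ext (fun i j => ?_)
        by_cases hjw : j = w
        · simp [hjw, hwS, Matrix.updateCol_apply]
        · by_cases hjS : j ∈ S
          · simp [hjw, hjS, Finset.mem_compl, Matrix.updateCol_apply, hQ, ovr_apply,
              Matrix.one_apply]
          · by_cases hiS : i ∈ S
            · have hij : ¬ i = j := fun he => hjS (he ▸ hiS)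
              simp [hjw, hjS, hiS, Finset.mem_compl, Matrix.updateCol_apply, hQ,
                ovr_apply, hij]
            · simp [hjw, hjS, hiS, Finset.mem_compl, Matrix.updateCol_apply, hQ, ovr_apply]
      rw [hmm, Matrix.det_mul_row]
      congr 1
      rw [← Finset.prod_mul_prod_compl S]
      have h1 : ∏ j ∈ S, (if j ∈ S ∨ j = w then (1:ℤ) else (-2)) = 1 :=
        Finset.prod_eq_one (fun j hj => if_pos (Or.inl hj))
      have h2 : ∏ j ∈ Sᶜ, (if j ∈ S ∨ j = w then (1:ℤ) else (-2)) = (-2)^k' := by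
        rw [← Finset.mul_prod_erase Sᶜ _ hw, if_pos (Or.inr rfl), one_mul]
        have : ∀ j ∈ Sᶜ.erase w, (if j ∈ S ∨ j = w then (1:ℤ) else (-2)) = -2 := by
          intro j hj
          have hj1 : j ≠ w := Finset.ne_of_mem_erase hj
          have hj2 : j ∉ S := Finset.mem_compl.1 (Finset.mem_of_mem_erase hj)
          simp [hj1, hj2]
        rw [Finset.prod_congr rfl this, Finset.prod_const, Finset.card_erase_of_mem hw, hcompl]
        congr 1
      rw [h1, h2, one_mul]
    -- step 4 : expand u into unit vectors
    have hudecomp : u = ∑ i ∈ Sᶜ, Pi.single i (1:ℤ) := by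
      funext x
      rw [Finset.sum_apply]
      simp [Pi.single_apply, hu, Finset.mem_compl]
    set t : Fin n → Fin n → ℤ :=
      fun w i => (Q.updateCol w (Pi.single i (1:ℤ))).det with ht
    have hcolsum : ∀ w, (Q.updateCol w u).det = ∑ i ∈ Sᶜ, t w i := by
      intro w
      rw [hudecomp, det_updateColumn_finset_sum]
    -- step 5 : symmetry of t
    have hQsymm : Qᵀ = Q := by
      refine Matrix.ext (fun i j => ?_)
      have hG' : G j i = G i j := congrFun (congrFun hGsymm i) j
      simp [hQ, ovr_apply, Matrix.transpose_apply, hG']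
      by_cases hc : i ∈ S ∨ j ∈ S
      · rcases hc with h | h <;> simp [h, eq_comm]
      · push_neg at hc
        simp [hc.1, hc.2]
    have htadj : ∀ w i, t w i = (Q.adjugate) i w := by
      intro w i
      show (Q.updateCol w (Pi.single i (1:ℤ))).det = Q.adjugate i w
      rw [Matrix.adjugate_apply, ← Matrix.det_transpose (Q.updateCol w (Pi.single i (1:ℤ))),
        ← Matrix.updateRow_transpose, hQsymm]
    have htsymm : ∀ w i, t w i = t i w := by
      intro w i
      rw [htadj w i, htadj i w]
      have h : (Q.adjugate)ᵀ = Q.adjugate := by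
        rw [Matrix.adjugate_transpose, hQsymm]
      exact congrFun (congrFun h w) i
    -- step 6 : diagonal terms
    have hdiag : ∀ i ∈ Sᶜ, t i i = (ovr G (insert i S)).det := by
      intro i hi
      have hiS : i ∉ S := Finset.mem_compl.1 hi
      have hcol : ∀ r, (Q.updateCol i (Pi.single i (1:ℤ))) r i = if r = i then 1 else 0 := by
        intro r
        simp [Matrix.updateCol_apply, Pi.single_apply]
      show (Q.updateCol i (Pi.single i (1:ℤ))).det = (ovr G (insert i S)).det
      rw [det_clear_row _ i hcol]
      congr 1
      refine Matrix.ext (fun r c => ?_)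
      by_cases hri : r = i
      · rw [hri, Matrix.updateRow_self]
        simp [ovr_apply, Finset.mem_insert, eq_comm]
      · rw [Matrix.updateRow_ne hri]
        by_cases hci : c = i
        · rw [hci]
          simp [Matrix.updateCol_apply, Pi.single_apply, hri, ovr_apply, Finset.mem_insert]
        · simp only [Matrix.updateCol_apply, hci, if_false, hQ, ovr_apply,
            Finset.mem_insert, hri, hci, false_or]
    -- assemble
    obtain ⟨c, hc⟩ := sym_pair_sum Sᶜ t htsymm
    refine ⟨c, ?_⟩
    rw [hexp, hzero, Finset.sum_congr rfl hfirst, ← Finset.mul_sum]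
    congr 1
    rw [Finset.sum_congr rfl (fun w hw => hcolsum w), hc,
      Finset.sum_congr rfl (fun i hi => hdiag i hi)]
  -- global assembly
  have hdvd1 : ∀ S ∈ Finset.powersetCard (n-k) (Finset.univ : Finset (Fin n)),
      (2:ℤ)^k ∣ ((ovr A S).det
        - (-2)^k' * ∑ i ∈ Sᶜ, (ovr G (insert i S)).det) := by
    intro S hS
    obtain ⟨c, hc⟩ := key S hS
    refine ⟨(-1)^k * (ovr G S).det + (-1)^k' * c, ?_⟩
    have hn2k : (-2:ℤ)^k = (-1)^k * 2^k := by rw [← neg_one_mul, mul_pow]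
    have hn2k' : (-2:ℤ)^k' = (-1)^k' * 2^k' := by rw [← neg_one_mul, mul_pow]
    have h2k : (2:ℤ)^k = 2^k' * 2 := pow_succ 2 k'
    rw [hc, hn2k, hn2k', h2k]
    ring
  have hsum1 : (2:ℤ)^k ∣ ∑ S ∈ Finset.powersetCard (n-k) (Finset.univ : Finset (Fin n)),
      ((ovr A S).det - (-2)^k' * ∑ i ∈ Sᶜ, (ovr G (insert i S)).det) :=
    Finset.dvd_sum hdvd1
  have hsplit : ∑ S ∈ Finset.powersetCard (n-k) (Finset.univ : Finset (Fin n)),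
      ((ovr A S).det - (-2)^k' * ∑ i ∈ Sᶜ, (ovr G (insert i S)).det)
      = (∑ S ∈ Finset.powersetCard (n-k) (Finset.univ : Finset (Fin n)), (ovr A S).det)
        - (-2)^k' * ∑ S ∈ Finset.powersetCard (n-k) (Finset.univ : Finset (Fin n)),
            ∑ i ∈ Sᶜ, (ovr G (insert i S)).det := by
    rw [Finset.sum_sub_distrib, Finset.mul_sum]
  have hD : (2:ℤ)^k ∣ (-2)^k' * ∑ S ∈ Finset.powersetCard (n-k) (Finset.univ : Finset (Fin n)),
      ∑ i ∈ Sᶜ, (ovr G (insert i S)).det := by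
    rw [double_count (n-k) (fun S' => (ovr G S').det)]
    obtain ⟨e, he⟩ : ∃ e : ℕ, n - k + 1 = e + e := by
      obtain ⟨c, hc⟩ := hodd
      exact ⟨c - k' , by omega⟩
    have hcast : ((n-k : ℕ) : ℤ) + 1 = 2 * e := by
      push_cast [he]
      omega
    rw [hcast]
    refine ⟨(-1)^k' * e * ∑ S ∈ Finset.powersetCard (n-k+1) (Finset.univ : Finset (Fin n)),
      (ovr G S).det, ?_⟩
    have hn2k' : (-2:ℤ)^k' = (-1)^k' * 2^k' := by rw [← neg_one_mul, mul_pow]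
    have h2k : (2:ℤ)^k = 2^k' * 2 := pow_succ 2 k'
    rw [hn2k', h2k]
    ring
  have := dvd_add hsum1 hD
  rw [hsplit] at this
  simpa using this
theorem stmt3 (n : ℕ) (H : Matrix (Fin n) (Fin n) ℤ) (hsymm : H.IsSymm)
    (hH : ∀ i j, H i j = 1 ∨ H i j = -1)
    (k : ℕ) (hk1 : 1 ≤ k) (hkn : k ≤ n) (hodd : Odd (n + k)) :
    (2 : ℤ) ^ k ∣ (Matrix.charpoly H).coeff (n - k) := by
  obtain ⟨k', rfl⟩ : ∃ k', k = k' + 1 := ⟨k - 1, (Nat.succ_pred_eq_of_pos hk1).symm⟩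
  rw [charpoly_coeff_eq H (n - (k'+1))]
  refine main_aux n k' (-H) ?_ ?_ hkn hodd
  · rw [Matrix.transpose_neg, hsymm]
  · intro i j
    rcases hH i j with h | h
    · right; simp [h]
    · left; simp [h]
end

section
/- Let N ≥ 3 and let w = (w_0, w_1, …, w_N) be a closed walk in a graph Γ with w_0 = w_N, such that consecutive vertices are distinct (w is simple) and w is palindromic (w_i = w_{N−i} for all i). If for some k ∈ ℕ, N is divisible by 2^i and the rotation of w by N/2^i steps equals w for all i ∈ {0,…,k}, then N is divisible by 2^{k+1}. -/
theorem stmt5 {V : Type*} (Γ : SimpleGraph V) (N : ℕ) (hN : 3 ≤ N)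
    (w : ZMod N → V)
    (hadj : ∀ i, Γ.Adj (w i) (w (i + 1)))
    (hpal : ∀ i, w i = w (-i))
    (k : ℕ)
    (hdiv : ∀ i ≤ k, 2 ^ i ∣ N)
    (hrot : ∀ i ≤ k, ∀ j : ZMod N, w (j + ((N / 2 ^ i : ℕ) : ZMod N)) = w j) :
    2 ^ (k + 1) ∣ N := by
  obtain ⟨M, hM⟩ := hdiv k le_rfl
  have hMdef : N / 2 ^ k = M := by
    rw [hM, Nat.mul_div_cancel_left _ (Nat.two_pow_pos k)]
  rcases Nat.even_or_odd M with hE | hO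
  · obtain ⟨m, hm⟩ := hE
    exact ⟨m, by rw [hM, hm]; ring⟩
  · obtain ⟨t, ht⟩ := hO
    exfalso
    have key := hrot k le_rfl (-(t : ZMod N))
    rw [hMdef, ht] at key
    push_cast at key
    have e1 : -(t : ZMod N) + (2 * t + 1) = (t : ZMod N) + 1 := by ring
    rw [e1, ← hpal] at key
    exact (Γ.ne_of_adj (hadj (t : ZMod N))) key.symm
end

section
/- Let N ≥ 3 and let w be a simple closed N-walk in a graph Γ. Then the number of palindromic walks in the orbit of w under the natural dihedral group action (rotations and reversal) is either 0 or 2. -/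
/-- Key lemma: if `y` is a palindromic simple closed walk, then the set of palindromic
elements in its dihedral orbit has exactly 2 elements. -/
lemma key_ncard {V : Type*} {N : ℕ} (hN : 3 ≤ N) (y : ZMod N → V)
    (hne : ∀ i, y i ≠ y (i + 1)) (hpal : ∀ i, y i = y (-i)) :
    Set.ncard {x : ZMod N → V |
        ((∃ m : ZMod N, x = fun i => y (i + m)) ∨ (∃ m : ZMod N, x = fun i => y (m - i))) ∧
        (∀ i, x i = x (-i))} = 2 := by
  classical
  haveI : NeZero N := ⟨by omega⟩
  -- natural periods
  have hPerN : ∀ i : ZMod N, y (i + (N : ZMod N)) = y i := by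
    intro i; rw [ZMod.natCast_self, add_zero]
  have hex : ∃ n : ℕ, 0 < n ∧ ∀ i : ZMod N, y (i + (n : ZMod N)) = y i := ⟨N, by omega, hPerN⟩
  set d := Nat.find hex with hd_def
  have hdpos : 0 < d := (Nat.find_spec hex).1
  have hdper : ∀ i : ZMod N, y (i + (d : ZMod N)) = y i := (Nat.find_spec hex).2
  have hmul : ∀ k, ∀ i : ZMod N, y (i + ((d * k : ℕ) : ZMod N)) = y i := by
    intro k
    induction k with
    | zero => intro i; simp
    | succ k ih =>
      intro i
      have h1 : ((d * (k+1) : ℕ) : ZMod N) = ((d * k : ℕ) : ZMod N) + (d : ZMod N) := by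
        push_cast; ring
      rw [h1, ← add_assoc, hdper, ih]
  have per_iff : ∀ n : ℕ, (∀ i : ZMod N, y (i + (n : ZMod N)) = y i) ↔ d ∣ n := by
    intro n
    constructor
    · intro hp
      have hmod : ∀ i : ZMod N, y (i + ((n % d : ℕ) : ZMod N)) = y i := by
        intro i
        have h1 : ((n : ℕ) : ZMod N) = ((n % d : ℕ) : ZMod N) + ((d * (n / d) : ℕ) : ZMod N) := by
          rw [← Nat.cast_add, Nat.mod_add_div]
        calc y (i + ((n % d : ℕ) : ZMod N))
            = y (i + ((n % d : ℕ) : ZMod N) + ((d * (n / d) : ℕ) : ZMod N)) := (hmul _ _).symm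
          _ = y (i + (n : ZMod N)) := by rw [h1]; ring_nf
          _ = y i := hp i
      by_contra hnd
      have hpos : 0 < n % d := by
        rcases Nat.eq_zero_or_pos (n % d) with h | h
        · exact absurd (Nat.dvd_of_mod_eq_zero h) hnd
        · exact h
      exact Nat.find_min hex (Nat.mod_lt n hdpos) ⟨hpos, hmod⟩
    · rintro ⟨k, rfl⟩
      exact hmul k
  have hdN : d ∣ N := (per_iff N).mp hPerN
  have perZ_iff : ∀ p : ZMod N, (∀ i : ZMod N, y (i + p) = y i) ↔ d ∣ p.val := by
    intro p
    have hcast : ((p.val : ℕ) : ZMod N) = p := (ZMod.natCast_val p).trans (ZMod.cast_id _ _)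
    rw [← per_iff p.val]
    constructor
    · intro h i; rw [hcast]; exact h i
    · intro h i; rw [← hcast]; exact h i
  rcases Nat.even_or_odd d with ⟨e, he⟩ | ⟨a0, ha⟩
  · -- d even: the set is a pair
    have hepos : 0 < e := by omega
    have hed : e < d := by omega
    have hSeq : {x : ZMod N → V |
        ((∃ m : ZMod N, x = fun i => y (i + m)) ∨ (∃ m : ZMod N, x = fun i => y (m - i))) ∧
        (∀ i, x i = x (-i))} = {y, fun i => y (i + ((e : ℕ) : ZMod N))} := by
      ext x
      simp only [Set.mem_setOf_eq, Set.mem_insert_iff, Set.mem_singleton_iff]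
      constructor
      · rintro ⟨horb, hpx⟩
        have hrot : ∃ m : ZMod N, x = fun i => y (i + m) := by
          rcases horb with ⟨m, rfl⟩ | ⟨m, rfl⟩
          · exact ⟨m, rfl⟩
          · refine ⟨-m, ?_⟩
            funext i
            show y (m - i) = y (i + -m)
            rw [hpal (m - i)]; congr 1; ring
        obtain ⟨m, rfl⟩ := hrot
        have hpx' : ∀ i : ZMod N, y (i + m) = y (-i + m) := hpx
        have hper2m : ∀ i : ZMod N, y (i + (m + m)) = y i := by
          intro i
          calc y (i + (m + m)) = y ((i + m) + m) := by ring_nf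
            _ = y (-(i + m) + m) := hpx' (i + m)
            _ = y (-i) := by congr 1; ring
            _ = y i := (hpal i).symm
        have hdvd : d ∣ (m + m).val := (perZ_iff _).mp hper2m
        have hdvd2 : d ∣ m.val + m.val := by
          rw [ZMod.val_add] at hdvd
          exact (Nat.dvd_mod_iff hdN).mp hdvd
        obtain ⟨k, hk⟩ := hdvd2
        have hk' : m.val = e * k := by
          have h2 : m.val + m.val = (e * k) + (e * k) := by rw [hk, he]; ring
          omega
        rcases Nat.even_or_odd k with ⟨k', hk2⟩ | ⟨k', hk2⟩
        · left
          have hdvdm : d ∣ m.val := ⟨k', by rw [hk', he, hk2]; ring⟩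
          have hperm := (perZ_iff m).mpr hdvdm
          funext i; exact hperm i
        · right
          have hmval : m.val = e + d * k' := by rw [hk', hk2, he]; ring
          have hsub : d ∣ m.val - e := ⟨k', by omega⟩
          have hele : e ≤ m.val := by omega
          have hperme : ∀ i : ZMod N, y (i + (m - ((e : ℕ) : ZMod N))) = y i := by
            have h3 := (per_iff (m.val - e)).mpr hsub
            have hcasteq : ((m.val - e : ℕ) : ZMod N) = m - ((e : ℕ) : ZMod N) := by
              rw [Nat.cast_sub hele, (ZMod.natCast_val m).trans (ZMod.cast_id _ _)]
            rwa [hcasteq] at h3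
          funext i
          show y (i + m) = y (i + ((e : ℕ) : ZMod N))
          calc y (i + m) = y ((i + ((e : ℕ) : ZMod N)) + (m - ((e : ℕ) : ZMod N))) := by
                congr 1; ring
            _ = y (i + ((e : ℕ) : ZMod N)) := hperme _
      · rintro (rfl | rfl)
        · exact ⟨Or.inl ⟨0, by funext i; rw [add_zero]⟩, hpal⟩
        · constructor
          · exact Or.inl ⟨((e : ℕ) : ZMod N), rfl⟩
          · intro i
            show y (i + ((e : ℕ) : ZMod N)) = y (-i + ((e : ℕ) : ZMod N))
            have hde : ((d : ℕ) : ZMod N) = ((e : ℕ) : ZMod N) + ((e : ℕ) : ZMod N) := by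
              rw [he]; push_cast; ring
            calc y (i + ((e : ℕ) : ZMod N))
                = y ((i - ((e : ℕ) : ZMod N)) + ((d : ℕ) : ZMod N)) := by
                  congr 1; rw [hde]; ring
              _ = y (i - ((e : ℕ) : ZMod N)) := hdper _
              _ = y (-(i - ((e : ℕ) : ZMod N))) := hpal _
              _ = y (-i + ((e : ℕ) : ZMod N)) := by congr 1; ring
    rw [hSeq, Set.ncard_pair]
    intro hcontra
    have hpe : ∀ i : ZMod N, y (i + ((e : ℕ) : ZMod N)) = y i := by
      intro i; exact (congrFun hcontra i).symm
    have := Nat.le_of_dvd hepos ((per_iff e).mp hpe)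
    omega
  · -- d odd: contradiction with simplicity
    exfalso
    set a := a0 + 1 with ha_def
    have h1 : (-( (a : ℕ) : ZMod N) + ((d : ℕ) : ZMod N)) = ((a0 : ℕ) : ZMod N) := by
      have hd2 : (d : ℕ) = a0 + a := by omega
      rw [hd2]; push_cast; ring
    have h2 : y ((a : ℕ) : ZMod N) = y ((a0 : ℕ) : ZMod N) := by
      calc y ((a : ℕ) : ZMod N) = y (-((a : ℕ) : ZMod N)) := hpal _
        _ = y (-((a : ℕ) : ZMod N) + ((d : ℕ) : ZMod N)) := (hdper _).symm
        _ = y ((a0 : ℕ) : ZMod N) := by rw [h1]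
    have h3 : ((a : ℕ) : ZMod N) = ((a0 : ℕ) : ZMod N) + 1 := by
      rw [ha_def]; push_cast; ring
    exact hne ((a0 : ℕ) : ZMod N) (h2.symm.trans (by rw [h3]))

theorem stmt6 {V : Type*} (Γ : SimpleGraph V) (N : ℕ) (hN : 3 ≤ N)
    (w : ZMod N → V)
    (hadj : ∀ i, Γ.Adj (w i) (w (i + 1))) :
    Set.ncard {x : ZMod N → V |
        ((∃ m : ZMod N, x = fun i => w (i + m)) ∨ (∃ m : ZMod N, x = fun i => w (m - i))) ∧
        (∀ i, x i = x (-i))} = 0 ∨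
    Set.ncard {x : ZMod N → V |
        ((∃ m : ZMod N, x = fun i => w (i + m)) ∨ (∃ m : ZMod N, x = fun i => w (m - i))) ∧
        (∀ i, x i = x (-i))} = 2 := by
  set S := {x : ZMod N → V |
      ((∃ m : ZMod N, x = fun i => w (i + m)) ∨ (∃ m : ZMod N, x = fun i => w (m - i))) ∧
      (∀ i, x i = x (-i))} with hS_def
  rcases S.eq_empty_or_nonempty with hS | ⟨y, hy⟩
  · left; rw [hS]; exact Set.ncard_empty _
  · right
    have hnw : ∀ i, w i ≠ w (i + 1) := fun i => (hadj i).ne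
    obtain ⟨horb, hpaly⟩ := hy
    have hne_y : ∀ i, y i ≠ y (i + 1) := by
      rcases horb with ⟨a, rfl⟩ | ⟨a, rfl⟩
      · intro i
        show w (i + a) ≠ w (i + 1 + a)
        have := hnw (i + a)
        rwa [show (i + a) + 1 = i + 1 + a by ring] at this
      · intro i
        show w (a - i) ≠ w (a - (i + 1))
        have := hnw (a - (i + 1))
        rw [show (a - (i + 1)) + 1 = a - i by ring] at this
        exact this.symm
    have horbiff : ∀ x : ZMod N → V,
        ((∃ m : ZMod N, x = fun i => w (i + m)) ∨ (∃ m : ZMod N, x = fun i => w (m - i))) ↔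
        ((∃ m : ZMod N, x = fun i => y (i + m)) ∨ (∃ m : ZMod N, x = fun i => y (m - i))) := by
      intro x
      rcases horb with ⟨a, rfl⟩ | ⟨a, rfl⟩
      · constructor
        · rintro (⟨b, rfl⟩ | ⟨b, rfl⟩)
          · exact Or.inl ⟨b - a, by funext i; show w (i + b) = w (i + (b - a) + a); congr 1; ring⟩
          · exact Or.inr ⟨b - a, by funext i; show w (b - i) = w ((b - a) - i + a); congr 1; ring⟩
        · rintro (⟨c, rfl⟩ | ⟨c, rfl⟩)
          · exact Or.inl ⟨c + a, by funext i; show w (i + c + a) = w (i + (c + a)); congr 1; ring⟩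
          · exact Or.inr ⟨c + a, by funext i; show w (c - i + a) = w ((c + a) - i); congr 1; ring⟩
      · constructor
        · rintro (⟨b, rfl⟩ | ⟨b, rfl⟩)
          · exact Or.inr ⟨a - b, by funext i; show w (i + b) = w (a - ((a - b) - i)); congr 1; ring⟩
          · exact Or.inl ⟨a - b, by funext i; show w (b - i) = w (a - (i + (a - b))); congr 1; ring⟩
        · rintro (⟨c, rfl⟩ | ⟨c, rfl⟩)
          · exact Or.inr ⟨a - c, by funext i; show w (a - (i + c)) = w ((a - c) - i); congr 1; ring⟩
          · exact Or.inl ⟨a - c, by funext i; show w (a - (c - i)) = w (i + (a - c)); congr 1; ring⟩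
    have hSeq : S = {x : ZMod N → V |
        ((∃ m : ZMod N, x = fun i => y (i + m)) ∨ (∃ m : ZMod N, x = fun i => y (m - i))) ∧
        (∀ i, x i = x (-i))} := by
      ext x
      rw [hS_def]
      simp only [Set.mem_setOf_eq]
      rw [horbiff x]
    rw [hSeq]
    exact key_ncard hN y hne_y hpaly
end

section
/- Let N ≥ 3 and let w be a simple closed N-walk in a graph Γ. Then there exists a subset U of the dihedral orbit of w such that the orbit is the disjoint union of U and Ψ(U), where Ψ sends a palindromic walk x to its rotation by ψ(x) = N/2^{κ(x)} steps and a non-palindromic walk to its reversal. -/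
/-- Rotation of a closed `N`-walk by `m` steps. -/
def rotW {V : Type*} {N : ℕ} (w : ZMod N → V) (m : ZMod N) : ZMod N → V :=
  fun i => w (i + m)

/-- Reversal of a closed `N`-walk. -/
def revW {V : Type*} {N : ℕ} (w : ZMod N → V) : ZMod N → V :=
  fun i => w (-i)

/-- A closed walk is palindromic if it is equal to its reversal. -/
def palW {V : Type*} {N : ℕ} (w : ZMod N → V) : Prop :=
  ∀ i, w i = w (-i)

/-- The dihedral orbit of a closed `N`-walk: all rotations and reversed rotations. -/
def orbitW {V : Type*} {N : ℕ} (w : ZMod N → V) : Set (ZMod N → V) :=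
  {x | ∃ m : ZMod N, x = rotW w m ∨ x = revW (rotW w m)}

/-- `κ(w)`: the least `k` such that rotating `w` by `N/2^k` steps does not fix `w`. -/
noncomputable def kappaW {V : Type*} {N : ℕ} (w : ZMod N → V) : ℕ :=
  sInf {k : ℕ | rotW w ((N / 2 ^ k : ℕ) : ZMod N) ≠ w}

/-- `ψ(w) = N / 2^{κ(w)}`. -/
noncomputable def psiW {V : Type*} {N : ℕ} (w : ZMod N → V) : ℕ :=
  N / 2 ^ kappaW w

open Classical in
/-- The map `Ψ`: rotate a palindromic walk by `ψ(w)` steps, reverse a non-palindromic one. -/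
noncomputable def PsiW {V : Type*} {N : ℕ} (w : ZMod N → V) : ZMod N → V :=
  if palW w then rotW w ((psiW w : ℕ) : ZMod N) else revW w

section aux
variable {V : Type*} {N : ℕ} (x : ZMod N → V)

lemma rot_rot (a b : ZMod N) : rotW (rotW x a) b = rotW x (a + b) := by
  funext i; simp only [rotW]; ring_nf

lemma rot_zero : rotW x (0 : ZMod N) = x := by
  funext i; simp [rotW]

lemma rev_rev : revW (revW x) = x := by
  funext i; simp [revW]

lemma rev_rot (a : ZMod N) : revW (rotW x a) = rotW (revW x) (-a) := by
  funext i; simp only [rotW, revW]; ring_nf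

lemma pal_iff_rev_eq : palW x ↔ revW x = x := by
  constructor
  · intro h; funext i; exact (h i).symm
  · intro h i; exact (congrFun h i).symm

lemma rot_inj {y : ZMod N → V} (a : ZMod N) (h : rotW x a = rotW y a) : x = y := by
  have h2 := congrArg (fun t => rotW t (-a)) h
  simpa [rot_rot, rot_zero] using h2

lemma pal_rev_iff : palW (revW x) ↔ palW x := by
  rw [pal_iff_rev_eq, rev_rev, pal_iff_rev_eq, eq_comm]

lemma pal_rot_iff (hx : palW x) (m : ZMod N) :
    palW (rotW x m) ↔ rotW x (m + m) = x := by
  have hrev : revW x = x := (pal_iff_rev_eq x).mp hx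
  rw [pal_iff_rev_eq, rev_rot, hrev]
  constructor
  · intro h
    have h2 := congrArg (fun t => rotW t m) h
    have h3 : x = rotW x (m + m) := by simpa [rot_rot, rot_zero] using h2
    exact h3.symm
  · intro h
    apply rot_inj _ m
    rw [rot_rot, rot_rot, neg_add_cancel, rot_zero, h]

lemma kappa_rot (m : ZMod N) : kappaW (rotW x m) = kappaW x := by
  unfold kappaW
  congr 1
  ext k
  simp only [Set.mem_setOf_eq, rot_rot, not_iff_not]
  constructor
  · intro h
    apply rot_inj _ m
    rw [rot_rot]
    rw [add_comm m _] at h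
    exact h
  · intro h
    rw [show m + ((N / 2 ^ k : ℕ) : ZMod N) = ((N / 2 ^ k : ℕ) : ZMod N) + m from add_comm _ _,
      ← rot_rot, h]

lemma psi_rot (m : ZMod N) : psiW (rotW x m) = psiW x := by
  unfold psiW; rw [kappa_rot]

lemma psi_spec (hN : 3 ≤ N) (hstep : x 1 ≠ x 0) :
    rotW x ((psiW x : ℕ) : ZMod N) ≠ x := by
  set k := Nat.log 2 N with hk
  have hle : 2 ^ k ≤ N := Nat.pow_log_le_self 2 (by omega)
  have hlt : N < 2 ^ (k + 1) := Nat.lt_pow_succ_log_self (by norm_num) N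
  rw [pow_succ] at hlt
  have hdiv : N / 2 ^ k = 1 := by
    have hpos : 0 < 2 ^ k := Nat.pow_pos (by norm_num)
    have ha : 1 ≤ N / 2 ^ k := (Nat.le_div_iff_mul_le hpos).mpr (by omega)
    have hb : N / 2 ^ k < 2 := (Nat.div_lt_iff_lt_mul hpos).mpr (by omega)
    omega
  have hmem : k ∈ {j : ℕ | rotW x ((N / 2 ^ j : ℕ) : ZMod N) ≠ x} := by
    simp only [Set.mem_setOf_eq, hdiv, Nat.cast_one]
    intro h
    apply hstep
    have := congrFun h 0
    simpa [rotW] using this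
  have := Nat.sInf_mem ⟨k, hmem⟩
  exact this

lemma Psi_three : PsiW (PsiW (PsiW x)) = PsiW x := by
  by_cases hp : palW x
  · set c : ZMod N := ((psiW x : ℕ) : ZMod N) with hc
    have hΨ : PsiW x = rotW x c := by simp [PsiW, hp, hc]
    have hrevx : revW x = x := (pal_iff_rev_eq x).mp hp
    by_cases hpy : palW (rotW x c)
    · have h2 : rotW x (c + c) = x := (pal_rot_iff x hp c).mp hpy
      have hΨy : PsiW (rotW x c) = x := by
        simp only [PsiW, if_pos hpy]
        rw [psi_rot, ← hc, rot_rot, h2]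
      rw [hΨ, hΨy, hΨ]
    · have hΨy : PsiW (rotW x c) = rotW x (-c) := by
        simp only [PsiW, if_neg hpy]
        rw [rev_rot, hrevx]
      have hpz : ¬ palW (rotW x (-c)) := by
        intro h
        apply hpy
        apply (pal_rot_iff x hp c).mpr
        have h2 : rotW x (-c + -c) = x := (pal_rot_iff x hp (-c)).mp h
        have h3 := congrArg (fun t => rotW t (c + c)) h2
        simp only [rot_rot] at h3
        have h4 : -c + -c + (c + c) = 0 := by ring
        rw [h4, rot_zero] at h3
        exact h3.symm
      have hΨz : PsiW (rotW x (-c)) = rotW x c := by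
        simp only [PsiW, if_neg hpz]
        rw [rev_rot, hrevx, neg_neg]
      rw [hΨ, hΨy, hΨz]
  · have hΨ : PsiW x = revW x := by simp [PsiW, hp]
    have hpr : ¬ palW (revW x) := fun h => hp ((pal_rev_iff x).mp h)
    have hΨr : PsiW (revW x) = x := by
      simp only [PsiW, if_neg hpr, rev_rev]
    rw [hΨ, hΨr, hΨ]

end aux

theorem stmt7 {V : Type*} (Γ : SimpleGraph V) (N : ℕ) (hN : 3 ≤ N)
    (w : ZMod N → V)
    (hadj : ∀ i, Γ.Adj (w i) (w (i + 1))) :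
    ∃ U : Set (ZMod N → V),
      U ⊆ orbitW w ∧ orbitW w = U ∪ (PsiW '' U) ∧ Disjoint U (PsiW '' U) := by
  classical
  set O : Set (ZMod N → V) := orbitW w with hO
  set f : (ZMod N → V) → (ZMod N → V) := PsiW with hf
  -- every orbit element has a "nonconstant step" at 0
  have hstep : ∀ x ∈ O, x 1 ≠ x 0 := by
    rintro x ⟨m, hm | hm⟩ h
    · subst hm
      simp only [rotW, zero_add] at h
      exact (hadj m).ne' (by rwa [add_comm] at h)
    · subst hm
      simp only [revW, rotW, neg_zero, zero_add, neg_neg] at h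
      have h2 : (-1 + m) + 1 = m := by ring
      exact (hadj (-1 + m)).ne (by rw [h2]; exact h)
  -- Psi maps the orbit to itself
  have hclosed : ∀ x ∈ O, f x ∈ O := by
    rintro x ⟨m, hm | hm⟩
    · subst hm
      by_cases hp : palW (rotW w m)
      · simp only [hf, PsiW, if_pos hp]
        exact ⟨m + _, Or.inl (by rw [rot_rot])⟩
      · simp only [hf, PsiW, if_neg hp]
        exact ⟨m, Or.inr rfl⟩
    · subst hm
      by_cases hp : palW (revW (rotW w m))
      · simp only [hf, PsiW, if_pos hp]
        refine ⟨m - ((psiW (revW (rotW w m)) : ℕ) : ZMod N), Or.inr ?_⟩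
        rw [rev_rot, rot_rot, rev_rot]
        ring_nf
      · simp only [hf, PsiW, if_neg hp]
        exact ⟨m, Or.inl (by rw [rev_rev])⟩
  -- Psi has no fixed point on the orbit
  have hne : ∀ x ∈ O, f x ≠ x := by
    intro x hx
    by_cases hp : palW x
    · simp only [hf, PsiW, if_pos hp]
      exact psi_spec x hN (hstep x hx)
    · simp only [hf, PsiW, if_neg hp]
      intro h
      exact hp ((pal_iff_rev_eq x).mpr h)
  have h3 : ∀ x, f (f (f x)) = f x := fun x => Psi_three x
  -- abstract construction
  letI : LinearOrder (ZMod N → V) := linearOrderOfSTO WellOrderingRel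
  set C : Set (ZMod N → V) := f '' O with hC
  set A : Set (ZMod N → V) := f '' (O \ C) with hA
  have hCO : C ⊆ O := by rintro c ⟨y, hy, rfl⟩; exact hclosed y hy
  have hfC : ∀ c ∈ C, f (f c) = c := by rintro c ⟨y, hy, rfl⟩; exact h3 y
  have hfCC : ∀ c ∈ C, f c ∈ C := fun c hc => ⟨c, hCO hc, rfl⟩
  set T : Set (ZMod N → V) := {c | c ∈ C ∧ c ∉ A ∧ (f c ∈ A ∨ c < f c)} with hT
  refine ⟨(O \ C) ∪ T, ?_, ?_, ?_⟩
  · rintro x (hx | hx)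
    · exact hx.1
    · exact hCO hx.1
  · apply Set.Subset.antisymm
    · intro x hxO
      by_cases hxC : x ∈ C
      · by_cases hxA : x ∈ A
        · obtain ⟨y, hy, rfl⟩ := hxA
          exact Or.inr ⟨y, Or.inl hy, rfl⟩
        · by_cases hfA : f x ∈ A
          · exact Or.inl (Or.inr ⟨hxC, hxA, Or.inl hfA⟩)
          · rcases lt_trichotomy x (f x) with hlt | heq | hgt
            · exact Or.inl (Or.inr ⟨hxC, hxA, Or.inr hlt⟩)
            · exact absurd heq.symm (hne x hxO)
            · refine Or.inr ⟨f x, Or.inr ⟨hfCC x hxC, hfA, ?_⟩, hfC x hxC⟩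
              rw [hfC x hxC]
              exact Or.inr hgt
      · exact Or.inl (Or.inl ⟨hxO, hxC⟩)
    · rintro x (hx | ⟨u, hu, rfl⟩)
      · rcases hx with hx | hx
        · exact hx.1
        · exact hCO hx.1
      · rcases hu with hu | hu
        · exact hCO ⟨u, hu.1, rfl⟩
        · exact hCO (hfCC u hu.1)
  · rw [Set.disjoint_left]
    rintro x (hx | hx) ⟨u, hu, rfl⟩
    · rcases hu with hu | hu
      · exact hx.2 ⟨u, hu.1, rfl⟩
      · exact hx.2 (hfCC u hu.1)
    · -- x ∈ T and x = f u
      rcases hu with hu | hu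
      · exact hx.2.1 ⟨u, hu, rfl⟩
      · -- u ∈ T
        have hffu : f (f u) = u := hfC u hu.1
        rcases hx.2.2 with hA1 | hlt1
        · rw [hffu] at hA1
          exact hu.2.1 hA1
        · rw [hffu] at hlt1
          rcases hu.2.2 with hA2 | hlt2
          · exact hx.2.1 hA2
          · exact absurd hlt2 (lt_asymm hlt1)
end

section
/- Let n be odd, q > 2, ζ a primitive q-th root of unity, H an n×n Hermitian matrix with entries in the group of q-th roots of unity, and A = (J − H)/(1 − ζ), where J is the all-ones matrix. Then det(A) belongs to the ideal (1−ζ)ℤ[ζ]. -/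
open Finset

private lemma geom_aux {R : Type*} [CommRing R] (x : R) (r : ℕ) :
    (1 - x) ∣ (1 - x ^ r) :=
  ⟨∑ i ∈ range r, x ^ i, by linear_combination geom_sum_mul x r⟩

private lemma geom_sub_nat {R : Type*} [CommRing R] (x : R) (r : ℕ) :
    (1 - x) ∣ ((∑ i ∈ range r, x ^ i) - (r : R)) := by
  induction r with
  | zero => simp
  | succ m ih =>
      have h : (∑ i ∈ range (m + 1), x ^ i) - ((m + 1 : ℕ) : R)
          = ((∑ i ∈ range m, x ^ i) - (m : R)) - (1 - x ^ m) := by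
        rw [sum_range_succ]; push_cast; ring
      rw [h]
      exact dvd_sub ih (geom_aux x m)

private lemma det_skew_odd {R : Type*} [CommRing R] {n : ℕ} (hn : Odd n)
    (M : Matrix (Fin n) (Fin n) R) (hskew : ∀ i j, M j i = -M i j)
    (hdiag : ∀ i, M i i = 0) : M.det = 0 := by
  classical
  set P : Matrix (Fin n) (Fin n) (MvPolynomial (Fin n × Fin n) ℤ) :=
    Matrix.of fun i j => if i < j then MvPolynomial.X (i, j)
      else if j < i then -MvPolynomial.X (j, i) else 0 with hP
  have hPt : P.transpose = -P := by
    ext i j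
    rcases lt_trichotomy i j with h | h | h
    · simp [hP, h, h.not_gt]
    · simp [hP, h]
    · simp [hP, h, h.not_gt]
  have hdet : P.det = 0 := by
    have h1 : P.det = -P.det := by
      conv_lhs => rw [← Matrix.det_transpose, hPt]
      rw [Matrix.det_neg, Fintype.card_fin, hn.neg_one_pow]
      ring
    have h2 : (2 : MvPolynomial (Fin n × Fin n) ℤ) * P.det = 0 := by
      linear_combination h1
    rcases mul_eq_zero.mp h2 with h | h
    · exact absurd h two_ne_zero
    · exact h
  let f : MvPolynomial (Fin n × Fin n) ℤ →+* R :=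
    (MvPolynomial.eval₂Hom (Int.castRingHom R) fun p => M p.1 p.2)
  have hM : M = P.map f := by
    ext i j
    rcases lt_trichotomy i j with h | h | h
    · simp [hP, h, f, Matrix.map_apply]
    · subst h; simp [hP, hdiag, f, Matrix.map_apply]
    · simp [hP, h, h.not_gt, f, Matrix.map_apply, hskew i j]
  rw [hM]
  have h := f.map_det P
  rw [hdet, map_zero] at h
  exact h.symm

private lemma dvd_det_skew {R : Type*} [CommRing R] {n : ℕ} (hn : Odd n) (d : R)
    (M : Matrix (Fin n) (Fin n) R) (hskew : ∀ i j, d ∣ M i j + M j i)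
    (hdiag : ∀ i, d ∣ M i i) : d ∣ M.det := by
  set I := Ideal.span ({d} : Set R) with hI
  set π := Ideal.Quotient.mk I with hπ
  have hmem : ∀ x : R, d ∣ x → π x = 0 := fun x hx =>
    Ideal.Quotient.eq_zero_iff_mem.mpr (Ideal.mem_span_singleton.mpr hx)
  have h0 : (M.map π).det = 0 := by
    apply det_skew_odd hn
    · intro i j
      have h := hmem _ (hskew i j)
      rw [map_add] at h
      simp only [Matrix.map_apply]
      linear_combination h
    · intro i
      simp only [Matrix.map_apply]
      exact hmem _ (hdiag i)
  rw [← Ideal.mem_span_singleton, ← hI, ← Ideal.Quotient.eq_zero_iff_mem, ← hπ]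
  have h := π.map_det M
  rw [h]
  exact h0

theorem stmt9 (n q : ℕ) (hn : Odd n) (hq : 2 < q) (ζ : ℂ) (hζ : IsPrimitiveRoot ζ q)
    (H : Matrix (Fin n) (Fin n) ℂ) (hherm : H.IsHermitian)
    (hent : ∀ i j, ∃ k : ℤ, H i j = ζ ^ k)
    (A : Matrix (Fin n) (Fin n) ℂ)
    (hA : A = (1 - ζ)⁻¹ • ((Matrix.of fun _ _ => (1 : ℂ)) - H)) :
    ∃ y ∈ Algebra.adjoin ℤ ({ζ} : Set ℂ), A.det = (1 - ζ) * y := by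
  classical
  have hq0 : 0 < q := by omega
  have hζq : ζ ^ q = 1 := hζ.pow_eq_one
  have hζ0 : ζ ≠ 0 := by
    intro h; rw [h] at hζq; simp [zero_pow hq0.ne'] at hζq
  have hζ1 : ζ ≠ 1 := hζ.ne_one (by omega)
  have hsub : (1 : ℂ) - ζ ≠ 0 := sub_ne_zero.mpr (Ne.symm hζ1)
  -- choose natural exponents
  have hexp : ∀ i j, ∃ r : ℕ, r < q ∧ H i j = ζ ^ r := by
    intro i j
    obtain ⟨k, hk⟩ := hent i j
    have hnn : 0 ≤ k % q := Int.emod_nonneg k (by exact_mod_cast hq0.ne')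
    have hlt : k % q < q := Int.emod_lt_of_pos k (by exact_mod_cast hq0)
    refine ⟨(k % q).toNat, by omega, ?_⟩
    have h1 : ζ ^ k = (ζ ^ (q : ℤ)) ^ (k / q) * ζ ^ (k % q) := by
      rw [← zpow_mul, ← zpow_add₀ hζ0]
      congr 1
      exact (Int.mul_ediv_add_emod k q).symm
    have h2 : ζ ^ (q : ℤ) = 1 := by rw [zpow_natCast]; exact hζq
    have h3 : ζ ^ (k % ↑q) = ζ ^ (((k % ↑q).toNat : ℤ)) := by
      rw [Int.toNat_of_nonneg hnn]
    rw [hk, h1, h2, one_zpow, one_mul, h3, zpow_natCast]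
  let e : Fin n → Fin n → ℕ := fun i j => (hexp i j).choose
  have he_lt : ∀ i j, e i j < q := fun i j => (hexp i j).choose_spec.1
  have he_val : ∀ i j, H i j = ζ ^ e i j := fun i j => (hexp i j).choose_spec.2
  -- value of A
  have hAval : ∀ i j, A i j = ∑ t ∈ range (e i j), ζ ^ t := by
    intro i j
    rw [hA]
    simp only [Matrix.smul_apply, Matrix.sub_apply, Matrix.of_apply, smul_eq_mul]
    rw [he_val i j]
    field_simp
    linear_combination geom_sum_mul ζ (e i j)
  -- conjugation relation : q ∣ e i j + e j i
  have habs : ‖ζ‖ = 1 := Complex.norm_eq_one_of_pow_eq_one hζq hq0.ne'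
  have hstar : (starRingEnd ℂ) ζ = ζ ^ (q - 1) := by
    rw [← Complex.inv_eq_conj habs]
    have : ζ * ζ ^ (q - 1) = 1 := by
      rw [← pow_succ']
      have : q - 1 + 1 = q := by omega
      rw [this]; exact hζq
    field_simp
    linear_combination -this
  have hsum_dvd : ∀ i j, q ∣ e i j + e j i := by
    intro i j
    have h1 : H j i = (starRingEnd ℂ) (H i j) := by
      conv_lhs => rw [← hherm]
      simp [Matrix.conjTranspose_apply]
    rw [he_val i j, he_val j i, map_pow, hstar, ← pow_mul] at h1
    have h2 : ζ ^ (e i j + e j i) = ζ ^ (e i j + (q - 1) * e i j) := by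
      rw [pow_add, pow_add, h1]
    have h3 : ζ ^ (e i j + (q - 1) * e i j) = 1 := by
      have hq' : e i j + (q - 1) * e i j = q * e i j := by
        have : 1 + (q - 1) = q := by omega
        calc e i j + (q - 1) * e i j = (1 + (q - 1)) * e i j := by ring
        _ = q * e i j := by rw [this]
      rw [hq', pow_mul, hζq, one_pow]
    rw [h3] at h2
    exact (hζ.pow_eq_one_iff_dvd _).mp h2
  -- set up the subalgebra
  set S := Algebra.adjoin ℤ ({ζ} : Set ℂ) with hS
  have hζS : ζ ∈ S := Algebra.self_mem_adjoin_singleton ℤ ζ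
  set z : S := ⟨ζ, hζS⟩ with hz
  have hzcoe : (z : ℂ) = ζ := rfl
  -- the matrix over S
  set B : Matrix (Fin n) (Fin n) S :=
    Matrix.of (fun i j => ∑ t ∈ range (e i j), z ^ t) with hB
  have hBA : ∀ i j, ((B i j : S) : ℂ) = A i j := by
    intro i j
    rw [hAval i j]
    simp only [hB, Matrix.of_apply]
    push_cast
    rfl
  -- basic divisibilities in S
  have hq_dvd : (1 - z) ∣ (q : S) := by
    have hgs : (∑ t ∈ range q, z ^ t) = 0 := by
      apply Subtype.coe_injective
      push_cast
      exact hζ.geom_sum_eq_zero (by omega)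
    have := geom_sub_nat z q
    rw [hgs, zero_sub] at this
    exact (dvd_neg).mp this
  have hskewS : ∀ i j, (1 - z) ∣ (B i j + B j i) := by
    intro i j
    have h1 : B i j + B j i
        = ((∑ t ∈ range (e i j), z ^ t) - (e i j : S))
          + ((∑ t ∈ range (e j i), z ^ t) - (e j i : S))
          + ((e i j + e j i : ℕ) : S) := by
      simp only [hB, Matrix.of_apply]
      push_cast
      ring
    rw [h1]
    refine dvd_add (dvd_add (geom_sub_nat z _) (geom_sub_nat z _)) ?_
    obtain ⟨c, hc⟩ := hsum_dvd i j
    rw [hc]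
    push_cast
    exact Dvd.dvd.mul_right hq_dvd _
  have hdiagS : ∀ i, (1 - z) ∣ B i i := by
    intro i
    obtain ⟨c, hc⟩ := hsum_dvd i i
    have h2e : 2 * e i i = q * c := by omega
    have hlt := he_lt i i
    have hc01 : c = 0 ∨ c = 1 := by
      have h1 : q * c < q * 2 := by
        rw [← h2e, Nat.mul_comm q 2]
        omega
      have := Nat.lt_of_mul_lt_mul_left h1
      omega
    rcases hc01 with hc' | hc'
    · -- e i i = 0, entry is 0
      rw [hc', Nat.mul_zero] at h2e
      have he0 : e i i = 0 := by omega
      simp [hB, he0]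
    · -- 2 * e i i = q
      rw [hc', Nat.mul_one] at h2e
      have heq : 2 * e i i = q := h2e
      have hepos : 2 ≤ e i i := by omega
      -- reduce to (1 - z) ∣ (e i i : S)
      have key : (1 - z) ∣ ((e i i : ℕ) : S) := by
        rcases Nat.even_or_odd (e i i) with he | he
        · -- even case: (1-z) ∣ 2 and 2 ∣ e
          have hm1 : ζ ^ e i i = -1 := by
            have hsq : (ζ ^ e i i) ^ 2 = 1 := by
              rw [← pow_mul, mul_comm, heq]; exact hζq
            have hne : ζ ^ e i i ≠ 1 := by
              intro h
              have := (hζ.pow_eq_one_iff_dvd _).mp h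
              have := Nat.le_of_dvd (by omega) this
              omega
            have : (ζ ^ e i i - 1) * (ζ ^ e i i + 1) = 0 := by
              linear_combination hsq
            rcases mul_eq_zero.mp this with h | h
            · exact absurd (by linear_combination h) hne
            · linear_combination h
          have h2S : (1 - z ^ e i i : S) = ((2 : ℕ) : S) := by
            apply Subtype.coe_injective
            push_cast
            rw [hm1]
            norm_num
            exact (map_ofNat S.val 2).symm
          have hd2 : (1 - z) ∣ ((2 : ℕ) : S) := h2S ▸ geom_aux z (e i i)
          obtain ⟨d, hd⟩ := he
          have hcast : ((e i i : ℕ) : S) = ((2 : ℕ) : S) * ((d : ℕ) : S) := by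
            rw [hd]; push_cast; ring
          rw [hcast]
          exact (hd2.mul_right _)
        · -- odd case: use ζ² primitive (e i i)-th root
          have hprim2 : IsPrimitiveRoot (ζ ^ 2) (e i i) :=
            hζ.pow hq0 (by omega)
          have hgs : (∑ t ∈ range (e i i), (z ^ 2) ^ t) = 0 := by
            apply Subtype.coe_injective
            push_cast
            exact hprim2.geom_sum_eq_zero (by omega)
          have h1 := geom_sub_nat (z ^ 2) (e i i)
          rw [hgs, zero_sub, dvd_neg] at h1
          exact dvd_trans (geom_aux z 2) h1
      have h3 : B i i = ((∑ t ∈ range (e i i), z ^ t) - (e i i : S))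
          + ((e i i : ℕ) : S) := by
        simp only [hB, Matrix.of_apply]
        push_cast
        ring
      rw [h3]
      exact dvd_add (geom_sub_nat z _) key
  have hdvd_det : (1 - z) ∣ B.det := dvd_det_skew hn (1 - z) B hskewS hdiagS
  obtain ⟨y, hy⟩ := hdvd_det
  refine ⟨(y : ℂ), y.2, ?_⟩
  have hAdet : A.det = ((B.det : S) : ℂ) := by
    have hABmap : A = B.map (S.val.toRingHom) := by
      ext i j
      rw [Matrix.map_apply]
      exact (hBA i j).symm
    rw [hABmap]
    exact (S.val.toRingHom.map_det B).symm ▸ rfl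
  rw [hAdet, hy]
  push_cast
  ring
end

section
/- Let q > 2, ζ a primitive q-th root of unity, and H an n×n Hermitian matrix with all entries q-th roots of unity. Then det(H) ∈ (1−ζ)^{n−1}ℤ[ζ]; moreover if n is even then det(H) ∈ (1−ζ)^n ℤ[ζ]. -/
open Finset Matrix

lemma aux_det_congr {R : Type*} [CommRing R] {m : Type*} [Fintype m] [DecidableEq m]
    (I : Ideal R) (A B : Matrix m m R)
    (h : ∀ i j, A i j - B i j ∈ I) : A.det - B.det ∈ I := by
  rw [← Ideal.Quotient.eq]
  rw [RingHom.map_det, RingHom.map_det]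
  congr 1
  ext i j
  simpa [Ideal.Quotient.eq] using h i j

lemma aux_skew_det {m : ℕ} (hm : Odd m) (T : Matrix (Fin m) (Fin m) ℤ)
    (h : Tᵀ = -T) : T.det = 0 := by
  have h1 : T.det = (-T).det := by rw [← h, Matrix.det_transpose]
  rw [Matrix.det_neg, Fintype.card_fin, hm.neg_one_pow] at h1
  linarith

theorem stmt10 (n q : ℕ) (hq : 2 < q) (ζ : ℂ) (hζ : IsPrimitiveRoot ζ q)
    (H : Matrix (Fin n) (Fin n) ℂ) (hherm : H.IsHermitian)
    (hent : ∀ i j, ∃ k : ℤ, H i j = ζ ^ k) :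
    (∃ y ∈ Algebra.adjoin ℤ ({ζ} : Set ℂ), H.det = (1 - ζ) ^ (n - 1) * y) ∧
    (Even n → ∃ y ∈ Algebra.adjoin ℤ ({ζ} : Set ℂ), H.det = (1 - ζ) ^ n * y) := by
  have hq0 : 0 < q := by omega
  have hζ0 : ζ ≠ 0 := hζ.ne_zero hq0.ne'
  have hζq : ζ ^ q = 1 := hζ.pow_eq_one
  -- conjugation of powers
  have hmc : ζ * (starRingEnd ℂ) ζ = 1 := by
    rw [Complex.mul_conj]
    norm_cast
    rw [Complex.normSq_eq_norm_sq]
    have := hζ.norm'_eq_one hq0.ne'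
    rw [this]; norm_num
  have hconj : ∀ k : ℤ, (starRingEnd ℂ) (ζ ^ k) = ζ ^ (-k) := by
    intro k
    have h1 : (starRingEnd ℂ) ζ = ζ⁻¹ := by
      field_simp
      linear_combination hmc
    rw [map_zpow₀, h1, ← _root_.zpow_neg_one, ← _root_.zpow_mul, neg_one_mul]
  -- the subalgebra and basic elements
  set A := Algebra.adjoin ℤ ({ζ} : Set ℂ) with hA
  let z : A := ⟨ζ, Algebra.self_mem_adjoin_singleton ℤ ζ⟩
  have hzc : ((z : A) : ℂ) = ζ := rfl
  have hzq : z ^ q = 1 := by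
    apply Subtype.ext
    push_cast
    exact hζq
  let u : Aˣ := ⟨z, z ^ (q - 1),
    by rw [← pow_succ', Nat.sub_add_cancel (by omega : 1 ≤ q), hzq],
    by rw [← pow_succ, Nat.sub_add_cancel (by omega : 1 ≤ q), hzq]⟩
  have huq : ∀ s : ℤ, (q : ℤ) ∣ s → u ^ s = 1 := by
    rintro s ⟨t, rfl⟩
    have h1 : u ^ (q : ℤ) = 1 := by
      rw [zpow_natCast]
      apply Units.ext
      show ((u ^ q : Aˣ) : A) = 1
      rw [Units.val_pow_eq_pow_val]
      exact hzq
    rw [_root_.zpow_mul, h1, _root_.one_zpow]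
  have hred : ∀ s : ℤ, u ^ s = u ^ ((s % q).toNat) := by
    intro s
    conv_lhs => rw [← Int.mul_ediv_add_emod s q]
    rw [_root_.zpow_add, huq _ (dvd_mul_right _ _), one_mul, ← zpow_natCast,
      Int.toNat_of_nonneg (Int.emod_nonneg s (by exact_mod_cast hq0.ne'))]
  have hcz : ∀ s : ℤ, ζ ^ s = ζ ^ ((s % q).toNat) := by
    intro s
    conv_lhs => rw [← Int.mul_ediv_add_emod s q]
    rw [_root_.zpow_add₀ hζ0, _root_.zpow_mul, zpow_natCast, hζq, _root_.one_zpow, one_mul, ← zpow_natCast,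
      Int.toNat_of_nonneg (Int.emod_nonneg s (by exact_mod_cast hq0.ne'))]
  have hcu : ∀ s : ℤ, (((u ^ s : Aˣ) : A) : ℂ) = ζ ^ s := by
    intro s
    rw [hred s, hcz s]
    rw [Units.val_pow_eq_pow_val]
    push_cast
    rfl
  have hzmem : ∀ s : ℤ, ζ ^ s ∈ Algebra.adjoin ℤ ({ζ} : Set ℂ) := by
    intro s
    rw [← hcu s]
    exact ((u ^ s : Aˣ) : A).2
  -- exponents of the entries
  choose κ hκ using hent
  have hk1 : ∀ i j, (q : ℤ) ∣ κ i j + κ j i := by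
    intro i j
    rw [← hζ.zpow_eq_one_iff_dvd]
    have h1 : star (H j i) = H i j := hherm.apply i j
    rw [hκ j i, hκ i j] at h1
    have h2 : ζ ^ (-(κ j i)) = ζ ^ (κ i j) := by rw [← hconj]; exact h1
    rw [zpow_add₀ hζ0, ← h2, ← zpow_add₀ hζ0]
    simp
  -- the ideal (1 - ζ)
  set ω : A := 1 - z with hω
  set 𝔮 : Ideal A := Ideal.span {ω} with h𝔮
  have hgeomx : ∀ (x : A) (a : ℕ), (1 : A) - x ^ a = (∑ t ∈ range a, x ^ t) * (1 - x) := by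
    intro x a
    have h1 := geom_sum_mul x a
    linear_combination h1
  have hqmem : ((q : ℕ) : A) ∈ 𝔮 := by
    have hs : (∑ i ∈ range q, z ^ i) = 0 := by
      apply Subtype.coe_injective
      push_cast
      exact hζ.geom_sum_eq_zero (by omega)
    have h2 : ((q : ℕ) : A) = ∑ i ∈ range q, ((1 : A) - z ^ i) := by
      rw [Finset.sum_sub_distrib, hs, sub_zero, Finset.sum_const, card_range, nsmul_eq_mul,
        mul_one]
    rw [h2]
    exact Ideal.sum_mem _ fun i _ => Ideal.mem_span_singleton.mpr
      ⟨∑ t ∈ range i, z ^ t, by rw [hgeomx z i]; ring⟩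
  have hq2mem : q % 2 = 0 → ((q / 2 : ℕ) : A) ∈ 𝔮 := by
    intro hqe
    have h2 : IsPrimitiveRoot (ζ ^ 2) (q / 2) := hζ.pow hq0 (by omega)
    have hs : (∑ i ∈ range (q / 2), (z ^ 2) ^ i) = 0 := by
      apply Subtype.coe_injective
      push_cast
      exact h2.geom_sum_eq_zero (by omega)
    have h3 : ((q / 2 : ℕ) : A) = ∑ i ∈ range (q / 2), ((1 : A) - (z ^ 2) ^ i) := by
      rw [Finset.sum_sub_distrib, hs, sub_zero, Finset.sum_const, card_range, nsmul_eq_mul,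
        mul_one]
    rw [h3]
    refine Ideal.sum_mem _ fun i _ => Ideal.mem_span_singleton.mpr ?_
    refine ⟨(∑ t ∈ range i, (z ^ 2) ^ t) * (1 + z), ?_⟩
    rw [hgeomx (z ^ 2) i]
    ring
  have hqdvdmem : ∀ d : ℤ, (q : ℤ) ∣ d → ((d : ℤ) : A) ∈ 𝔮 := by
    rintro d ⟨t, rfl⟩
    push_cast
    exact Ideal.mul_mem_right _ _ hqmem
  -- the g function
  set g : ℤ → A := fun s => -∑ t ∈ range ((s % q).toNat), z ^ t with hg
  have hg1 : ∀ s : ℤ, ((u ^ s : Aˣ) : A) = 1 + ω * g s := by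
    intro s
    rw [hred s, Units.val_pow_eq_pow_val]
    show z ^ _ = _
    have h1 := hgeomx z ((s % q).toNat)
    simp only [hg, hω]
    linear_combination -h1
  have hg2 : ∀ s : ℤ, g s + (s : A) ∈ 𝔮 := by
    intro s
    set a : ℕ := (s % q).toNat with ha
    have h1 : g s + (a : A) ∈ 𝔮 := by
      have he : g s + (a : A) = ∑ t ∈ range a, ((1 : A) - z ^ t) := by
        rw [Finset.sum_sub_distrib, Finset.sum_const, card_range, nsmul_eq_mul, mul_one]
        simp only [hg]
        ring
      rw [he]
      exact Ideal.sum_mem _ fun t _ => Ideal.mem_span_singleton.mpr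
        ⟨∑ r ∈ range t, z ^ r, by rw [hgeomx z t]; ring⟩
    have h2 : (s : A) - (a : A) ∈ 𝔮 := by
      have hz2 : s - (a : ℤ) = (q : ℤ) * (s / q) := by
        have := Int.mul_ediv_add_emod s q
        have h4 : (a : ℤ) = s % q := Int.toNat_of_nonneg (Int.emod_nonneg s (by exact_mod_cast hq0.ne'))
        omega
      have : (s : A) - (a : A) = (((s - (a : ℤ)) : ℤ) : A) := by push_cast; ring
      rw [this, hz2]
      push_cast
      exact Ideal.mul_mem_right _ _ hqmem
    have h3 : g s + (s : A) = (g s + (a : A)) + ((s : A) - (a : A)) := by ring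
    rw [h3]
    exact Ideal.add_mem _ h1 h2
  -- dispatch the case n = 0
  rcases n with _ | m
  · exact ⟨⟨1, Subalgebra.one_mem _, by simp⟩, fun _ => ⟨1, Subalgebra.one_mem _, by simp⟩⟩
  -- exponents after normalization
  set e : Fin (m + 1) → Fin (m + 1) → ℤ := fun i j => κ 0 0 + κ 0 i + κ i j - κ 0 j with he
  have he_sum : ∀ i j, (q : ℤ) ∣ e i j + e j i := by
    intro i j
    have h1 := hk1 0 0
    have h2 := hk1 i j
    have h3 : e i j + e j i = (κ 0 0 + κ 0 0) + (κ i j + κ j i) := by simp only [he]; ring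
    rw [h3]
    exact dvd_add h1 h2
  set L : Matrix (Fin (m + 1)) (Fin (m + 1)) A :=
    Matrix.of fun i j => ((u ^ e i j : Aˣ) : A) with hL
  have hL0 : ∀ j, L 0 j = 1 := by
    intro j
    have hd : (q : ℤ) ∣ e 0 j := by
      have h1 : e 0 j = κ 0 0 + κ 0 0 := by simp only [he]; ring
      rw [h1]; exact hk1 0 0
    show ((u ^ e 0 j : Aˣ) : A) = 1
    rw [huq (e 0 j) hd, Units.val_one]
  have hLc0 : ∀ i, L i 0 = 1 := by
    intro i
    have hd : (q : ℤ) ∣ e i 0 := by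
      have h1 : e i 0 = κ 0 i + κ i 0 := by simp only [he]; ring
      rw [h1]; exact hk1 0 i
    show ((u ^ e i 0 : Aˣ) : A) = 1
    rw [huq (e i 0) hd, Units.val_one]
  -- row reduction
  set C : Matrix (Fin (m + 1)) (Fin (m + 1)) A :=
    Matrix.of fun i j => if i = 0 then L 0 j else L i j - L 0 j with hC
  have hdetLC : L.det = C.det := by
    apply Matrix.det_eq_of_forall_row_eq_smul_add_const
      (c := fun i => if i = 0 then 0 else 1) (k := 0) (by simp)
    intro i j
    by_cases h : i = 0 <;> simp [hC, h]
  have hsubdet : C.det = (C.submatrix Fin.succ Fin.succ).det := by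
    rw [Matrix.det_succ_column_zero]
    rw [Finset.sum_eq_single 0]
    · simp [hC, hL0, Fin.succAbove_zero]
    · intro i _ hi
      have : C i 0 = 0 := by
        simp only [hC, Matrix.of_apply, if_neg hi]
        rw [hLc0, hL0, sub_self]
      rw [this]
      ring
    · intro habs
      exact absurd (Finset.mem_univ _) habs
  set G : Matrix (Fin m) (Fin m) A := Matrix.of fun i j => g (e i.succ j.succ) with hG
  have hCsub : C.submatrix Fin.succ Fin.succ = Matrix.of fun i j => ω * G i j := by
    apply Matrix.ext
    intro i j
    show C i.succ j.succ = ω * G i j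
    simp only [hC, Matrix.of_apply, if_neg (Fin.succ_ne_zero i)]
    rw [hL0]
    show ((u ^ e i.succ j.succ : Aˣ) : A) - 1 = ω * G i j
    rw [hg1]
    show 1 + ω * g (e i.succ j.succ) - 1 = ω * (Matrix.of fun i j => g (e i.succ j.succ)) i j
    rw [Matrix.of_apply]
    ring
  have hLdet : L.det = ω ^ m * G.det := by
    rw [hdetLC, hsubdet, hCsub, Matrix.det_mul_column, Finset.prod_const, Finset.card_univ,
      Fintype.card_fin]
  -- complex side: relate det L with det H
  set ψ : A →+* ℂ := (Algebra.adjoin ℤ ({ζ} : Set ℂ)).val.toRingHom with hψ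
  have hψval : ∀ x : A, ψ x = (x : ℂ) := fun x => rfl
  set M2 : Matrix (Fin (m + 1)) (Fin (m + 1)) ℂ :=
    Matrix.of fun i j => ζ ^ (-(κ 0 j)) * H i j with hM2
  set M1 : Matrix (Fin (m + 1)) (Fin (m + 1)) ℂ :=
    Matrix.of fun i j => ζ ^ (κ 0 i) * M2 i j with hM1
  have hLψ : ψ.mapMatrix L = (ζ ^ (κ 0 0 : ℤ)) • M1 := by
    ext i j
    simp only [RingHom.mapMatrix_apply, Matrix.map_apply, hL, Matrix.of_apply, hψval,
      Matrix.smul_apply, hM1, hM2, smul_eq_mul]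
    rw [hcu, hκ i j]
    rw [show e i j = κ 0 0 + (κ 0 i + (-(κ 0 j) + κ i j)) by simp only [he]; ring]
    rw [zpow_add₀ hζ0, zpow_add₀ hζ0, zpow_add₀ hζ0]
  have hdetM1 : M1.det = (∏ i, ζ ^ (κ 0 i)) * M2.det := Matrix.det_mul_column _ _
  have hdetM2 : M2.det = (∏ j, ζ ^ (-(κ 0 j))) * H.det := Matrix.det_mul_row _ _
  have hprod : (∏ i, ζ ^ (κ 0 i)) * (∏ j, ζ ^ (-(κ 0 j))) = 1 := by
    rw [← Finset.prod_mul_distrib]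
    have h1 : ∀ i ∈ Finset.univ, ζ ^ (κ 0 i) * ζ ^ (-(κ 0 i)) = (1 : ℂ) := by
      intro i _
      rw [← _root_.zpow_add₀ hζ0]
      simp
    rw [Finset.prod_congr rfl h1, Finset.prod_const_one]
  have hLdetψ : ψ L.det = ζ ^ ((κ 0 0) * (m + 1) : ℤ) * H.det := by
    rw [RingHom.map_det, hLψ, Matrix.det_smul, Fintype.card_fin, hdetM1, hdetM2]
    rw [show (ζ ^ ((κ 0 0) : ℤ)) ^ (m + 1) = ζ ^ ((κ 0 0) * (m + 1) : ℤ) by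
      rw [← zpow_natCast (ζ ^ ((κ 0 0) : ℤ)), ← _root_.zpow_mul]; push_cast; ring_nf]
    rw [show ζ ^ ((κ 0 0) * (m+1) : ℤ) * ((∏ i, ζ ^ (κ 0 i)) * ((∏ j, ζ ^ (-(κ 0 j))) * H.det))
      = ζ ^ ((κ 0 0) * (m+1) : ℤ) * H.det * ((∏ i, ζ ^ (κ 0 i)) * (∏ j, ζ ^ (-(κ 0 j)))) by ring,
      hprod, mul_one]
  have hHL : H.det = ζ ^ (-((κ 0 0) * (m + 1)) : ℤ) * ((L.det : A) : ℂ) := by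
    rw [← hψval, hLdetψ, ← mul_assoc, ← zpow_add₀ hζ0]
    simp
  -- part 1
  have hωc : ((ω : A) : ℂ) = 1 - ζ := by
    rw [hω]
    push_cast
    rfl
  constructor
  · refine ⟨ζ ^ (-((κ 0 0) * (m + 1)) : ℤ) * ((G.det : A) : ℂ),
      Subalgebra.mul_mem _ (hzmem _) G.det.2, ?_⟩
    rw [hHL, hLdet]
    push_cast [hωc]
    ring
  -- part 2
  · intro heven
    have hmodd : Odd m := by
      rw [Nat.odd_iff]
      have := Nat.even_iff.mp heven
      omega
    -- diagonal entries
    have hediag : ∀ d : ℤ, (q : ℤ) ∣ d + d → ((d : ℤ) : A) ∈ 𝔮 := by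
      intro d hd
      obtain ⟨t, ht⟩ := hd
      rcases Nat.even_or_odd q with hqe | hqo
      · have hq2 : (q : ℤ) = 2 * ((q / 2 : ℕ) : ℤ) := by
          have := Nat.even_iff.mp hqe
          push_cast
          omega
        have hdt : d = ((q / 2 : ℕ) : ℤ) * t := by
          have : d + d = 2 * (((q / 2 : ℕ) : ℤ) * t) := by rw [ht, hq2]; ring
          omega
        rw [hdt]
        push_cast
        exact Ideal.mul_mem_right _ _ (hq2mem (Nat.even_iff.mp hqe))
      · obtain ⟨r, hr⟩ := hqo
        have hrz : (q : ℤ) = 2 * (r : ℤ) + 1 := by exact_mod_cast hr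
        have h1 : (q : ℤ) ∣ ((q : ℤ) + 1) * d := ⟨((r : ℤ) + 1) * t, by linear_combination ((r : ℤ) + 1) * ht + d * hrz⟩
        have h2 : (q : ℤ) ∣ d := by
          have h3 : (q : ℤ) ∣ ((q : ℤ) + 1) * d - (q : ℤ) * d := dvd_sub h1 ⟨d, rfl⟩
          simpa [show ((q : ℤ) + 1) * d - (q : ℤ) * d = d by ring] using h3
        exact hqdvdmem d h2
    -- the skew integer matrix
    set T : Matrix (Fin m) (Fin m) ℤ := Matrix.of fun i j =>
      if (i : ℕ) < (j : ℕ) then -(e i.succ j.succ)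
      else if (j : ℕ) < (i : ℕ) then e j.succ i.succ else 0 with hT
    have hTskew : Tᵀ = -T := by
      ext i j
      simp only [Matrix.transpose_apply, Matrix.neg_apply, hT, Matrix.of_apply]
      rcases lt_trichotomy (i : ℕ) (j : ℕ) with h | h | h
      · rw [if_neg (by omega), if_pos h, if_pos h]
        ring
      · rw [if_neg (by omega), if_neg (by omega), if_neg (by omega), if_neg (by omega)]
        ring
      · rw [if_pos h, if_neg (by omega), if_pos h]
    have hTdet : T.det = 0 := aux_skew_det hmodd T hTskew
    have hcong : ∀ i j, G i j - ((T i j : ℤ) : A) ∈ 𝔮 := by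
      intro i j
      simp only [hG, Matrix.of_apply, hT]
      rcases lt_trichotomy (i : ℕ) (j : ℕ) with h | h | h
      · rw [if_pos h]
        push_cast
        rw [show g (e i.succ j.succ) - -((e i.succ j.succ : ℤ) : A)
          = g (e i.succ j.succ) + ((e i.succ j.succ : ℤ) : A) by ring]
        exact hg2 _
      · have hij : i = j := Fin.ext h
        subst hij
        rw [if_neg (by omega), if_neg (by omega)]
        push_cast
        rw [show g (e i.succ i.succ) - 0
          = (g (e i.succ i.succ) + ((e i.succ i.succ : ℤ) : A)) - ((e i.succ i.succ : ℤ) : A)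
          by ring]
        exact Ideal.sub_mem _ (hg2 _) (hediag _ (he_sum i.succ i.succ))
      · rw [if_neg (by omega), if_pos h]
        rw [show g (e i.succ j.succ) - ((e j.succ i.succ : ℤ) : A)
          = (g (e i.succ j.succ) + ((e i.succ j.succ : ℤ) : A))
            - (((e i.succ j.succ + e j.succ i.succ : ℤ) : A)) by push_cast; ring]
        exact Ideal.sub_mem _ (hg2 _) (hqdvdmem _ (he_sum i.succ j.succ))
    have hdetG : G.det ∈ 𝔮 := by
      have h1 : G.det - ((Int.castRingHom A).mapMatrix T).det ∈ 𝔮 := by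
        apply aux_det_congr
        intro i j
        simpa using hcong i j
      rw [← RingHom.map_det, hTdet] at h1
      simpa using h1
    obtain ⟨y2, hy2⟩ := Ideal.mem_span_singleton.mp hdetG
    refine ⟨ζ ^ (-((κ 0 0) * (m + 1)) : ℤ) * ((y2 : A) : ℂ),
      Subalgebra.mul_mem _ (hzmem _) y2.2, ?_⟩
    rw [hHL, hLdet, hy2]
    push_cast [hωc]
    ring
end

section
/- Let q > 2 be a prime power, ζ a primitive q-th root of unity, ρ = (1−ζ)(1−ζ^{-1}), and H an n×n Hermitian matrix with all entries q-th roots of unity. Then det(H) ∈ ρ^{⌊n/2⌋}ℤ[ζ+ζ^{-1}]. -/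
open Polynomial

/-- Real elements of `ℤ[ζ]` lie in `ℤ[ζ+ζ⁻¹]`. -/
lemma aux_real_descent {q : ℕ} (hq2 : 2 < q) {ζ : ℂ} (hζ : IsPrimitiveRoot ζ q)
    {y : ℂ} (hy : y ∈ Algebra.adjoin ℤ ({ζ} : Set ℂ))
    (hr : (starRingEnd ℂ) y = y) :
    y ∈ Algebra.adjoin ℤ ({ζ + ζ⁻¹} : Set ℂ) := by
  have hq0 : q ≠ 0 := by omega
  have hζ0 : ζ ≠ 0 := hζ.ne_zero hq0
  have hnorm : ‖ζ‖ = 1 := Complex.norm_eq_one_of_pow_eq_one hζ.pow_eq_one hq0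
  have hconj : (starRingEnd ℂ) ζ = ζ⁻¹ := (RCLike.inv_eq_conj hnorm).symm
  set R := Algebra.adjoin ℤ ({ζ + ζ⁻¹} : Set ℂ) with hR
  have hτ : ζ + ζ⁻¹ ∈ R := Algebra.subset_adjoin rfl
  have key : ∀ s ∈ Algebra.adjoin ℤ ({ζ} : Set ℂ),
      ∃ r₁ r₂ : ℂ, r₁ ∈ R ∧ r₂ ∈ R ∧ s = r₁ + r₂ * ζ := by
    intro s hs
    induction hs using Algebra.adjoin_induction with
    | mem x hx =>
        rcases hx with rfl
        exact ⟨0, 1, zero_mem R, one_mem R, by ring⟩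
    | algebraMap r =>
        exact ⟨algebraMap ℤ ℂ r, 0, Subalgebra.algebraMap_mem R r, zero_mem R, by ring⟩
    | add a b ha hb iha ihb =>
        obtain ⟨r₁, r₂, h1, h2, rfl⟩ := iha
        obtain ⟨r₃, r₄, h3, h4, rfl⟩ := ihb
        exact ⟨r₁ + r₃, r₂ + r₄, add_mem h1 h3, add_mem h2 h4, by ring⟩
    | mul a b ha hb iha ihb =>
        obtain ⟨r₁, r₂, h1, h2, rfl⟩ := iha
        obtain ⟨r₃, r₄, h3, h4, rfl⟩ := ihb
        refine ⟨r₁ * r₃ - r₂ * r₄, r₁ * r₄ + r₂ * r₃ + r₂ * r₄ * (ζ + ζ⁻¹),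
          sub_mem (mul_mem h1 h3) (mul_mem h2 h4),
          add_mem (add_mem (mul_mem h1 h4) (mul_mem h2 h3)) (mul_mem (mul_mem h2 h4) hτ), ?_⟩
        have hz2 : ζ * ζ = (ζ + ζ⁻¹) * ζ - 1 := by field_simp; ring
        linear_combination (r₂ * r₄) * hz2
  obtain ⟨r₁, r₂, h1, h2, hy'⟩ := key y hy
  have hconjR : ∀ r ∈ R, (starRingEnd ℂ) r = r := by
    intro r hrR
    induction hrR using Algebra.adjoin_induction with
    | mem x hx =>
        rcases hx with rfl
        rw [map_add, hconj, map_inv₀, hconj, inv_inv, add_comm]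
    | algebraMap r => simp
    | add a b ha hb iha ihb => rw [map_add, iha, ihb]
    | mul a b ha hb iha ihb => rw [map_mul, iha, ihb]
  have hζne : ζ ≠ ζ⁻¹ := by
    intro h
    have h2 : ζ ^ 2 = 1 := by
      rw [sq]; nth_rewrite 2 [h]; exact mul_inv_cancel₀ hζ0
    have := Nat.le_of_dvd (by norm_num) (hζ.dvd_of_pow_eq_one 2 h2)
    omega
  have hr2 : r₂ = 0 := by
    have hcy : (starRingEnd ℂ) y = r₁ + r₂ * ζ⁻¹ := by
      rw [hy', map_add, map_mul, hconj, hconjR r₁ h1, hconjR r₂ h2]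
    have : r₁ + r₂ * ζ = r₁ + r₂ * ζ⁻¹ := by rw [← hy', ← hcy, hr]
    have h0 : r₂ * (ζ - ζ⁻¹) = 0 := by linear_combination this
    rcases mul_eq_zero.mp h0 with h | h
    · exact h
    · exact absurd (sub_eq_zero.mp h) hζne
  rw [hy', hr2, zero_mul, add_zero]; exact h1

/-- determinant of a matrix of `q`-th roots of unity is divisible by `(1-ζ)^(n-1)`. -/
lemma aux_det_dvd {n q : ℕ} (hq0 : q ≠ 0) {ζ : ℂ} (hζq : ζ ^ q = 1) (hζ0 : ζ ≠ 0)
    (H : Matrix (Fin n) (Fin n) ℂ) (hent : ∀ i j, ∃ k : ℤ, H i j = ζ ^ k) :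
    ∃ a : ℂ, a ∈ Algebra.adjoin ℤ ({ζ} : Set ℂ) ∧ H.det = (1 - ζ) ^ (n - 1) * a := by
  -- entries are natural powers of ζ
  have hnat : ∀ i j, ∃ k : ℕ, H i j = ζ ^ k := by
    intro i j
    obtain ⟨k, hk⟩ := hent i j
    refine ⟨(k % (q : ℤ)).toNat, ?_⟩
    have hq0' : (q : ℤ) ≠ 0 := by exact_mod_cast hq0
    have hnn : (0 : ℤ) ≤ k % (q : ℤ) := Int.emod_nonneg k hq0'
    have h1 : (((k % (q : ℤ)).toNat : ℤ)) = k % (q : ℤ) := Int.toNat_of_nonneg hnn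
    rw [hk, ← zpow_natCast, h1]
    have heq : k = (q : ℤ) * (k / (q : ℤ)) + k % (q : ℤ) := (Int.mul_ediv_add_emod k q).symm
    have hzq : ζ ^ ((q : ℤ) * (k / (q : ℤ))) = 1 := by
      rw [zpow_mul, zpow_natCast, hζq, one_zpow]
    calc ζ ^ k = ζ ^ ((q : ℤ) * (k / (q : ℤ)) + k % (q : ℤ)) := by rw [← heq]
      _ = ζ ^ ((q : ℤ) * (k / (q : ℤ))) * ζ ^ (k % (q : ℤ)) := zpow_add₀ hζ0 _ _
      _ = ζ ^ (k % (q : ℤ)) := by rw [hzq, one_mul]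
  set S := Algebra.adjoin ℤ ({ζ} : Set ℂ) with hS
  have hζS : ζ ∈ S := Algebra.subset_adjoin rfl
  set z : S := ⟨ζ, hζS⟩ with hz
  have hmem : ∀ i j, H i j ∈ S := by
    intro i j
    obtain ⟨k, hk⟩ := hnat i j
    rw [hk]; exact pow_mem hζS k
  set M : Matrix (Fin n) (Fin n) S := fun i j => ⟨H i j, hmem i j⟩ with hM
  have hentS : ∀ i j, ∃ k : ℕ, M i j = z ^ k := by
    intro i j
    obtain ⟨k, hk⟩ := hnat i j
    exact ⟨k, Subtype.ext (by simp [hM, hz, hk])⟩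
  have hmap : (M.map (algebraMap S ℂ)) = H := by
    ext i j; rfl
  have hdetmap : H.det = algebraMap S ℂ M.det := by
    rw [RingHom.map_det, RingHom.mapMatrix_apply, hmap]
  have hdvd : (1 - z) ^ (n - 1) ∣ M.det := by
    rcases n with _ | n₀
    · simp [Matrix.det_isEmpty]
    · set B : Matrix (Fin (n₀ + 1)) (Fin (n₀ + 1)) S :=
        fun i j => if i = 0 then M 0 j else M i j - M 0 j with hB
      have hdet : M.det = B.det := by
        apply Matrix.det_eq_of_forall_row_eq_smul_add_const
          (fun i => if i = 0 then 0 else 1) 0 (if_pos rfl)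
        intro i j
        by_cases hi : i = 0
        · simp [hB, hi]
        · simp only [hB, hi, if_neg hi, if_pos rfl, ite_false]
          ring
      rw [hdet, Matrix.det_apply]
      apply Finset.dvd_sum
      intro σ _
      have hprod : (1 - z) ^ n₀ ∣ ∏ i, B (σ i) i := by
        have hd : ∀ i : Fin (n₀ + 1), i ≠ σ.symm 0 → (1 - z) ∣ B (σ i) i := by
          intro i hi
          have hσi : σ i ≠ 0 := by
            intro h
            apply hi
            have := congrArg σ.symm h
            simpa using this
          obtain ⟨k₁, hk₁⟩ := hentS (σ i) i
          obtain ⟨k₂, hk₂⟩ := hentS 0 i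
          have hBi : B (σ i) i = z ^ k₁ - z ^ k₂ := by
            simp only [hB, if_neg hσi, hk₁, hk₂]
          rw [hBi, show z ^ k₁ - z ^ k₂ = (1 - z ^ k₂) - (1 - z ^ k₁) by ring]
          exact dvd_sub (one_sub_dvd_one_sub_pow z k₂) (one_sub_dvd_one_sub_pow z k₁)
        have hcard : (Finset.univ.erase (σ.symm 0)).card = n₀ := by
          rw [Finset.card_erase_of_mem (Finset.mem_univ _), Finset.card_univ, Fintype.card_fin]
          omega
        calc (1 - z) ^ n₀ = ∏ _i ∈ Finset.univ.erase (σ.symm 0), (1 - z) := by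
              rw [Finset.prod_const, hcard]
          _ ∣ ∏ i ∈ Finset.univ.erase (σ.symm 0), B (σ i) i :=
              Finset.prod_dvd_prod_of_dvd _ _
                (fun i hi => hd i (Finset.ne_of_mem_erase hi))
          _ ∣ ∏ i, B (σ i) i := by
              rw [← Finset.mul_prod_erase _ _ (Finset.mem_univ (σ.symm 0))]
              exact dvd_mul_left _ _
      have : Equiv.Perm.sign σ • ∏ i, B (σ i) i
          = ((Equiv.Perm.sign σ : ℤ) : S) * ∏ i, B (σ i) i := by
        rw [Units.smul_def, zsmul_eq_mul]
      rw [this]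
      exact Dvd.dvd.mul_left hprod _
  obtain ⟨a, ha⟩ := hdvd
  refine ⟨(a : ℂ), a.2, ?_⟩
  rw [hdetmap, ha]
  push_cast
  rfl

lemma aux_even {p f q n : ℕ} (hp : p.Prime) (hq : q = p ^ f) (hq2 : 2 < q)
    {ζ : ℂ} (hζ : IsPrimitiveRoot ζ q) (hn : Even n) (hn0 : n ≠ 0) {P : ℤ[X]}
    (hrel : aeval ζ P + ζ ^ ((q - 1) * (n - 1)) * aeval ζ (P.comp (X ^ (q - 1))) = 0) :
    ∃ c : ℤ[X], aeval ζ P = (1 - ζ) * aeval ζ c := by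
  haveI := Fact.mk hp
  have hf : f ≠ 0 := by rintro rfl; simp at hq; omega
  have hq0 : 0 < q := by omega
  have hint : IsIntegral ℤ ζ := hζ.isIntegral hq0
  set e := (q - 1) * (n - 1) with he
  set F : ℤ[X] := P + X ^ e * P.comp (X ^ (q - 1)) with hF
  have hF0 : aeval ζ F = 0 := by
    rw [hF]
    simp only [map_add, map_mul, map_pow, aeval_X]
    exact hrel
  have hdvd : cyclotomic q ℤ ∣ F := by
    rw [cyclotomic_eq_minpoly hζ hq0]
    exact minpoly.isIntegrallyClosed_dvd hint hF0
  obtain ⟨g, hg⟩ := hdvd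
  have hcyc1 : (cyclotomic q ℤ).eval 1 = p := by
    rw [hq, show f = (f - 1) + 1 by omega]
    exact eval_one_cyclotomic_prime_pow _
  have h1 : 2 * P.eval 1 = (p : ℤ) * g.eval 1 := by
    have := congrArg (Polynomial.eval (1 : ℤ)) hg
    simp only [hF, eval_add, eval_mul, eval_pow, eval_X, eval_comp, one_pow, hcyc1] at this
    linarith [this]
  have hpP : (p : ℤ) ∣ P.eval 1 := by
    by_cases hp2 : p = 2
    · -- derivative argument
      subst hp2
      have hfge2 : 2 ≤ f := by
        rcases Nat.lt_or_ge f 2 with h | h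
        · interval_cases f <;> omega
        · exact h
      have hqe : Even q := by
        rw [hq]
        exact (Nat.even_pow.mpr ⟨even_iff_two_dvd.mpr dvd_rfl, hf⟩)
      -- cyclotomic (2^f) ℤ = 1 + X^(2^(f-1))
      have hcy : cyclotomic q ℤ = 1 + X ^ (2 ^ (f - 1)) := by
        rw [hq, show f = (f - 1) + 1 by omega, cyclotomic_prime_pow_eq_geom_sum hp]
        rw [Finset.sum_range_succ, Finset.sum_range_one]
        simp [pow_one]
      have hder := congrArg (fun h : ℤ[X] => Polynomial.eval (1 : ℤ) (derivative h)) hg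
      simp only [hF, derivative_add, derivative_mul, derivative_pow, derivative_comp,
        derivative_X_pow, derivative_X, eval_add, eval_mul, eval_pow, eval_X, eval_comp,
        one_pow, eval_natCast, mul_one, one_mul, eval_one, eval_C] at hder
      -- compute derivative of cyclotomic at 1
      have hcyder : (derivative (cyclotomic q ℤ)).eval 1 = 2 ^ (f - 1) := by
        rw [hcy]
        simp [derivative_X_pow]
      rw [hcyder, hcyc1] at hder
      push_cast at h1 hder
      have hcast : ((q - 1 : ℕ) : ℤ) = (q : ℤ) - 1 := by
        have : 1 ≤ q := by omega
        push_cast [this]; ring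
      rw [hcast] at hder
      have hPg : eval 1 P = eval 1 g := by linarith
      have h2f : (2 : ℤ) ∣ 2 ^ (f - 1) := dvd_pow_self 2 (by omega)
      have hq2' : (2 : ℤ) ∣ (q : ℤ) := by
        rcases hqe with ⟨r, hr⟩
        exact ⟨(r : ℤ), by exact_mod_cast congrArg (Nat.cast : ℕ → ℤ) (by omega : q = 2 * r)⟩
      have hkey : (e : ℤ) * eval 1 P
          = 2 ^ (f - 1) * eval 1 g + 2 * eval 1 (derivative g) - (q : ℤ) * eval 1 (derivative P) := by
        have hq1 : (0:ℤ) ≤ (q:ℤ) := by positivity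
        nlinarith [hder]
      have hdvdeP : (2 : ℤ) ∣ (e : ℤ) * eval 1 P := by
        rw [hkey]
        exact dvd_sub (dvd_add (h2f.mul_right _) (dvd_mul_right 2 _)) (hq2'.mul_right _)
      rcases (Int.Prime.dvd_mul' Nat.prime_two hdvdeP) with h | h
      · exfalso
        have he2 : 2 ∣ e := by exact_mod_cast h
        rw [he] at he2
        rcases (Nat.Prime.dvd_mul Nat.prime_two).mp he2 with h' | h'
        · rcases hqe with ⟨r, hr⟩; omega
        · rcases hn with ⟨s, hs⟩; omega
      · exact_mod_cast h
    · have hdvd2 : (p : ℤ) ∣ 2 * P.eval 1 := ⟨g.eval 1, h1⟩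
      have hpZ : Prime (p : ℤ) := Nat.prime_iff_prime_int.mp hp
      rcases hpZ.dvd_mul.mp hdvd2 with h | h
      · exfalso
        have h2 : p ∣ 2 := by exact_mod_cast h
        exact hp2 ((Nat.prime_dvd_prime_iff_eq hp Nat.prime_two).mp h2)
      · exact h
  -- construct the quotient polynomial
  obtain ⟨t, ht⟩ := hpP
  obtain ⟨Q, hQ⟩ : (X - C (1 : ℤ)) ∣ (P - C (P.eval 1)) :=
    dvd_iff_isRoot.mpr (by simp [IsRoot])
  obtain ⟨W, hW⟩ : (X - C (1 : ℤ)) ∣ (cyclotomic q ℤ - C ((cyclotomic q ℤ).eval 1)) :=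
    dvd_iff_isRoot.mpr (by simp [IsRoot])
  have hcyc0 : aeval ζ (cyclotomic q ℤ) = 0 := by
    rw [cyclotomic_eq_minpoly hζ hq0]
    exact minpoly.aeval ℤ ζ
  have hpW : (p : ℂ) = (1 - ζ) * aeval ζ W := by
    have h2 := congrArg (aeval ζ) hW
    simp only [map_sub, map_mul, aeval_X, aeval_C, hcyc0, hcyc1, algebraMap_int_eq,
      eq_intCast, map_intCast, map_one, map_natCast] at h2
    linear_combination -h2
  refine ⟨C t * W - Q, ?_⟩
  have hQ' := congrArg (aeval ζ) hQ
  simp only [map_sub, map_mul, aeval_X, aeval_C, algebraMap_int_eq, eq_intCast, map_intCast, map_one, map_natCast] at hQ'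
  have ht' : ((P.eval 1 : ℤ) : ℂ) = (p : ℂ) * (t : ℂ) := by
    exact_mod_cast congrArg (Int.cast : ℤ → ℂ) ht
  simp only [map_sub, map_mul, aeval_C, aeval_X, algebraMap_int_eq, eq_intCast, map_intCast, map_one, map_natCast]
  push_cast at ht' hQ' ⊢
  linear_combination hQ' + (t : ℂ) * hpW + ht'

/-- final assembly: `x` real, `x = (1-ζ)^(2m) c` with `c ∈ ℤ[ζ]` gives the result. -/
lemma aux_final {q : ℕ} (hq2 : 2 < q) {ζ : ℂ} (hζ : IsPrimitiveRoot ζ q) (m : ℕ)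
    {x c : ℂ} (hc : c ∈ Algebra.adjoin ℤ ({ζ} : Set ℂ))
    (hx : x = (1 - ζ) ^ (2 * m) * c) (hreal : (starRingEnd ℂ) x = x) :
    ∃ y ∈ Algebra.adjoin ℤ ({ζ + ζ⁻¹} : Set ℂ),
      x = ((1 - ζ) * (1 - ζ⁻¹)) ^ m * y := by
  have hq0 : q ≠ 0 := by omega
  have hζ0 : ζ ≠ 0 := hζ.ne_zero hq0
  have hζ1 : ζ ≠ 1 := hζ.ne_one (by omega)
  have hl0 : (1 : ℂ) - ζ ≠ 0 := sub_ne_zero.mpr (Ne.symm hζ1)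
  have hnorm : ‖ζ‖ = 1 := Complex.norm_eq_one_of_pow_eq_one hζ.pow_eq_one hq0
  have hconj : (starRingEnd ℂ) ζ = ζ⁻¹ := (RCLike.inv_eq_conj hnorm).symm
  set y : ℂ := (-1) ^ m * ζ ^ m * c with hy
  have hfactor : ((1 - ζ) * (1 - ζ⁻¹)) * ((-1) * ζ) = (1 - ζ) ^ 2 := by
    field_simp
    ring
  have hρy : ((1 - ζ) * (1 - ζ⁻¹)) ^ m * y = x := by
    rw [hy, hx]
    calc ((1 - ζ) * (1 - ζ⁻¹)) ^ m * ((-1) ^ m * ζ ^ m * c)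
        = (((1 - ζ) * (1 - ζ⁻¹)) * ((-1) * ζ)) ^ m * c := by
          rw [mul_pow ((1 - ζ) * (1 - ζ⁻¹)) ((-1) * ζ), mul_pow (-1 : ℂ) ζ]; ring
      _ = (1 - ζ) ^ (2 * m) * c := by rw [hfactor, ← pow_mul]
  have hζmem : ζ ∈ Algebra.adjoin ℤ ({ζ} : Set ℂ) := Algebra.self_mem_adjoin_singleton ℤ ζ
  have hneg : (-1 : ℂ) ∈ Algebra.adjoin ℤ ({ζ} : Set ℂ) :=
    neg_mem (one_mem (Algebra.adjoin ℤ ({ζ} : Set ℂ)))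
  have hyS : y ∈ Algebra.adjoin ℤ ({ζ} : Set ℂ) := by
    rw [hy]
    exact mul_mem (mul_mem (pow_mem hneg m) (pow_mem hζmem m)) hc
  have hρ0 : ((1 - ζ) * (1 - ζ⁻¹)) ≠ 0 := by
    apply mul_ne_zero hl0
    rw [sub_ne_zero]
    intro h
    exact hζ1 (by rw [← inv_inv ζ, ← h, inv_one])
  have hρconj : (starRingEnd ℂ) ((1 - ζ) * (1 - ζ⁻¹)) = (1 - ζ) * (1 - ζ⁻¹) := by
    rw [map_mul, map_sub, map_sub, map_one, hconj, map_inv₀, hconj, inv_inv]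
    ring
  have hyreal : (starRingEnd ℂ) y = y := by
    have h1 := congrArg (starRingEnd ℂ) hρy
    rw [map_mul, map_pow, hρconj, hreal, ← hρy] at h1
    exact mul_left_cancel₀ (pow_ne_zero m hρ0) h1
  exact ⟨y, aux_real_descent hq2 hζ hyS hyreal, hρy.symm⟩

theorem stmt11 (n p f q : ℕ) (hp : p.Prime) (hq : q = p ^ f) (hq2 : 2 < q)
    (ζ : ℂ) (hζ : IsPrimitiveRoot ζ q)
    (H : Matrix (Fin n) (Fin n) ℂ) (hherm : H.IsHermitian)
    (hent : ∀ i j, ∃ k : ℤ, H i j = ζ ^ k) :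
    ∃ y ∈ Algebra.adjoin ℤ ({ζ + ζ⁻¹} : Set ℂ),
      H.det = ((1 - ζ) * (1 - ζ⁻¹)) ^ (n / 2) * y := by
  have hq0 : q ≠ 0 := by omega
  have hζ0 : ζ ≠ 0 := hζ.ne_zero hq0
  have hζ1 : ζ ≠ 1 := hζ.ne_one (by omega)
  have hl0 : (1 : ℂ) - ζ ≠ 0 := sub_ne_zero.mpr (Ne.symm hζ1)
  have hnorm : ‖ζ‖ = 1 := Complex.norm_eq_one_of_pow_eq_one hζ.pow_eq_one hq0
  have hconj : (starRingEnd ℂ) ζ = ζ⁻¹ := (RCLike.inv_eq_conj hnorm).symm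
  -- determinant is real
  have hreal : (starRingEnd ℂ) H.det = H.det := by
    have h1 : H.conjTranspose.det = star H.det := Matrix.det_conjTranspose H
    rw [hherm.eq] at h1
    rw [← starRingEnd_apply] at h1
    exact h1.symm
  -- determinant divisibility
  obtain ⟨a, haS, hdet⟩ := aux_det_dvd hq0 hζ.pow_eq_one hζ0 H hent
  obtain ⟨P, hP⟩ : ∃ P : ℤ[X], aeval ζ P = a := by
    rw [Algebra.adjoin_singleton_eq_range_aeval] at haS
    exact haS
  rcases Nat.even_or_odd n with hev | hodd
  · rcases eq_or_ne n 0 with rfl | hn0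
    · refine ⟨1, one_mem _, ?_⟩
      simp [Matrix.det_isEmpty]
    · -- even case : get extra factor of (1-ζ)
      -- conjugation relation
      have hinv : ζ⁻¹ = ζ ^ (q - 1) :=
        inv_eq_of_mul_eq_one_right (by
          rw [← pow_succ', show q - 1 + 1 = q by omega, hζ.pow_eq_one])
      -- conjugate of aeval
      have hconjaeval : (starRingEnd ℂ) (aeval ζ P) = aeval ζ (P.comp (X ^ (q - 1))) := by
        have h0 : aeval ((starRingEnd ℂ) ζ) P = (starRingEnd ℂ) (aeval ζ P) := by
          have h := Polynomial.aeval_algHom_apply ((starRingEnd ℂ).toIntAlgHom) ζ P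
          simpa [RingHom.toIntAlgHom_coe] using h
        rw [← h0, hconj, hinv, aeval_comp]
        simp
      have hconjl : (starRingEnd ℂ) (1 - ζ) = (-1) * ζ ^ (q - 1) * (1 - ζ) := by
        rw [map_sub, map_one, hconj, hinv]
        have hz : ζ ^ (q - 1) * ζ = 1 := by
          rw [← pow_succ, show q - 1 + 1 = q by omega, hζ.pow_eq_one]
        linear_combination -hz
      -- the relation
      have hodd' : Odd (n - 1) := by
        rcases hev with ⟨s, hs⟩
        exact ⟨s - 1, by omega⟩
      have hrel : aeval ζ P + ζ ^ ((q - 1) * (n - 1)) * aeval ζ (P.comp (X ^ (q - 1))) = 0 := by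
        have h1 := hreal
        rw [hdet, ← hP] at h1
        rw [map_mul, map_pow, hconjl, hconjaeval] at h1
        have h2 : ((-1 : ℂ) * ζ ^ (q - 1) * (1 - ζ)) ^ (n - 1)
            = (-1) * ζ ^ ((q - 1) * (n - 1)) * (1 - ζ) ^ (n - 1) := by
          rw [mul_pow, mul_pow, hodd'.neg_one_pow, ← pow_mul]
        rw [h2] at h1
        have h3 := mul_left_cancel₀ (pow_ne_zero (n - 1) hl0)
          (show (1 - ζ) ^ (n - 1) * ((-1) * ζ ^ ((q - 1) * (n - 1))
              * aeval ζ (P.comp (X ^ (q - 1))))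
            = (1 - ζ) ^ (n - 1) * aeval ζ P by linear_combination h1)
        linear_combination -h3
      obtain ⟨c, hcP⟩ := aux_even hp hq hq2 hζ hev hn0 hrel
      have h2m : n = 2 * (n / 2) := by rcases hev with ⟨s, hs⟩; omega
      have hcmem : aeval ζ c ∈ Algebra.adjoin ℤ ({ζ} : Set ℂ) := by
        rw [Algebra.adjoin_singleton_eq_range_aeval]
        exact ⟨c, rfl⟩
      refine aux_final hq2 hζ (n / 2) hcmem ?_ hreal
      rw [hdet, ← hP, hcP, ← mul_assoc, ← pow_succ,
        show n - 1 + 1 = 2 * (n / 2) by omega]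
  · -- odd case
    have h2m : n - 1 = 2 * (n / 2) := by rcases hodd with ⟨s, hs⟩; omega
    refine aux_final hq2 hζ (n / 2) haS ?_ hreal
    rw [← h2m]
    exact hdet
end

section
/- Let A be an n×n matrix over ℂ (or over ℤ[ζ]), ζ ≠ 1 a root of unity, and J the all-ones matrix. Write χ_{J−(1−ζ)A}(x) = Σ_{i=0}^n a_i x^{n-i} and χ_A(x) = Σ_{i=0}^n b_i x^{n-i}. Then for every j ∈ {0,…,n}: a_j = (ζ−1)^j ( b_j + (1−ζ)^{-1} Σ_{i=1}^j b_{j−i} · 𝟙ᵀ A^{i−1} 𝟙 ), where 𝟙 is the all-ones column vector. -/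
open Polynomial Matrix Finset

lemma poly_ext' {f g h : ℂ[X]} (hh : h ≠ 0)
    (H : ∀ x : ℂ, h.eval x ≠ 0 → f.eval x = g.eval x) : f = g := by
  have h0 : (f - g) * h = 0 := by
    apply Polynomial.funext
    intro r
    rcases eq_or_ne (h.eval r) 0 with h1 | h1
    · simp [h1]
    · simp [H r h1, sub_mul]
  rcases mul_eq_zero.mp h0 with h1 | h1
  · exact sub_eq_zero.mp h1
  · exact absurd h1 hh

lemma eval_charpoly' {n : ℕ} (M : Matrix (Fin n) (Fin n) ℂ) (x : ℂ) :
    (M.charpoly).eval x = (x • (1 : Matrix (Fin n) (Fin n) ℂ) - M).det := by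
  rw [Matrix.charpoly, ← Polynomial.coe_evalRingHom, RingHom.map_det]
  congr 1
  ext i j
  rcases eq_or_ne i j with h | h
  · subst h; simp [Matrix.one_apply]
  · simp [Matrix.charmatrix_apply_ne _ _ _ h, Matrix.one_apply, h]

lemma charpoly_smul' {n : ℕ} (A : Matrix (Fin n) (Fin n) ℂ) (d : ℂ) (hd : d ≠ 0) :
    (d • A).charpoly = scaleRoots A.charpoly d := by
  apply Polynomial.funext
  intro x
  have hx : x = d * (d⁻¹ * x) := by field_simp
  have h2 : (scaleRoots A.charpoly d).eval (d * (d⁻¹ * x))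
      = d ^ n * A.charpoly.eval (d⁻¹ * x) := by
    have := scaleRoots_eval₂_mul (RingHom.id ℂ) (d⁻¹ * x) d (p := A.charpoly)
    simpa [Polynomial.eval₂_id, Matrix.charpoly_natDegree_eq_dim] using this
  have hmat : x • (1 : Matrix (Fin n) (Fin n) ℂ) - d • A
      = d • ((d⁻¹ * x) • (1 : Matrix (Fin n) (Fin n) ℂ) - A) := by
    rw [smul_sub, smul_smul]
    field_simp
  calc ((d • A).charpoly).eval x = (x • (1 : Matrix (Fin n) (Fin n) ℂ) - d • A).det :=
        eval_charpoly' _ _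
    _ = d ^ n * ((d⁻¹ * x) • (1 : Matrix (Fin n) (Fin n) ℂ) - A).det := by
        rw [hmat, Matrix.det_smul]; simp
    _ = d ^ n * A.charpoly.eval (d⁻¹ * x) := by rw [eval_charpoly']
    _ = (scaleRoots A.charpoly d).eval x := by rw [← h2, ← hx]

lemma reindex_aux (n : ℕ) (f : ℕ → ℕ → ℂ) :
    ∑ m ∈ range (n+1), ∑ i ∈ range m, f m i
      = ∑ m ∈ range (n+1), ∑ l ∈ range (n-m), f (m+l+1) m := by
  rw [Finset.sum_sigma', Finset.sum_sigma']
  refine Finset.sum_nbij' (fun q => (⟨q.2, q.1 - 1 - q.2⟩ : Σ _ : ℕ, ℕ))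
    (fun q => (⟨q.1 + q.2 + 1, q.1⟩ : Σ _ : ℕ, ℕ)) ?_ ?_ ?_ ?_ ?_
  · rintro ⟨m, i⟩ hq
    simp only [Finset.mem_sigma, Finset.mem_range] at hq ⊢
    omega
  · rintro ⟨m, l⟩ hq
    simp only [Finset.mem_sigma, Finset.mem_range] at hq ⊢
    omega
  · rintro ⟨m, i⟩ hq
    simp only [Finset.mem_sigma, Finset.mem_range] at hq
    dsimp only
    rw [show i + (m - 1 - i) + 1 = m by omega]
  · rintro ⟨m, l⟩ hq
    simp only [Finset.mem_sigma, Finset.mem_range] at hq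
    dsimp only
    rw [show m + l + 1 - 1 - m = l by omega]
  · rintro ⟨m, i⟩ hq
    simp only [Finset.mem_sigma, Finset.mem_range] at hq
    dsimp only
    rw [show i + (m - 1 - i) + 1 = m by omega]

lemma entsum_sum {n : ℕ} {α : Type*} (s : Finset α) (f : α → Matrix (Fin n) (Fin n) ℂ) :
    ∑ a, ∑ b, (∑ q ∈ s, f q) a b = ∑ q ∈ s, ∑ a, ∑ b, f q a b := by
  simp only [Matrix.sum_apply]
  calc ∑ a, ∑ b, ∑ q ∈ s, f q a b = ∑ a, ∑ q ∈ s, ∑ b, f q a b :=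
        Finset.sum_congr rfl fun a _ => Finset.sum_comm
    _ = ∑ q ∈ s, ∑ a, ∑ b, f q a b := Finset.sum_comm

lemma main_aux_s12 (n : ℕ) (A : Matrix (Fin n) (Fin n) ℂ) (c : ℂ) (hc : c ≠ 0) :
    Matrix.charpoly ((Matrix.of fun _ _ => (1 : ℂ)) - c • A)
      = ∑ m ∈ range (n+1), C ((-c)^(n-m) * ((A.charpoly).coeff m
          + c⁻¹ * ∑ l ∈ range (n-m), (A.charpoly).coeff (m+l+1) * ∑ a, ∑ b, (A^l) a b)) * X^m := by
  have hc' : (-c : ℂ) ≠ 0 := neg_ne_zero.mpr hc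
  set s : ℕ → ℂ := fun l => ∑ a, ∑ b, (A ^ l) a b with hs
  set B : Matrix (Fin n) (Fin n) ℂ := (-c) • A with hB
  set p := B.charpoly with hp
  have hpm : p.Monic := Matrix.charpoly_monic B
  have hpdeg : p.natDegree = n := by
    rw [hp, Matrix.charpoly_natDegree_eq_dim, Fintype.card_fin]
  have hpcoeff : ∀ m, m ≤ n → p.coeff m = (-c)^(n-m) * A.charpoly.coeff m := by
    intro m hm
    rw [hp, hB, charpoly_smul' A (-c) hc', coeff_scaleRoots,
      Matrix.charpoly_natDegree_eq_dim, Fintype.card_fin, mul_comm]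
  apply poly_ext' (h := p) hpm.ne_zero
  intro x hx
  have hBpow : ∀ l, B ^ l = (-c)^l • A^l := fun l => by rw [hB, _root_.smul_pow]
  set M := x • (1 : Matrix (Fin n) (Fin n) ℂ) - B with hM
  have hdetM : M.det = p.eval x := (eval_charpoly' B x).symm
  have hdet : IsUnit M.det := by rw [hdetM]; exact isUnit_iff_ne_zero.mpr hx
  set N := ∑ m ∈ range (n+1), p.coeff m •
      (∑ i ∈ range m, (x • (1 : Matrix (Fin n) (Fin n) ℂ))^i * B^(m-1-i)) with hN
  have hcomm : Commute (x • (1 : Matrix (Fin n) (Fin n) ℂ)) B := (Commute.one_left B).smul_left x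
  have htele : N * M = (p.eval x) • 1 := by
    rw [hN, Finset.sum_mul]
    have step : ∀ m ∈ range (n+1),
        (p.coeff m • (∑ i ∈ range m, (x • (1 : Matrix (Fin n) (Fin n) ℂ))^i * B^(m-1-i))) * M
          = (p.coeff m * x^m) • (1 : Matrix (Fin n) (Fin n) ℂ) - p.coeff m • B^m := by
      intro m _
      rw [smul_mul_assoc, hM, hcomm.geom_sum₂_mul m, smul_sub, _root_.smul_pow, one_pow, smul_smul]
    rw [Finset.sum_congr rfl step, Finset.sum_sub_distrib, ← Finset.sum_smul]
    have h1 : ∑ m ∈ range (n+1), p.coeff m * x^m = p.eval x := by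
      rw [Polynomial.eval_eq_sum_range' (by omega : p.natDegree < n+1)]
    have h2 : ∑ m ∈ range (n+1), p.coeff m • B^m = 0 := by
      rw [← Polynomial.aeval_eq_sum_range' (by omega : p.natDegree < n+1), hp,
        Matrix.aeval_self_charpoly]
    rw [h1, h2, sub_zero]
  have hNM : ((p.eval x)⁻¹ • N) * M = 1 := by
    rw [smul_mul_assoc, htele, smul_smul, inv_mul_cancel₀ hx, one_smul]
  have hMinv : M⁻¹ = (p.eval x)⁻¹ • N := Matrix.inv_eq_left_inv hNM
  have hN2 : N = ∑ m ∈ range (n+1), ∑ i ∈ range m,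
      (p.coeff m * (x^i * (-c)^(m-1-i))) • A^(m-1-i) := by
    rw [hN]
    refine Finset.sum_congr rfl fun m _ => ?_
    rw [Finset.smul_sum]
    refine Finset.sum_congr rfl fun i _ => ?_
    rw [_root_.smul_pow, one_pow, smul_mul_assoc, one_mul, hBpow, smul_smul, smul_smul, mul_assoc]
  have hT : (∑ a, ∑ b, N a b) = ∑ m ∈ range (n+1), ∑ i ∈ range m,
      p.coeff m * (x ^ i * ((-c)^(m-1-i) * s (m-1-i))) := by
    rw [hN2, entsum_sum]
    refine Finset.sum_congr rfl fun m _ => ?_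
    rw [entsum_sum]
    refine Finset.sum_congr rfl fun i _ => ?_
    simp [hs, Finset.mul_sum, mul_assoc]
  have hsplit2 : x • (1 : Matrix (Fin n) (Fin n) ℂ) - ((Matrix.of fun _ _ => (1:ℂ)) - c • A)
      = M + Matrix.replicateCol Unit (fun _ : Fin n => (-1:ℂ)) * Matrix.replicateRow Unit (fun _ : Fin n => (1:ℂ)) := by
    ext i j
    simp [hM, hB, Matrix.mul_apply, Matrix.sub_apply, Matrix.add_apply]
    ring
  have hdl := Matrix.det_add_replicateCol_mul_replicateRow (ι := Unit) hdet (fun _ : Fin n => (-1:ℂ)) (fun _ : Fin n => (1:ℂ))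
  have hdet2 : ((1 + (Matrix.replicateRow Unit fun _ : Fin n => (1:ℂ)) * M⁻¹ * Matrix.replicateCol Unit fun _ : Fin n => (-1:ℂ)) :
        Matrix Unit Unit ℂ).det
      = 1 - (p.eval x)⁻¹ * ∑ a, ∑ b, N a b := by
    rw [Matrix.det_unique, hMinv]
    simp [Matrix.mul_apply, Matrix.one_apply, Finset.mul_sum]
    rw [Finset.sum_comm]
    ring
  have hg : eval x (∑ m ∈ range (n+1), C ((-c)^(n-m) * ((A.charpoly).coeff m
        + c⁻¹ * ∑ l ∈ range (n-m), (A.charpoly).coeff (m+l+1) * ∑ a, ∑ b, (A^l) a b)) * X^m)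
      = ∑ m ∈ range (n+1), ((-c)^(n-m) * ((A.charpoly).coeff m
        + c⁻¹ * ∑ l ∈ range (n-m), (A.charpoly).coeff (m+l+1) * s l)) * x^m := by
    simp only [eval_finset_sum, eval_mul, eval_pow, eval_C, eval_X, hs]
  rw [hg, eval_charpoly', hsplit2, hdl, hdetM, hdet2, mul_sub, mul_one,
    ← mul_assoc, mul_inv_cancel₀ hx, one_mul, hT]
  rw [reindex_aux n (fun m i => p.coeff m * (x ^ i * ((-c)^(m-1-i) * s (m-1-i))))]
  rw [Polynomial.eval_eq_sum_range' (show p.natDegree < n+1 by omega), ← Finset.sum_sub_distrib]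
  refine Finset.sum_congr rfl fun m hm => ?_
  rw [Finset.mem_range] at hm
  have hmn : m ≤ n := by omega
  have hstep : ∀ l ∈ range (n-m),
      p.coeff (m+l+1) * (x ^ m * ((-c)^(m+l+1-1-m) * s (m+l+1-1-m)))
        = -(((-c)^(n-m) * c⁻¹) * ((A.charpoly).coeff (m+l+1) * s l) * x^m) := by
    intro l hl
    rw [Finset.mem_range] at hl
    rw [show m+l+1-1-m = l by omega, hpcoeff (m+l+1) (by omega),
      show n - m = (n - (m+l+1)) + (l+1) by omega, pow_add]
    field_simp
    ring
  rw [Finset.sum_congr rfl hstep, hpcoeff m hmn, Finset.sum_neg_distrib,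
    ← Finset.sum_mul, ← Finset.mul_sum]
  ring

theorem stmt12 (n : ℕ) (A : Matrix (Fin n) (Fin n) ℂ) (ζ : ℂ) (hζ : ζ ≠ 1)
    (hroot : ∃ m : ℕ, 0 < m ∧ ζ ^ m = 1) (j : ℕ) (hj : j ≤ n) :
    (Matrix.charpoly ((Matrix.of fun _ _ => (1 : ℂ)) - (1 - ζ) • A)).coeff (n - j) =
      (ζ - 1) ^ j * ((Matrix.charpoly A).coeff (n - j) +
        (1 - ζ)⁻¹ * ∑ i ∈ Finset.Icc 1 j,
          (Matrix.charpoly A).coeff (n - (j - i)) * ∑ a, ∑ b, (A ^ (i - 1)) a b) := by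
  have hc : (1 - ζ : ℂ) ≠ 0 := sub_ne_zero.mpr fun h => hζ h.symm
  rw [main_aux_s12 n A (1-ζ) hc, Polynomial.finset_sum_coeff]
  rw [Finset.sum_eq_single (n-j)]
  · rw [Polynomial.coeff_C_mul, Polynomial.coeff_X_pow, if_pos rfl, mul_one]
    rw [show n-(n-j) = j by omega, show (-(1-ζ) : ℂ) = ζ-1 by ring]
    congr 1
    congr 1
    rw [← Finset.Ico_add_one_right_eq_Icc, Finset.sum_Ico_eq_sum_range]
    norm_num
    left
    apply Finset.sum_congr rfl
    intro i hi
    rw [Finset.mem_range] at hi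
    rw [show n-(j-(1+i)) = n-j+i+1 by omega]
  · intro m _ hm
    rw [Polynomial.coeff_C_mul, Polynomial.coeff_X_pow, if_neg (Ne.symm hm), mul_zero]
  · intro h
    exact absurd (Finset.mem_range.mpr (by omega)) h
end

section
/- Let q > 2 be a power of 2, ζ a primitive q-th root of unity, H an n×n Hermitian matrix with entries q-th roots of unity, and A = (J−H)/(1−ζ). Then tr(A^k) ∈ (1−ζ)ℤ[ζ] for all k ∈ ℕ. -/
open Finset Matrix

lemma sum_sym_zero' {S : Type*} [CommRing S] (h2 : (2 : S) = 0) {n : ℕ}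
    (g : Fin n → Fin n → S) (hsym : ∀ i j, g i j = g j i) (hdiag : ∀ i, g i i = 0) :
    ∑ i : Fin n, ∑ j : Fin n, g i j = 0 := by
  rw [← Finset.sum_product']
  refine Finset.sum_involution (fun p _ => (p.2, p.1)) ?_ ?_ (fun p hp => Finset.mem_univ _) ?_
  · intro p _
    show g p.1 p.2 + g p.2 p.1 = 0
    rw [hsym p.2 p.1, ← two_mul, h2, zero_mul]
  · intro p _ hne h
    apply hne
    have h1 : p.2 = p.1 := congrArg Prod.fst h
    rw [h1, hdiag]
  · intro p _; rfl

lemma trace_pow_dvd {R : Type*} [CommRing R] {n : ℕ} (B : Matrix (Fin n) (Fin n) R) (lam : R)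
    (h2 : lam ∣ 2) (hdiag : ∀ i, lam ∣ B i i) (hsym : ∀ i j, lam ∣ B i j + B j i)
    (k : ℕ) (hk : 1 ≤ k) : lam ∣ (B ^ k).trace := by
  set I : Ideal R := Ideal.span {lam} with hI
  set π : R →+* R ⧸ I := Ideal.Quotient.mk I with hπ
  have hiff : ∀ x : R, lam ∣ x ↔ π x = 0 := fun x => by
    rw [hπ, Ideal.Quotient.eq_zero_iff_mem, hI, Ideal.mem_span_singleton]
  have h2' : (2 : R ⧸ I) = 0 := by
    have h := (hiff 2).mp h2
    rwa [map_ofNat] at h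
  have hneg : ∀ x : R ⧸ I, -x = x := fun x => by
    rw [neg_eq_iff_add_eq_zero, ← two_mul, h2', zero_mul]
  set Bbar : Matrix (Fin n) (Fin n) (R ⧸ I) := B.map π with hBbar
  have hsymB : Bbarᵀ = Bbar := by
    ext i j
    show π (B j i) = π (B i j)
    have h := (hiff _).mp (hsym i j)
    rw [map_add] at h
    rw [eq_neg_of_add_eq_zero_right h, hneg]
  have hdiagB : ∀ i, Bbar i i = 0 := fun i => (hiff _).mp (hdiag i)
  -- trace of powers vanish
  have htr0 : (Bbar ^ k).trace = 0 := by
    clear hdiag hsym h2 hiff hI hBbar hπ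
    induction k using Nat.strong_induction_on with
    | _ k ih =>
      rcases Nat.even_or_odd k with ⟨m, hm⟩ | ⟨m, hm⟩
      · have hm1 : 1 ≤ m := by omega
        have hC : (Bbar ^ m)ᵀ = Bbar ^ m := by rw [Matrix.transpose_pow, hsymB]
        have h0 : (Bbar ^ m).trace = 0 := ih m (by omega) hm1
        have hBk : Bbar ^ k = Bbar ^ m * Bbar ^ m := by rw [hm, pow_add]
        -- trace of square
        have key : (Bbar ^ m * Bbar ^ m).trace + (Bbar ^ m).trace * (Bbar ^ m).trace = 0 := by
          set C := Bbar ^ m with hCdef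
          have e1 : (C * C).trace = ∑ i : Fin n, ∑ j : Fin n, C i j * C j i := by
            simp [Matrix.trace, Matrix.diag, Matrix.mul_apply]
          have e2 : C.trace * C.trace = ∑ i : Fin n, ∑ j : Fin n, C i i * C j j := by
            rw [Matrix.trace, Finset.sum_mul_sum]; rfl
          rw [e1, e2, ← Finset.sum_add_distrib]
          simp_rw [← Finset.sum_add_distrib]
          refine sum_sym_zero' h2' _ ?_ ?_
          · intro i j
            have hCs : ∀ a b, C a b = C b a := fun a b => by
              conv_lhs => rw [← hC, Matrix.transpose_apply]
            rw [hCs i j]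
            ring
          · intro i
            rw [← two_mul, h2', zero_mul]
        rw [hBk]
        rw [h0] at key
        simpa using key
      · have hBk : Bbar ^ k = Bbar ^ m * Bbar * (Bbar ^ m)ᵀ := by
          rw [Matrix.transpose_pow, hsymB, hm]
          rw [show 2 * m + 1 = m + 1 + m by ring, pow_add, pow_succ]
        rw [hBk]
        -- trace of C * B * Cᵀ
        set C := Bbar ^ m with hCdef
        have h1 : (C * Bbar * Cᵀ).trace = ((Cᵀ * C) * Bbar).trace := by
          rw [Matrix.trace_mul_comm, ← Matrix.mul_assoc]
        have h3 : ((Cᵀ * C) * Bbar).trace = ∑ j : Fin n, ∑ l : Fin n, (Cᵀ * C) j l * Bbar l j := by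
          simp [Matrix.trace, Matrix.diag, Matrix.mul_apply]
        rw [h1, h3]
        refine sum_sym_zero' h2' _ ?_ ?_
        · intro i j
          have hD : (Cᵀ * C) i j = (Cᵀ * C) j i := by
            have hDt : (Cᵀ * C)ᵀ = Cᵀ * C := by
              rw [Matrix.transpose_mul, Matrix.transpose_transpose]
            conv_lhs => rw [← hDt, Matrix.transpose_apply]
          have hBs : Bbar j i = Bbar i j := by
            conv_lhs => rw [← hsymB, Matrix.transpose_apply]
          rw [hD, hBs]
        · intro i
          rw [hdiagB, mul_zero]
  -- transfer back
  refine (hiff _).mpr ?_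
  have hBbarpow : Bbar ^ k = (B ^ k).map π := by
    rw [hBbar, show B.map π = π.mapMatrix B from rfl, ← map_pow]
    rfl
  have htrace_map : ((B ^ k).map π).trace = π (B ^ k).trace := by
    simp [Matrix.trace, Matrix.diag, Matrix.map_apply]
  rw [← htrace_map, ← hBbarpow, htr0]
open Finset Matrix

set_option maxHeartbeats 1000000
set_option synthInstance.maxHeartbeats 1000000

theorem stmt13 (n f : ℕ) (hf : 2 ≤ f) (ζ : ℂ) (hζ : IsPrimitiveRoot ζ (2 ^ f))
    (H : Matrix (Fin n) (Fin n) ℂ) (hherm : H.IsHermitian)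
    (hent : ∀ i j, ∃ k : ℤ, H i j = ζ ^ k)
    (A : Matrix (Fin n) (Fin n) ℂ)
    (hA : A = (1 - ζ)⁻¹ • ((Matrix.of fun _ _ => (1 : ℂ)) - H))
    (k : ℕ) (hk : 1 ≤ k) :
    ∃ y ∈ Algebra.adjoin ℤ ({ζ} : Set ℂ), Matrix.trace (A ^ k) = (1 - ζ) * y := by
  have hNpos : 0 < 2 ^ f := Nat.pow_pos (by norm_num)
  have hN1 : 1 < 2 ^ f := by
    calc 1 < 2 ^ 1 := by norm_num
    _ ≤ 2 ^ f := Nat.pow_le_pow_right (by norm_num) (by omega)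
  have hζ1 : ζ ≠ 1 := hζ.ne_one hN1
  have hζ0 : ζ ≠ 0 := hζ.ne_zero (by omega)
  have hlam0 : (1 - ζ) ≠ 0 := sub_ne_zero.mpr (Ne.symm hζ1)
  have hnorm : ‖ζ‖ = 1 := hζ.norm'_eq_one (by omega)
  have hstar : (starRingEnd ℂ) ζ = ζ⁻¹ := (Complex.inv_eq_conj hnorm).symm
  have hhalf : ζ ^ (2 ^ (f - 1)) = -1 := by
    have hp : IsPrimitiveRoot (ζ ^ (2 ^ (f - 1))) 2 :=
      hζ.pow hNpos (by rw [← pow_succ]; congr 1; omega)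
    exact hp.eq_neg_one_of_two_right
  set R : Subalgebra ℤ ℂ := Algebra.adjoin ℤ ({ζ} : Set ℂ) with hR
  have hζR : ζ ∈ R := Algebra.subset_adjoin rfl
  -- geometric sum fact (over ℂ)
  have geom : ∀ m : ℕ, (1 - ζ) * (∑ t ∈ Finset.range m, ζ ^ t) = 1 - ζ ^ m := by
    intro m
    have h := geom_sum_mul ζ m
    linear_combination -h
  have mem1 : ∀ m : ℕ, (1 - ζ)⁻¹ * (1 - ζ ^ m) ∈ R := by
    intro m
    have h1 : (1 - ζ)⁻¹ * (1 - ζ ^ m) = ∑ t ∈ Finset.range m, ζ ^ t := by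
      rw [← geom m, inv_mul_cancel_left₀ hlam0]
    rw [h1]
    exact Subalgebra.sum_mem R fun t _ => Subalgebra.pow_mem R hζR t
  have hz2f : ζ ^ ((2 ^ f : ℕ) : ℤ) = 1 := by rw [zpow_natCast]; exact hζ.pow_eq_one
  have hzpowZ : ∀ m : ℤ, ζ ^ m = ζ ^ (m % ((2 ^ f : ℕ) : ℤ)).toNat := by
    intro m
    have hmod : ((2 ^ f : ℕ) : ℤ) * (m / ((2 ^ f : ℕ) : ℤ)) + m % ((2 ^ f : ℕ) : ℤ) = m :=
      Int.mul_ediv_add_emod m _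
    have hnonneg : 0 ≤ m % ((2 ^ f : ℕ) : ℤ) :=
      Int.emod_nonneg m (by positivity)
    calc ζ ^ m = ζ ^ (((2 ^ f : ℕ) : ℤ) * (m / ((2 ^ f : ℕ) : ℤ)) + m % ((2 ^ f : ℕ) : ℤ)) := by
          rw [hmod]
    _ = (ζ ^ ((2 ^ f : ℕ) : ℤ)) ^ (m / ((2 ^ f : ℕ) : ℤ)) * ζ ^ (m % ((2 ^ f : ℕ) : ℤ)) := by
          rw [zpow_add₀ hζ0, _root_.zpow_mul]
    _ = ζ ^ (m % ((2 ^ f : ℕ) : ℤ)) := by rw [hz2f, _root_.one_zpow, one_mul]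
    _ = ζ ^ (m % ((2 ^ f : ℕ) : ℤ)).toNat := by
          rw [← zpow_natCast, Int.toNat_of_nonneg hnonneg]
  have memZ : ∀ m : ℤ, (1 - ζ)⁻¹ * (1 - ζ ^ m) ∈ R := by
    intro m
    rw [hzpowZ m]
    exact mem1 _
  -- the matrix over R
  have hBmem : ∀ i j, (1 - ζ)⁻¹ * (1 - H i j) ∈ R := by
    intro i j
    obtain ⟨m, hm⟩ := hent i j
    rw [hm]; exact memZ m
  set B : Matrix (Fin n) (Fin n) R := Matrix.of (fun i j => (⟨_, hBmem i j⟩ : R)) with hB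
  set φ : R →+* ℂ := R.toSubring.subtype with hφ
  have hAB : A = B.map φ := by
    rw [hA]
    ext i j
    simp [hB, hφ, Matrix.map_apply, Matrix.smul_apply, Matrix.sub_apply, smul_eq_mul]
  -- key elements of R
  set z : R := ⟨ζ, hζR⟩ with hzdef
  set lam : R := 1 - z with hlamdef
  have hlamval : (lam : ℂ) = 1 - ζ := rfl
  set s : R := ∑ t ∈ Finset.range (2 ^ (f - 1)), z ^ t with hsdef
  have hsval : (s : ℂ) = ∑ t ∈ Finset.range (2 ^ (f - 1)), ζ ^ t := by
    rw [hsdef]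
    push_cast
    rfl
  have h2R : ((2 : R) : ℂ) = 2 := by norm_cast
  have hlams : lam * s = 2 := by
    apply Subtype.ext
    push_cast [hsval, hlamval, h2R]
    rw [geom, hhalf]
    ring
  have hdvd2 : lam ∣ (2 : R) := ⟨s, hlams.symm⟩
  -- lam divides s
  have hg : ∀ t : ℕ, lam * (∑ u ∈ Finset.range t, z ^ u) = 1 - z ^ t := by
    intro t
    have h := geom_sum_mul z t
    rw [hlamdef]
    linear_combination -h
  have hs_sum : s = ((2 ^ (f - 1) : ℕ) : R)
      - lam * ∑ t ∈ Finset.range (2 ^ (f - 1)), (∑ u ∈ Finset.range t, z ^ u) := by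
    rw [hsdef, Finset.mul_sum]
    have hterm : ∀ t ∈ Finset.range (2 ^ (f - 1)),
        z ^ t = 1 - lam * (∑ u ∈ Finset.range t, z ^ u) := by
      intro t _
      rw [hg t]; ring
    rw [Finset.sum_congr rfl hterm, Finset.sum_sub_distrib, Finset.sum_const,
      Finset.card_range, nsmul_eq_mul, mul_one]
  have hdvds : lam ∣ s := by
    rw [hs_sum]
    refine dvd_sub ?_ (Dvd.intro _ rfl)
    have hcast : ((2 ^ (f - 1) : ℕ) : R) = (2 : R) ^ (f - 1) := by push_cast; ring
    rw [hcast]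
    exact dvd_pow hdvd2 (by omega)
  -- diagonal entries
  have hdiag : ∀ i, lam ∣ B i i := by
    intro i
    obtain ⟨m, hm⟩ := hent i i
    have hreal : (starRingEnd ℂ) (H i i) = H i i := hherm.apply i i
    have hz2m : ζ ^ (2 * m) = 1 := by
      rw [hm] at hreal
      rw [map_zpow₀, hstar, _root_.inv_zpow] at hreal
      have h2 : ζ ^ m * ζ ^ m = 1 := by
        calc ζ ^ m * ζ ^ m = (ζ ^ m)⁻¹ * ζ ^ m := by rw [hreal]
        _ = 1 := inv_mul_cancel₀ (zpow_ne_zero m hζ0)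
      rw [two_mul, zpow_add₀ hζ0, h2]
    have hdvdm : ((2 ^ f : ℕ) : ℤ) ∣ 2 * m := (hζ.zpow_eq_one_iff_dvd _).mp hz2m
    have hdvd' : (2 ^ (f - 1) : ℤ) ∣ m := by
      obtain ⟨c, hc⟩ := hdvdm
      refine ⟨c, ?_⟩
      have h2f : ((2 ^ f : ℕ) : ℤ) = 2 * 2 ^ (f - 1) := by
        push_cast
        rw [← pow_succ']
        congr 1
        omega
      rw [h2f, mul_assoc] at hc
      exact mul_left_cancel₀ (by norm_num : (2:ℤ) ≠ 0) hc
    obtain ⟨c, hc⟩ := hdvd'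
    have hHval : H i i = (-1 : ℂ) ^ c := by
      rw [hm, hc, _root_.zpow_mul]
      congr 1
    rcases Int.even_or_odd c with ⟨d, hd⟩ | ⟨d, hd⟩
    · have hone : H i i = 1 := by
        rw [hHval, hd, ← two_mul, _root_.zpow_mul]
        norm_num
      have hB0 : B i i = 0 := by
        apply Subtype.ext
        show (1 - ζ)⁻¹ * (1 - H i i) = 0
        rw [hone]; ring
      rw [hB0]
      exact dvd_zero lam
    · have hmone : H i i = -1 := by
        rw [hHval, hd, zpow_add₀ (by norm_num : (-1 : ℂ) ≠ 0), _root_.zpow_mul]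
        norm_num
      have hBs : B i i = s := by
        apply Subtype.ext
        show (1 - ζ)⁻¹ * (1 - H i i) = (s : ℂ)
        have hgg : (1 : ℂ) - -1 = (1 - ζ) * ∑ t ∈ Finset.range (2 ^ (f - 1)), ζ ^ t := by
          rw [geom, hhalf]
        rw [hmone, hsval, hgg, inv_mul_cancel_left₀ hlam0]
      rw [hBs]
      exact hdvds
  -- symmetry
  have hsym : ∀ i j, lam ∣ B i j + B j i := by
    intro i j
    obtain ⟨m, hm⟩ := hent i j
    have hconj : H j i = (starRingEnd ℂ) (H i j) := (hherm.apply j i).symm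
    have hmul : H i j * H j i = 1 := by
      rw [hconj, hm, map_zpow₀, hstar, _root_.inv_zpow]
      exact mul_inv_cancel₀ (zpow_ne_zero m hζ0)
    refine ⟨B i j * B j i, ?_⟩
    apply Subtype.ext
    push_cast [hlamval]
    show (1 - ζ)⁻¹ * (1 - H i j) + (1 - ζ)⁻¹ * (1 - H j i)
        = (1 - ζ) * ((1 - ζ)⁻¹ * (1 - H i j) * ((1 - ζ)⁻¹ * (1 - H j i)))
    have hinv : (1 - ζ) * (1 - ζ)⁻¹ = 1 := mul_inv_cancel₀ hlam0
    linear_combination (-(1 - ζ)⁻¹ * (1 - H i j) * (1 - H j i)) * hinv + (-(1 - ζ)⁻¹) * hmul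
  -- apply the abstract lemma
  have hdvdtr : lam ∣ (B ^ k).trace := trace_pow_dvd B lam hdvd2 hdiag hsym k hk
  obtain ⟨y', hy'⟩ := hdvdtr
  refine ⟨(y' : ℂ), y'.2, ?_⟩
  have hApow : A ^ k = (B ^ k).map φ := by
    rw [hAB, show B.map φ = φ.mapMatrix B from rfl, ← map_pow]
    rfl
  have htrace_mapφ : ((B ^ k).map φ).trace = φ ((B ^ k).trace) := by
    simp [Matrix.trace, Matrix.diag, Matrix.map_apply]
  rw [hApow, htrace_mapφ, hy', _root_.map_mul]
  rfl
end

section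
/- Let q > 2 be a power of 2, H an n×n Hermitian matrix with entries q-th roots of unity, and A = (J−H)/(1−ζ). Then 𝟙ᵀ A^k 𝟙 ∈ (1−ζ)ℤ[ζ] for all k ∈ ℕ. -/
lemma cast_eq_char2 {S : Type*} [CommRing S] (h2 : (2:S) = 0) {a b : ℕ} (h : 2 ∣ a + b) :
    (a : S) = (b : S) := by
  obtain ⟨c, hc⟩ := h
  have hS : (a : S) + (b : S) = 2 * (c : S) := by exact_mod_cast congrArg (Nat.cast : ℕ → S) hc
  linear_combination hS + ((c : S) - (b : S)) * h2



lemma char2_sq_sum {S : Type*} [CommRing S] (h2 : (2:S) = 0) {α : Type*} (s : Finset α)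
    (u : α → S) : (∑ x ∈ s, u x)^2 = ∑ x ∈ s, (u x)^2 := by
  induction s using Finset.cons_induction with
  | empty => simp
  | cons a s ha ih =>
    rw [Finset.sum_cons, Finset.sum_cons, ← ih]
    have : (2:S) * (u a * ∑ x ∈ s, u x) = 0 := by rw [h2]; ring
    ring_nf
    linear_combination this

lemma alt_sum {S : Type*} [CommRing S] (h2 : (2:S) = 0) {n : ℕ}
    (M : Matrix (Fin n) (Fin n) S) (hs : ∀ i j, M i j = M j i) (hd : ∀ i, M i i = 0)
    (c : Fin n → S) : ∑ i, ∑ j, c i * M i j * c j = 0 := by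
  rw [← Finset.sum_product' (s := Finset.univ) (t := Finset.univ)]
  refine Finset.sum_involution (fun p _ => (p.2, p.1)) ?_ ?_ (fun _ _ => Finset.mem_univ _) (fun _ _ => rfl)
  · intro p _
    simp only
    rw [hs p.2 p.1]
    linear_combination (c p.1 * M p.1 p.2 * c p.2) * h2
  · intro p _ hne
    rcases eq_or_ne p.1 p.2 with h | h
    · exfalso; apply hne; rw [h, hd, mul_zero, zero_mul]
    · intro hcon
      exact h (congrArg Prod.fst hcon).symm

lemma total_add {S : Type*} [CommRing S] {n : ℕ} (M : Matrix (Fin n) (Fin n) S) (p q : ℕ) :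
    ∑ a, ∑ b, (M^(p+q)) a b = ∑ i, (∑ a, (M^p) a i) * (∑ b, (M^q) i b) := by
  have e : ∀ a b : Fin n, (M^(p+q)) a b = ∑ i, (M^p) a i * (M^q) i b := by
    intro a b; rw [pow_add, Matrix.mul_apply]
  simp only [e, Finset.sum_mul_sum]
  calc ∑ a, ∑ b, ∑ i, (M^p) a i * (M^q) i b
      = ∑ a, ∑ i, ∑ b, (M^p) a i * (M^q) i b :=
        Finset.sum_congr rfl fun a _ => Finset.sum_comm
    _ = ∑ i, ∑ a, ∑ b, (M^p) a i * (M^q) i b := Finset.sum_comm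

lemma total_pow_zero {S : Type*} [CommRing S] (h2 : (2:S) = 0) {n : ℕ}
    (M : Matrix (Fin n) (Fin n) S) (hs : ∀ i j, M i j = M j i) (hd : ∀ i, M i i = 0) :
    ∀ k, 1 ≤ k → ∑ a, ∑ b, (M^k) a b = 0 := by
  have hsymT : M.transpose = M := by ext i j; exact hs j i
  have hpow : ∀ (p : ℕ) (a i : Fin n), (M^p) a i = (M^p) i a := by
    intro p a i
    conv_lhs => rw [← hsymT]
    rw [← Matrix.transpose_pow]
    rfl
  intro k
  induction k using Nat.strong_induction_on with
  | _ k ih =>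
    intro hk
    rcases Nat.even_or_odd k with ⟨m, hm⟩ | ⟨m, hm⟩
    · -- k = m + m, m ≥ 1
      have hm1 : 1 ≤ m := by omega
      rw [hm, total_add]
      have : ∀ i : Fin n, (∑ b, (M^m) i b) = ∑ a, (M^m) a i := by
        intro i; exact Finset.sum_congr rfl fun b _ => hpow m i b
      calc ∑ i, (∑ a, (M^m) a i) * (∑ b, (M^m) i b)
          = ∑ i, (∑ a, (M^m) a i)^2 := by
            refine Finset.sum_congr rfl fun i _ => ?_
            rw [this i, sq]
        _ = (∑ i, ∑ a, (M^m) a i)^2 := (char2_sq_sum h2 _ _).symm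
        _ = (∑ a, ∑ i, (M^m) a i)^2 := by rw [Finset.sum_comm]
        _ = 0 := by rw [ih m (by omega) hm1]; ring
    · -- k = 2m+1 = m + (1+m)
      have hk' : k = m + (1 + m) := by omega
      rw [hk', total_add]
      have inner : ∀ i : Fin n, (∑ b, (M^(1+m)) i b) = ∑ j, M i j * (∑ a, (M^m) a j) := by
        intro i
        simp only [pow_add, pow_one, Matrix.mul_apply, Finset.mul_sum]
        rw [Finset.sum_comm]
        refine Finset.sum_congr rfl fun j _ => Finset.sum_congr rfl fun b _ => ?_
        rw [hpow m j b]
      calc ∑ i, (∑ a, (M^m) a i) * (∑ b, (M^(1+m)) i b)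
          = ∑ i, ∑ j, (∑ a, (M^m) a i) * M i j * (∑ a, (M^m) a j) := by
            refine Finset.sum_congr rfl fun i _ => ?_
            rw [inner i, Finset.mul_sum]
            exact Finset.sum_congr rfl fun j _ => by ring
        _ = 0 := alt_sum h2 M hs hd _

lemma aux_dvd {T : Type*} [CommRing T] {e : ℕ} (he : 1 ≤ e) (z : T)
    (hzhalf : z ^ (2 ^ e) = -1) {n : ℕ} (m : Fin n → Fin n → ℕ)
    (hsym2 : ∀ i j, 2 ∣ m i j + m j i) (hdiag2 : ∀ i, 2 ∣ m i i) (k : ℕ) (hk : 1 ≤ k) :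
    (1 - z) ∣ ∑ a, ∑ b,
      (((Matrix.of fun i j => ∑ t ∈ Finset.range (m i j), z ^ t) :
        Matrix (Fin n) (Fin n) T) ^ k) a b := by
  set B : Matrix (Fin n) (Fin n) T :=
    Matrix.of (fun i j => ∑ t ∈ Finset.range (m i j), z ^ t) with hB
  set δ : T := 1 - z with hδdef
  have hgeom : ∀ p : ℕ, (1 - z) * (∑ t ∈ Finset.range p, z ^ t) = 1 - z ^ p := by
    intro p
    linear_combination -geom_sum_mul z p
  have hδ2 : δ ∣ (2 : T) := by
    refine ⟨∑ t ∈ Finset.range (2 ^ e), z ^ t, ?_⟩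
    rw [hδdef, hgeom, hzhalf]
    ring
  set I : Ideal T := Ideal.span {δ} with hI
  set q : T →+* T ⧸ I := Ideal.Quotient.mk I with hq
  have h2S : (2 : T ⧸ I) = 0 := by
    have h0 : q (2 : T) = 0 := by
      rw [hq, Ideal.Quotient.eq_zero_iff_mem, hI, Ideal.mem_span_singleton]
      exact hδ2
    rw [← map_ofNat q 2]
    exact h0
  have hq1 : q z = 1 := by
    have hδ0' : q δ = 0 := by
      rw [hq, Ideal.Quotient.eq_zero_iff_mem, hI]
      exact Ideal.subset_span rfl
    rw [hδdef, map_sub, map_one, sub_eq_zero] at hδ0'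
    exact hδ0'.symm
  set M : Matrix (Fin n) (Fin n) (T ⧸ I) := B.map q with hM
  have hMval : ∀ i j, M i j = (m i j : T ⧸ I) := by
    intro i j
    rw [hM]
    simp only [Matrix.map_apply, hB, Matrix.of_apply]
    rw [map_sum]
    have h1 : ∀ t : ℕ, q (z ^ t) = 1 := fun t => by rw [map_pow, hq1, one_pow]
    simp [h1]
  have hMs : ∀ i j, M i j = M j i := fun i j => by
    rw [hMval, hMval]; exact cast_eq_char2 h2S (hsym2 i j)
  have hMd : ∀ i, M i i = 0 := fun i => by
    rw [hMval]
    obtain ⟨c, hc⟩ := hdiag2 i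
    rw [hc]
    push_cast
    rw [h2S]
    ring
  have hMtot : ∑ a, ∑ b, (M ^ k) a b = 0 := total_pow_zero h2S M hMs hMd k hk
  have hpowmapq : (B.map q) ^ k = (B ^ k).map q := by
    rw [← RingHom.mapMatrix_apply, ← RingHom.mapMatrix_apply, ← map_pow]
  have hqs : q (∑ a, ∑ b, (B ^ k) a b) = 0 := by
    rw [map_sum, ← hMtot]
    refine Finset.sum_congr rfl fun a _ => ?_
    rw [map_sum]
    refine Finset.sum_congr rfl fun b _ => ?_
    rw [hM, hpowmapq]
    rfl
  have hmem := Ideal.Quotient.eq_zero_iff_mem.mp hqs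
  rw [hI, Ideal.mem_span_singleton] at hmem
  exact hmem

theorem stmt14 (n f : ℕ) (hf : 2 ≤ f) (ζ : ℂ) (hζ : IsPrimitiveRoot ζ (2 ^ f))
    (H : Matrix (Fin n) (Fin n) ℂ) (hherm : H.IsHermitian)
    (hent : ∀ i j, ∃ k : ℤ, H i j = ζ ^ k)
    (A : Matrix (Fin n) (Fin n) ℂ)
    (hA : A = (1 - ζ)⁻¹ • ((Matrix.of fun _ _ => (1 : ℂ)) - H))
    (k : ℕ) (hk : 1 ≤ k) :
    ∃ y ∈ Algebra.adjoin ℤ ({ζ} : Set ℂ), ∑ a, ∑ b, (A ^ k) a b = (1 - ζ) * y := by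
  obtain ⟨e, rfl⟩ : ∃ e, f = e + 1 := ⟨f - 1, by omega⟩
  have he : 1 ≤ e := by omega
  have hN1 : 1 < 2 ^ (e + 1) := by
    have : 2 ^ 1 ≤ 2 ^ (e + 1) := Nat.pow_le_pow_right (by norm_num) (by omega)
    omega
  have hζN : ζ ^ (2 ^ (e + 1)) = 1 := hζ.pow_eq_one
  have hζ0 : ζ ≠ 0 := by
    intro h; rw [h, zero_pow (by omega : 2^(e+1) ≠ 0)] at hζN; exact zero_ne_one hζN
  have hζ1 : ζ ≠ 1 := hζ.ne_one hN1
  have hδ0 : (1 : ℂ) - ζ ≠ 0 := sub_ne_zero.mpr (Ne.symm hζ1)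
  have habs : ‖ζ‖ = 1 := by
    have h1 : ‖ζ‖ ^ (2 ^ (e + 1)) = 1 := by rw [← norm_pow, hζN, norm_one]
    have h2 := norm_nonneg ζ
    rcases pow_eq_one_iff_cases.mp h1 with h|h|h
    · omega
    · exact h
    · linarith [h.1]
  have hconj : ζ * star ζ = 1 := by
    rw [Complex.star_def, Complex.mul_conj, Complex.normSq_eq_norm_sq, habs]
    norm_num
  -- natural exponents
  have hm' : ∀ i j, ∃ t : ℕ, H i j = ζ ^ t := by
    intro i j
    obtain ⟨kk, hkk⟩ := hent i j
    set N : ℤ := ((2 ^ (e + 1) : ℕ) : ℤ) with hNdef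
    have hNne : N ≠ 0 := by rw [hNdef]; positivity
    refine ⟨(kk % N).toNat, ?_⟩
    have hr0 : 0 ≤ kk % N := Int.emod_nonneg _ hNne
    have hkkdec : N * (kk / N) + kk % N = kk := Int.mul_ediv_add_emod kk N
    have hzN : ζ ^ N = 1 := by
      rw [hNdef, zpow_natCast, hζN]
    calc H i j = ζ ^ kk := hkk
      _ = ζ ^ (N * (kk / N) + kk % N) := by rw [hkkdec]
      _ = (ζ ^ N) ^ (kk / N) * ζ ^ (kk % N) := by rw [zpow_add₀ hζ0, zpow_mul]
      _ = ζ ^ (kk % N) := by rw [hzN, one_zpow, one_mul]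
      _ = ζ ^ (kk % N).toNat := by rw [← zpow_natCast, Int.toNat_of_nonneg hr0]
  choose m hHm using hm'
  -- symmetry of exponents mod 2
  have hstar : ∀ i j, H j i = star (H i j) := by
    intro i j
    have := hherm.apply i j
    rw [← this, star_star]
  have hzsz : ∀ p : ℕ, ζ ^ p * star (ζ ^ p) = 1 := by
    intro p; rw [star_pow, ← mul_pow, hconj, one_pow]
  have hsympow : ∀ i j, ζ ^ (m i j + m j i) = 1 := by
    intro i j
    calc ζ ^ (m i j + m j i) = H i j * H j i := by rw [pow_add, hHm i j, hHm j i]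
      _ = H i j * star (H i j) := by rw [hstar i j]
      _ = 1 := by rw [hHm i j, hzsz]
  have hsym2 : ∀ i j, 2 ∣ (m i j + m j i) := by
    intro i j
    have hd : 2 ^ (e + 1) ∣ (m i j + m j i) := (hζ.pow_eq_one_iff_dvd _).mp (hsympow i j)
    exact dvd_trans (dvd_pow_self 2 (by omega : e + 1 ≠ 0)) hd
  have hdiag2 : ∀ i, 2 ∣ m i i := by
    intro i
    have h1 : ζ ^ (2 * m i i) = 1 := by
      have hii : star (H i i) = H i i := hherm.apply i i
      calc ζ ^ (2 * m i i) = H i i * H i i := by rw [two_mul, pow_add, hHm]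
        _ = H i i * star (H i i) := by rw [hii]
        _ = 1 := by rw [hHm i i, hzsz]
    have hd : 2 ^ (e + 1) ∣ 2 * m i i := (hζ.pow_eq_one_iff_dvd _).mp h1
    obtain ⟨c, hc⟩ := hd
    have hfsplit : 2 ^ (e + 1) = 2 * 2 ^ e := by rw [pow_succ]; ring
    have hmval : m i i = 2 ^ e * c := by
      have h3 : 2 * m i i = 2 * (2 ^ e * c) := by rw [hc, hfsplit]; ring
      omega
    rw [hmval]
    exact Dvd.dvd.mul_right (dvd_pow_self 2 (by omega : e ≠ 0)) c
  -- ζ^(2^(f-1)) = -1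
  have hhalf : ζ ^ (2 ^ e) = -1 := by
    have hpr : IsPrimitiveRoot (ζ ^ (2 ^ e)) 2 :=
      hζ.pow (by positivity) (by rw [pow_succ])
    exact hpr.eq_neg_one_of_two_right
  -- move to the subalgebra
  have hζR : ζ ∈ Algebra.adjoin ℤ ({ζ} : Set ℂ) := Algebra.subset_adjoin rfl
  set z : ↥(Algebra.adjoin ℤ ({ζ} : Set ℂ)) := ⟨ζ, hζR⟩ with hzdef
  have hzhalfR : z ^ (2 ^ e) = -1 := by
    apply Subtype.coe_injective
    push_cast
    exact hhalf
  obtain ⟨c, hc⟩ := aux_dvd he z hzhalfR m hsym2 hdiag2 k hk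
  set B : Matrix (Fin n) (Fin n) ↥(Algebra.adjoin ℤ ({ζ} : Set ℂ)) :=
    Matrix.of (fun i j => ∑ t ∈ Finset.range (m i j), z ^ t) with hB
  refine ⟨(c : ℂ), c.2, ?_⟩
  have hgeomC : ∀ p : ℕ, (1 - ζ) * (∑ t ∈ Finset.range p, ζ ^ t) = 1 - ζ ^ p := by
    intro p
    linear_combination -geom_sum_mul ζ p
  have hABentry : ∀ i j, A i j = ((B i j : ℂ)) := by
    intro i j
    have hcoe : ((B i j : ℂ)) = ∑ t ∈ Finset.range (m i j), ζ ^ t := by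
      rw [hB]
      simp only [Matrix.of_apply]
      push_cast
      rfl
    rw [hA]
    simp only [Matrix.smul_apply, Matrix.sub_apply, Matrix.of_apply, smul_eq_mul]
    rw [hcoe, hHm i j, ← hgeomC (m i j), ← mul_assoc, inv_mul_cancel₀ hδ0, one_mul]
  have hpowc : ∀ (p : ℕ) (a b : Fin n), (A ^ p) a b = (((B ^ p) a b : ℂ)) := by
    intro p
    induction p with
    | zero =>
      intro a b
      simp only [pow_zero, Matrix.one_apply]
      split <;> norm_num
    | succ p ih =>
      intro a b
      rw [pow_succ, pow_succ, Matrix.mul_apply, Matrix.mul_apply]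
      push_cast
      exact Finset.sum_congr rfl fun j _ => by rw [ih a j, hABentry j b]
  calc ∑ a, ∑ b, (A ^ k) a b
      = ∑ a, ∑ b, (((B ^ k) a b : ℂ)) :=
        Finset.sum_congr rfl fun a _ => Finset.sum_congr rfl fun b _ => hpowc k a b
    _ = (((∑ a, ∑ b, (B ^ k) a b : ↥(Algebra.adjoin ℤ ({ζ} : Set ℂ))) : ℂ)) := by
        push_cast
        rfl
    _ = (((1 - z) * c : ↥(Algebra.adjoin ℤ ({ζ} : Set ℂ))) : ℂ) := by
        rw [hc]
    _ = (1 - ζ) * (c : ℂ) := by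
        push_cast
        rfl
end

section
/- Let q > 2 be a power of 2, H an n×n Hermitian matrix with entries q-th roots of unity whose residue graph is an Euler graph, and A = (J−H)/(1−ζ). Then 𝟙ᵀ A 𝟙 ∈ (1−ζ)ℤ[ζ], and 𝟙ᵀ A^k 𝟙 ∈ (1−ζ)²ℤ[ζ] for all k ≥ 2. -/
lemma aux_zeta_mem (ζ : ℂ) : ζ ∈ Algebra.adjoin ℤ ({ζ} : Set ℂ) := Algebra.subset_adjoin rfl

lemma aux_geom (ζ : ℂ) (m : ℕ) : ∃ y ∈ Algebra.adjoin ℤ ({ζ} : Set ℂ),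
    1 - ζ ^ m = (1 - ζ) * y := by
  refine ⟨∑ i ∈ Finset.range m, ζ ^ i,
    Subalgebra.sum_mem _ fun i _ => pow_mem (aux_zeta_mem ζ) i, ?_⟩
  have := geom_sum_mul ζ m
  linear_combination this

lemma aux_inv_mem {f : ℕ} {ζ : ℂ} (hζ : IsPrimitiveRoot ζ (2 ^ f)) :
    ζ⁻¹ ∈ Algebra.adjoin ℤ ({ζ} : Set ℂ) := by
  have h1 : ζ ^ (2 ^ f) = 1 := hζ.pow_eq_one
  have hne : ζ ≠ 0 := hζ.ne_zero (by positivity)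
  have : ζ⁻¹ = ζ ^ (2 ^ f - 1) := by
    field_simp
    rw [← pow_succ', Nat.sub_add_cancel Nat.one_le_two_pow]
    exact h1.symm
  rw [this]; exact pow_mem (aux_zeta_mem ζ) _

lemma aux_zgeom {f : ℕ} {ζ : ℂ} (hζ : IsPrimitiveRoot ζ (2 ^ f)) (k : ℤ) :
    ∃ y ∈ Algebra.adjoin ℤ ({ζ} : Set ℂ), 1 - ζ ^ k = (1 - ζ) * y := by
  have hne : ζ ≠ 0 := hζ.ne_zero (by positivity)
  have h1 : ζ ^ ((2:ℤ) ^ f) = 1 := by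
    have := hζ.pow_eq_one
    rw [show ((2:ℤ)^f) = ((2^f : ℕ) : ℤ) by push_cast; ring, zpow_natCast, this]
  have hmod : ζ ^ k = ζ ^ ((k % 2 ^ f).toNat) := by
    have hk : k = 2 ^ f * (k / 2 ^ f) + k % 2 ^ f := (Int.mul_ediv_add_emod k (2^f)).symm
    rw [show ζ ^ k = ζ ^ (2 ^ f * (k / 2 ^ f) + k % 2 ^ f) by rw [← hk]]
    rw [zpow_add₀ hne, zpow_mul, h1, one_zpow, one_mul]
    rw [← zpow_natCast, Int.toNat_of_nonneg (Int.emod_nonneg k (by positivity))]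
  rw [hmod]; exact aux_geom ζ _

lemma aux_two {f : ℕ} {ζ : ℂ} (hf : 2 ≤ f) (hζ : IsPrimitiveRoot ζ (2 ^ f)) :
    ∃ y ∈ Algebra.adjoin ℤ ({ζ} : Set ℂ), (2:ℂ) = (1 - ζ) * y := by
  have hm1 : ζ ^ (2 ^ (f - 1)) = -1 := by
    have h2 : (ζ ^ (2 ^ (f-1))) ^ 2 = 1 := by
      rw [← pow_mul, ← pow_succ, show f - 1 + 1 = f from by omega]
      exact hζ.pow_eq_one
    have hne1 : ζ ^ (2 ^ (f-1)) ≠ 1 := by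
      intro h
      have hdvd : (2:ℕ) ^ f ∣ 2 ^ (f-1) := (hζ.pow_eq_one_iff_dvd (2 ^ (f-1))).mp h
      have hle := Nat.le_of_dvd (by positivity) hdvd
      have hlt : (2:ℕ) ^ (f-1) < 2 ^ f :=
        Nat.pow_lt_pow_right one_lt_two (show f - 1 < f by omega)
      exact Nat.lt_irrefl _ (lt_of_lt_of_le hlt hle)
    rcases mul_eq_zero.mp (show (ζ ^ (2 ^ (f-1)) - 1) * (ζ ^ (2 ^ (f-1)) + 1) = 0 by
      linear_combination h2) with h | h
    · exact absurd (by linear_combination h) hne1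
    · linear_combination h
  obtain ⟨y, hy, hy2⟩ := aux_geom ζ (2 ^ (f - 1))
  exact ⟨y, hy, by rw [hm1] at hy2; linear_combination hy2⟩

lemma aux_conj_mem {f : ℕ} {ζ : ℂ} (hζ : IsPrimitiveRoot ζ (2 ^ f)) {x : ℂ}
    (hx : x ∈ Algebra.adjoin ℤ ({ζ} : Set ℂ)) :
    (starRingEnd ℂ) x ∈ Algebra.adjoin ℤ ({ζ} : Set ℂ) := by
  have hcz : (starRingEnd ℂ) ζ = ζ⁻¹ := by
    rw [← Complex.inv_eq_conj (Complex.norm_eq_one_of_pow_eq_one hζ.pow_eq_one (by positivity))]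
  induction hx using Algebra.adjoin_induction with
  | mem x hx => rcases hx with rfl; rw [hcz]; exact aux_inv_mem hζ
  | algebraMap r =>
    simp only [algebraMap_int_eq, eq_intCast, map_intCast]
    exact intCast_mem _ r
  | add x y hx hy ihx ihy => rw [map_add]; exact add_mem ihx ihy
  | mul x y hx hy ihx ihy => rw [map_mul]; exact mul_mem ihx ihy

lemma aux_residue {f : ℕ} {ζ : ℂ} (hf : 2 ≤ f) (hζ : IsPrimitiveRoot ζ (2 ^ f)) {x : ℂ}
    (hx : x ∈ Algebra.adjoin ℤ ({ζ} : Set ℂ)) :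
    (∃ y ∈ Algebra.adjoin ℤ ({ζ} : Set ℂ), x = (1 - ζ) * y) ∨
    (∃ y ∈ Algebra.adjoin ℤ ({ζ} : Set ℂ), x = 1 + (1 - ζ) * y) := by
  obtain ⟨s, hs, hs2⟩ := aux_two hf hζ
  induction hx using Algebra.adjoin_induction with
  | mem x hx =>
    rcases hx with rfl
    exact Or.inr ⟨-1, neg_mem (one_mem _), by ring⟩
  | algebraMap r =>
    rcases Int.even_or_odd r with ⟨m, hm⟩ | ⟨m, hm⟩
    · refine Or.inl ⟨s * m, mul_mem hs (intCast_mem _ m), ?_⟩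
      subst hm
      simp only [algebraMap_int_eq, eq_intCast]
      push_cast
      linear_combination (m:ℂ) * hs2
    · refine Or.inr ⟨s * m, mul_mem hs (intCast_mem _ m), ?_⟩
      subst hm
      simp only [algebraMap_int_eq, eq_intCast]
      push_cast
      linear_combination (m:ℂ) * hs2
  | add x y hx hy ihx ihy =>
    rcases ihx with ⟨a, ha, ha2⟩ | ⟨a, ha, ha2⟩ <;> rcases ihy with ⟨b, hb, hb2⟩ | ⟨b, hb, hb2⟩
    · exact Or.inl ⟨a + b, add_mem ha hb, by rw [ha2, hb2]; ring⟩
    · exact Or.inr ⟨a + b, add_mem ha hb, by rw [ha2, hb2]; ring⟩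
    · exact Or.inr ⟨a + b, add_mem ha hb, by rw [ha2, hb2]; ring⟩
    · exact Or.inl ⟨s + a + b, add_mem (add_mem hs ha) hb,
        by rw [ha2, hb2]; linear_combination hs2⟩
  | mul x y hx hy ihx ihy =>
    rcases ihx with ⟨a, ha, ha2⟩ | ⟨a, ha, ha2⟩
    · exact Or.inl ⟨a * y, mul_mem ha hy, by rw [ha2]; ring⟩
    · rcases ihy with ⟨b, hb, hb2⟩ | ⟨b, hb, hb2⟩
      · exact Or.inl ⟨x * b, mul_mem hx hb, by rw [hb2, ha2]; ring⟩
      · refine Or.inr ⟨a + b + (1 - ζ) * (a * b), ?_, by rw [ha2, hb2]; ring⟩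
        exact add_mem (add_mem ha hb)
          (mul_mem (sub_mem (one_mem _) (aux_zeta_mem ζ)) (mul_mem ha hb))

lemma aux_rowsum_mul {n : ℕ} (M N : Matrix (Fin n) (Fin n) ℂ) (a : Fin n) :
    ∑ b, (M * N) a b = ∑ j, M a j * (∑ b, N j b) := by
  simp only [Matrix.mul_apply]
  rw [Finset.sum_comm]
  exact Finset.sum_congr rfl fun j _ => (Finset.mul_sum _ _ _).symm

lemma aux_sum_entries_mul {n : ℕ} (M N : Matrix (Fin n) (Fin n) ℂ) :
    ∑ a, ∑ b, (M * N) a b = ∑ j, (∑ a, M a j) * (∑ b, N j b) := by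
  rw [Finset.sum_congr rfl fun a _ => aux_rowsum_mul M N a, Finset.sum_comm]
  exact Finset.sum_congr rfl fun j _ => (Finset.sum_mul _ _ _).symm

theorem stmt15 (n f : ℕ) (hf : 2 ≤ f) (ζ : ℂ) (hζ : IsPrimitiveRoot ζ (2 ^ f))
    (H : Matrix (Fin n) (Fin n) ℂ) (hherm : H.IsHermitian)
    (hent : ∀ i j, ∃ k : ℤ, H i j = ζ ^ k)
    (A : Matrix (Fin n) (Fin n) ℂ)
    (hA : A = (1 - ζ)⁻¹ • ((Matrix.of fun _ _ => (1 : ℂ)) - H))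
    (hEuler : ∀ i : Fin n, Even
      (Set.ncard {j : Fin n | ¬ ∃ y ∈ Algebra.adjoin ℤ ({ζ} : Set ℂ), A i j = (1 - ζ) * y})) :
    (∃ y ∈ Algebra.adjoin ℤ ({ζ} : Set ℂ), ∑ a, ∑ b, A a b = (1 - ζ) * y) ∧
    (∀ k : ℕ, 2 ≤ k →
      ∃ y ∈ Algebra.adjoin ℤ ({ζ} : Set ℂ), ∑ a, ∑ b, (A ^ k) a b = (1 - ζ) ^ 2 * y) := by
  classical
  have hne0 : ζ ≠ 0 := hζ.ne_zero (by positivity)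
  have hζ1 : ζ ≠ 1 := hζ.ne_one (by exact Nat.one_lt_two_pow_iff.mpr (by omega))
  have hsub : (1 : ℂ) - ζ ≠ 0 := sub_ne_zero.mpr fun h => hζ1 h.symm
  have hsubinv : (1 : ℂ) - ζ⁻¹ ≠ 0 := by
    intro h
    apply hζ1
    have : ζ⁻¹ = 1 := by linear_combination -h
    field_simp at this
    exact this.symm
  have hcz : (starRingEnd ℂ) ζ = ζ⁻¹ := by
    rw [← Complex.inv_eq_conj (Complex.norm_eq_one_of_pow_eq_one hζ.pow_eq_one (by positivity))]
  have hinv : ζ⁻¹ ∈ Algebra.adjoin ℤ ({ζ} : Set ℂ) := aux_inv_mem hζ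
  obtain ⟨s, hs, hs2⟩ := aux_two hf hζ
  -- entries of A lie in the ring
  have hAmem : ∀ i j, A i j ∈ Algebra.adjoin ℤ ({ζ} : Set ℂ) := by
    intro i j
    obtain ⟨k, hk⟩ := hent i j
    obtain ⟨y, hy, hy2⟩ := aux_zgeom hζ k
    have : A i j = y := by
      rw [hA]
      simp only [Matrix.smul_apply, Matrix.sub_apply, Matrix.of_apply, smul_eq_mul, hk]
      rw [hy2]
      field_simp
    rw [this]; exact hy
  -- Hermitian relation
  have hherm' : ∀ i j, H i j = (starRingEnd ℂ) (H j i) := by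
    intro i j
    conv_lhs => rw [← hherm]
    simp [Matrix.conjTranspose_apply]
  have hrel : ∀ i j, A i j = -ζ⁻¹ * (starRingEnd ℂ) (A j i) := by
    intro i j
    rw [hA]
    simp only [Matrix.smul_apply, Matrix.sub_apply, Matrix.of_apply, smul_eq_mul]
    rw [map_mul, map_sub, map_one, map_inv₀, map_sub, map_one, hcz, hherm' i j]
    have hq : (1:ℂ) - ζ⁻¹ = -ζ⁻¹ * (1 - ζ) := by field_simp; ring
    rw [hq, mul_inv, inv_neg, inv_inv]
    have hz : ζ⁻¹ * ζ = 1 := inv_mul_cancel₀ hne0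
    linear_combination (-((1 - ζ)⁻¹ * (1 - (starRingEnd ℂ) (H j i)))) * hz
  -- row sums divisible by 1 - ζ
  have hrow : ∀ i, ∃ y ∈ Algebra.adjoin ℤ ({ζ} : Set ℂ), ∑ b, A i b = (1 - ζ) * y := by
    intro i
    set S : Finset (Fin n) := Finset.univ.filter
      (fun j => ¬ ∃ y ∈ Algebra.adjoin ℤ ({ζ} : Set ℂ), A i j = (1 - ζ) * y) with hS
    have hcard : Even S.card := by
      have := hEuler i
      rwa [Set.ncard_eq_toFinset_card', Set.toFinset_setOf] at this
    have key : ∀ j, ∃ y, y ∈ Algebra.adjoin ℤ ({ζ} : Set ℂ) ∧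
        A i j = (if j ∈ S then 1 else 0) + (1 - ζ) * y := by
      intro j
      by_cases hj : j ∈ S
      · have hj' := (Finset.mem_filter.mp hj).2
        rcases aux_residue hf hζ (hAmem i j) with h | ⟨y, hy, hy2⟩
        · exact absurd h hj'
        · exact ⟨y, hy, by rw [if_pos hj, hy2]⟩
      · have hj' := not_not.mp fun h => hj (Finset.mem_filter.mpr ⟨Finset.mem_univ j, h⟩)
        obtain ⟨y, hy, hy2⟩ := hj'
        exact ⟨y, hy, by rw [if_neg hj, hy2, zero_add]⟩
    choose y hy1 hy2 using key
    obtain ⟨m, hm⟩ := hcard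
    refine ⟨s * m + ∑ b, y b,
      add_mem (mul_mem hs (natCast_mem _ m)) (Subalgebra.sum_mem _ fun b _ => hy1 b), ?_⟩
    calc ∑ b, A i b = ∑ b, ((if b ∈ S then (1:ℂ) else 0) + (1 - ζ) * y b) :=
          Finset.sum_congr rfl fun b _ => hy2 b
      _ = (S.card : ℂ) + (1 - ζ) * ∑ b, y b := by
          rw [Finset.sum_add_distrib, ← Finset.mul_sum]
          congr 1
          rw [Finset.sum_ite_mem, Finset.univ_inter, Finset.sum_const, nsmul_eq_mul, mul_one]
      _ = (1 - ζ) * (s * m + ∑ b, y b) := by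
          rw [hm]; push_cast; linear_combination (m : ℂ) * hs2
  choose v hv1 hv2 using hrow
  -- column sums divisible by 1 - ζ
  have hcol : ∀ j, ∃ y ∈ Algebra.adjoin ℤ ({ζ} : Set ℂ), ∑ a, A a j = (1 - ζ) * y := by
    intro j
    refine ⟨ζ⁻¹ * (ζ⁻¹ * (starRingEnd ℂ) (v j)),
      mul_mem hinv (mul_mem hinv (aux_conj_mem hζ (hv1 j))), ?_⟩
    calc ∑ a, A a j = ∑ a, -ζ⁻¹ * (starRingEnd ℂ) (A j a) :=
          Finset.sum_congr rfl fun a _ => hrel a j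
      _ = -ζ⁻¹ * (starRingEnd ℂ) (∑ a, A j a) := by rw [← Finset.mul_sum, map_sum]
      _ = (1 - ζ) * (ζ⁻¹ * (ζ⁻¹ * (starRingEnd ℂ) (v j))) := by
          rw [hv2 j, map_mul, map_sub, map_one, hcz]
          field_simp
          ring
  choose w hw1 hw2 using hcol
  -- entries of powers
  have hpow : ∀ (k : ℕ) (i j : Fin n), (A ^ k) i j ∈ Algebra.adjoin ℤ ({ζ} : Set ℂ) := by
    intro k
    induction k with
    | zero =>
      intro i j
      rw [pow_zero, Matrix.one_apply]
      split <;> [exact one_mem _; exact zero_mem _]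
    | succ k ih =>
      intro i j
      rw [pow_succ, Matrix.mul_apply]
      exact Subalgebra.sum_mem _ fun b _ => mul_mem (ih i b) (hAmem b j)
  constructor
  · refine ⟨∑ a, v a, Subalgebra.sum_mem _ fun a _ => hv1 a, ?_⟩
    rw [Finset.mul_sum]
    exact Finset.sum_congr rfl fun a _ => hv2 a
  · intro k hk
    obtain ⟨m, rfl⟩ : ∃ m, k = m + 2 := ⟨k - 2, by omega⟩
    refine ⟨∑ j, w j * ∑ i, (A ^ m) j i * v i,
      Subalgebra.sum_mem _ fun j _ => mul_mem (hw1 j)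
        (Subalgebra.sum_mem _ fun i _ => mul_mem (hpow m j i) (hv1 i)), ?_⟩
    have hsplit : A ^ (m + 2) = A * (A ^ m * A) := by
      rw [pow_succ, pow_succ', mul_assoc]
    rw [hsplit, aux_sum_entries_mul]
    have h2 : ∀ j, ∑ b, (A ^ m * A) j b = (1 - ζ) * ∑ i, (A ^ m) j i * v i := by
      intro j
      rw [aux_rowsum_mul, Finset.mul_sum]
      exact Finset.sum_congr rfl fun i _ => by rw [hv2 i]; ring
    calc ∑ j, (∑ a, A a j) * (∑ b, (A ^ m * A) j b)
        = ∑ j, ((1 - ζ) * w j) * ((1 - ζ) * ∑ i, (A ^ m) j i * v i) :=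
          Finset.sum_congr rfl fun j _ => by rw [hw2 j, h2 j]
      _ = (1 - ζ) ^ 2 * ∑ j, w j * ∑ i, (A ^ m) j i * v i := by
          rw [Finset.mul_sum]
          exact Finset.sum_congr rfl fun j _ => by ring
end

section
/- Let l ≥ 1 and let m_1,…,m_l be nonnegative integers with positive sum, and let m be any nonzero element among the m_i. Then the 2-adic valuation of (m_1+⋯+m_l−1)!/(m_1!⋯m_l!) is at least −ν_2(m). -/
theorem stmt16 (l : ℕ) (hl : 1 ≤ l) (m : Fin l → ℕ) (hs : 0 < ∑ i, m i)
    (i₀ : Fin l) (hi : m i₀ ≠ 0) :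
    -(padicValRat 2 (m i₀ : ℚ)) ≤
      padicValRat 2 ((Nat.factorial (∑ i, m i - 1) : ℚ) /
        ∏ i, (Nat.factorial (m i) : ℚ)) := by
  have hfact : Fact (Nat.Prime 2) := ⟨Nat.prime_two⟩
  set S := ∑ i, m i with hS
  set f' : Fin l → ℕ := Function.update m i₀ (m i₀ - 1) with hf'
  have hmi : 0 < m i₀ := Nat.pos_of_ne_zero hi
  -- sums
  have hsum : ∑ i, f' i = S - 1 := by
    have h1 : ∑ i, f' i = (m i₀ - 1) + ∑ i ∈ Finset.univ.erase i₀, f' i :=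
      (Finset.add_sum_erase _ _ (Finset.mem_univ i₀)).symm.trans (by
        simp [hf', Function.update_self])
    have h2 : ∑ i ∈ Finset.univ.erase i₀, f' i = ∑ i ∈ Finset.univ.erase i₀, m i := by
      refine Finset.sum_congr rfl fun x hx => ?_
      rw [hf', Function.update_of_ne (Finset.ne_of_mem_erase hx)]
    have h3 : S = m i₀ + ∑ i ∈ Finset.univ.erase i₀, m i :=
      (Finset.add_sum_erase _ _ (Finset.mem_univ i₀)).symm
    omega
  -- products
  have hprod : ∏ i, Nat.factorial (m i) = m i₀ * ∏ i, Nat.factorial (f' i) := by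
    have h1 : ∏ i, Nat.factorial (f' i) =
        Nat.factorial (m i₀ - 1) * ∏ i ∈ Finset.univ.erase i₀, Nat.factorial (f' i) :=
      (Finset.mul_prod_erase _ _ (Finset.mem_univ i₀)).symm.trans (by
        simp [hf', Function.update_self])
    have h2 : ∏ i ∈ Finset.univ.erase i₀, Nat.factorial (f' i) =
        ∏ i ∈ Finset.univ.erase i₀, Nat.factorial (m i) := by
      refine Finset.prod_congr rfl fun x hx => ?_
      rw [hf', Function.update_of_ne (Finset.ne_of_mem_erase hx)]
    have h3 : ∏ i, Nat.factorial (m i) =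
        Nat.factorial (m i₀) * ∏ i ∈ Finset.univ.erase i₀, Nat.factorial (m i) :=
      (Finset.mul_prod_erase _ _ (Finset.mem_univ i₀)).symm
    rw [h3, h1, h2, ← mul_assoc, Nat.mul_factorial_pred hi]
  have hmul : (∏ i, Nat.factorial (f' i)) * Nat.multinomial Finset.univ f' =
      Nat.factorial (S - 1) := by
    rw [Nat.multinomial_spec, hsum]
  -- the rational quantity
  set q : ℚ := (Nat.factorial (S - 1) : ℚ) / ∏ i, (Nat.factorial (m i) : ℚ) with hq
  have hden : (∏ i, (Nat.factorial (m i) : ℚ)) ≠ 0 := by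
    refine Finset.prod_ne_zero_iff.2 fun x _ => ?_
    exact_mod_cast Nat.factorial_ne_zero (m x)
  have hqne : q ≠ 0 := by
    apply div_ne_zero _ hden
    exact_mod_cast Nat.factorial_ne_zero (S - 1)
  have hkey : (m i₀ : ℚ) * q = (Nat.multinomial Finset.univ f' : ℚ) := by
    have hc : (∏ i, (Nat.factorial (m i) : ℚ)) =
        (m i₀ : ℚ) * ∏ i, (Nat.factorial (f' i) : ℚ) := by
      have := congrArg (fun n : ℕ => (n : ℚ)) hprod
      push_cast at this
      exact this
    have hmc : (∏ i, (Nat.factorial (f' i) : ℚ)) * (Nat.multinomial Finset.univ f' : ℚ) =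
        (Nat.factorial (S - 1) : ℚ) := by
      have := congrArg (fun n : ℕ => (n : ℚ)) hmul
      push_cast at this
      exact this
    rw [hq]
    field_simp
    rw [hc, ← hmc]
    ring
  have hmne : (m i₀ : ℚ) ≠ 0 := by exact_mod_cast hi
  have hv : padicValRat 2 ((m i₀ : ℚ) * q) =
      padicValRat 2 (m i₀ : ℚ) + padicValRat 2 q := padicValRat.mul hmne hqne
  have hnonneg : 0 ≤ padicValRat 2 ((Nat.multinomial Finset.univ f' : ℚ)) := by
    rw [padicValRat.of_nat]
    exact Int.ofNat_nonneg _
  rw [hkey] at hv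
  linarith [hnonneg, hv.ge, hv.le]
end
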